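/- arXiv:1905.10584 — 13 statements merged into one kernel-verified Lean document; each statement's English description precedes it below -/
import Mathlib

section
/- Let G be an edge-coloring of the complete graph K_n on n ≥ 3 vertices. If the number of distinct colors used is at least n, then G contains a rainbow triangle (a 3-cycle whose three edges have pairwise distinct colors). -/
open SimpleGraph Finset

/-- Number of edges of `G`. -/
noncomputable def eCount {V : Type*} (G : SimpleGraph V) : ℕ := G.edgeSet.ncard

/-- Number of distinct colors appearing on edges of `G` under coloring `χ`. -/
noncomputable def cCount {V : Type*} (G : SimpleGraph V) (χ : Sym2 V → ℕ) : ℕ := (χ '' G.edgeSet).ncard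

/-- Color degree of `v`: number of distinct colors on edges incident to `v`. -/
noncomputable def colorDeg {V : Type*} (G : SimpleGraph V) (χ : Sym2 V → ℕ) (v : V) : ℕ :=
  ((fun u => χ s(v, u)) '' G.neighborSet v).ncard

/-- `G` with coloring `χ` contains a rainbow triangle. -/
def HasRainbowTriangle {V : Type*} (G : SimpleGraph V) (χ : Sym2 V → ℕ) : Prop :=
  ∃ a b c : V, G.Adj a b ∧ G.Adj b c ∧ G.Adj a c ∧
    χ s(a, b) ≠ χ s(b, c) ∧ χ s(b, c) ≠ χ s(a, c) ∧ χ s(a, b) ≠ χ s(a, c)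

/-- `G` with coloring `χ` contains a properly colored 4-cycle. -/
def HasPCC4 {V : Type*} (G : SimpleGraph V) (χ : Sym2 V → ℕ) : Prop :=
  ∃ a b c d : V, a ≠ c ∧ b ≠ d ∧ G.Adj a b ∧ G.Adj b c ∧ G.Adj c d ∧ G.Adj d a ∧
    χ s(a, b) ≠ χ s(b, c) ∧ χ s(b, c) ≠ χ s(c, d) ∧
    χ s(c, d) ≠ χ s(d, a) ∧ χ s(d, a) ≠ χ s(a, b)

private lemma acyclic_ncard_lt {V : Type*} [Fintype V] [Nonempty V] (H : SimpleGraph V)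
    (hA : H.IsAcyclic) : H.edgeSet.ncard < Fintype.card V := by
  classical
  set S : Set (SimpleGraph V) := {G | H ≤ G ∧ G.IsAcyclic} with hS
  obtain ⟨G, ⟨hHG, hGA⟩, hmax⟩ :=
    Set.Finite.exists_maximalFor id S (Set.toFinite S) ⟨H, le_refl H, hA⟩
  have hpre : G.Preconnected := by
    intro a b
    by_contra hnr
    have hab : a ≠ b := by rintro rfl; exact hnr (Reachable.refl _)
    have hnadj : ¬ G.Adj a b := fun h => hnr h.reachable
    set G' : SimpleGraph V := G ⊔ edge a b with hG'
    have hG'adj : G'.Adj a b := by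
      simp [hG', sup_adj, edge_adj, hab]
    have hle : G' \ fromEdgeSet {s(a, b)} ≤ G := by
      intro x y hxy
      rw [sdiff_adj] at hxy
      obtain ⟨h1, h2⟩ := hxy
      rw [hG', sup_adj] at h1
      rcases h1 with h1 | h1
      · exact h1
      · exfalso
        rw [edge_adj] at h1
        apply h2
        rw [fromEdgeSet_adj]
        refine ⟨?_, h1.2⟩
        rcases h1.1 with ⟨rfl, rfl⟩ | ⟨rfl, rfl⟩
        · rfl
        · exact Sym2.eq_swap
    have hG'A : G'.IsAcyclic := by
      intro u c hc
      by_cases hmem : s(a, b) ∈ c.edges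
      · have h := adj_and_reachable_delete_edges_iff_exists_cycle.mpr ⟨u, c, hc, hmem⟩
        exact hnr ((h.2).mono hle)
      · have hsub : ∀ e ∈ c.edges, e ∈ G.edgeSet := by
          intro e he
          have := c.edges_subset_edgeSet he
          rw [hG', edgeSet_sup] at this
          rcases this with h | h
          · exact h
          · exfalso
            apply hmem
            rw [edge, edgeSet_fromEdgeSet] at h
            obtain ⟨h1, -⟩ := h
            rw [Set.mem_singleton_iff] at h1
            exact h1 ▸ he
        exact hGA (c.transfer G hsub) (hc.transfer hsub)
    have : G = G' := le_antisymm le_sup_left (hmax ⟨le_trans hHG le_sup_left, hG'A⟩ le_sup_left)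
    exact hnadj (this ▸ hG'adj)
  have hconn : G.Connected := Connected.mk hpre
  have hTree : G.IsTree := ⟨hconn, hGA⟩
  have hcard := hTree.card_edgeFinset
  have hle' : H.edgeFinset.card ≤ G.edgeFinset.card :=
    Finset.card_le_card (edgeFinset_mono hHG)
  rw [Set.ncard_eq_toFinset_card']
  have : H.edgeSet.toFinset = H.edgeFinset := rfl
  rw [this]
  omega

private lemma rainbow_of_cycle {V : Type*} (χ : Sym2 V → ℕ) :
    ∀ (k : ℕ) {v : V} (p : (⊤ : SimpleGraph V).Walk v v),
      p.length = k → 3 ≤ k → p.support.tail.Nodup → (p.edges.map χ).Nodup →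
      HasRainbowTriangle (⊤ : SimpleGraph V) χ := by
  intro k
  induction k using Nat.strong_induction_on with
  | _ k ih =>
  intro v p hlen hk hnd hcol
  cases p with
  | nil => simp at hlen; omega
  | @cons _ u _ hvu q =>
    cases q with
    | nil => simp at hlen; omega
    | @cons _ w _ huw r =>
      cases r with
      | nil => simp at hlen; omega
      | @cons _ x _ hwx r' =>
        -- p = v - u - w - x - (r' : Walk x v)
        simp only [Walk.length_cons] at hlen
        simp only [Walk.support_cons, List.tail_cons, List.nodup_cons] at hnd
        rw [Walk.edges_cons, Walk.edges_cons, List.map_cons, List.map_cons,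
          List.nodup_cons, List.nodup_cons] at hcol
        have hA : χ s(v, u) ≠ χ s(u, w) := fun h => hcol.1 (h ▸ List.mem_cons_self)
        have hB : χ s(v, u) ∉ ((Walk.cons hwx r').edges.map χ) :=
          fun h => hcol.1 (List.mem_cons_of_mem _ h)
        have hC : χ s(u, w) ∉ ((Walk.cons hwx r').edges.map χ) := hcol.2.1
        have hD : ((Walk.cons hwx r').edges.map χ).Nodup := hcol.2.2
        have hvw : v ≠ w := by
          rintro rfl
          exact hnd.2.1 r'.end_mem_support
        have hadj_vw : (⊤ : SimpleGraph V).Adj v w := by simpa [top_adj] using hvw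
        by_cases hc1 : χ s(v, w) = χ s(v, u) ∨ χ s(v, w) = χ s(u, w)
        · -- chord has an old color; shorten the cycle
          have hmem : χ s(v, w) ∉ ((Walk.cons hwx r').edges.map χ) := by
            rcases hc1 with h | h
            · rw [h]; exact hB
            · rw [h]; exact hC
          rcases Nat.lt_or_ge k 4 with hk4 | hk4
          · -- k = 3 : then x = v and s(w,x) = s(w,v) = s(v,w), contradiction
            have hx : r'.length = 0 := by omega
            have hxv : x = v := Walk.eq_of_length_eq_zero hx
            subst hxv
            refine absurd ?_ hmem
            rw [Walk.edges_cons, List.map_cons]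
            have : χ s(w, x) = χ s(x, w) := by rw [Sym2.eq_swap]
            exact this ▸ List.mem_cons_self
          · -- recurse on the shorter cycle v - w - x - r'
            refine ih (k - 1) (by omega) (Walk.cons hadj_vw (Walk.cons hwx r'))
              ?_ (by omega) ?_ ?_
            · simp only [Walk.length_cons]; omega
            · simp only [Walk.support_cons, List.tail_cons, List.nodup_cons]
              exact hnd.2
            · rw [Walk.edges_cons, List.map_cons, List.nodup_cons]
              exact ⟨hmem, hD⟩
        · push_neg at hc1
          exact ⟨v, u, w, hvu, huw, hadj_vw, hA, Ne.symm hc1.2, Ne.symm hc1.1⟩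

/-- Erdős–Simonovits–Sós: an edge-colored complete graph on `n ≥ 3` vertices using at
least `n` colors contains a rainbow triangle. -/
theorem stmt_0 {V : Type*} [Fintype V] (hn : 3 ≤ Fintype.card V) (χ : Sym2 V → ℕ)
    (hc : Fintype.card V ≤ cCount (⊤ : SimpleGraph V) χ) :
    HasRainbowTriangle (⊤ : SimpleGraph V) χ := by
  classical
  haveI : Nonempty V := Fintype.card_pos_iff.mp (by omega)
  -- the set of colors
  set E : Set (Sym2 V) := (⊤ : SimpleGraph V).edgeSet with hE
  set C : Set ℕ := χ '' E with hCdef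
  have hCfin : C.Finite := (E.toFinite.image χ)
  -- choose one edge per color
  have hsel : ∀ c ∈ C, ∃ e ∈ E, χ e = c := fun c hc => by
    obtain ⟨e, he, rfl⟩ := hc; exact ⟨e, he, rfl⟩
  choose g hg1 hg2 using hsel
  -- E0 : chosen edges, as a set
  set E0 : Set (Sym2 V) := (fun c : C => g c c.2) '' Set.univ with hE0
  have hE0sub : E0 ⊆ E := by
    rintro e ⟨⟨c, hc⟩, -, rfl⟩; exact hg1 c hc
  have hinj : Set.InjOn χ E0 := by
    rintro e1 ⟨⟨c1, hc1⟩, -, rfl⟩ e2 ⟨⟨c2, hc2⟩, -, rfl⟩ h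
    rw [hg2 c1 hc1, hg2 c2 hc2] at h
    subst h; rfl
  have hE0card : E0.ncard = C.ncard := by
    have h1 : χ '' E0 = C := by
      apply Set.Subset.antisymm
      · rintro x ⟨e, ⟨⟨c, hc⟩, -, rfl⟩, rfl⟩
        rw [hg2 c hc]; exact hc
      · rintro c hc
        exact ⟨g c hc, ⟨⟨⟨c, hc⟩, Set.mem_univ _, rfl⟩, hg2 c hc⟩⟩
    calc E0.ncard = (χ '' E0).ncard := (Set.ncard_image_of_injOn hinj).symm
    _ = C.ncard := by rw [h1]
  -- the graph of chosen edges
  set H : SimpleGraph V := fromEdgeSet E0 with hH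
  have hHedge : H.edgeSet = E0 := by
    rw [hH, edgeSet_fromEdgeSet]
    refine Set.Subset.antisymm Set.diff_subset fun e he => ⟨he, fun hdiag =>
      (SimpleGraph.not_isDiag_of_mem_edgeSet _ (hE0sub he)) hdiag⟩
  have hcard : Fintype.card V ≤ H.edgeSet.ncard := by
    rw [hHedge, hE0card]
    exact hc
  -- H is not acyclic
  have hnA : ¬ H.IsAcyclic := fun hA => absurd hcard (by
    have := acyclic_ncard_lt H hA; omega)
  rw [IsAcyclic] at hnA
  push_neg at hnA
  obtain ⟨v, c, hcyc⟩ := hnA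
  -- transfer the cycle to ⊤
  have hsub : ∀ e ∈ c.edges, e ∈ (⊤ : SimpleGraph V).edgeSet := by
    intro e he
    exact hE0sub (hHedge ▸ c.edges_subset_edgeSet he)
  set c' : (⊤ : SimpleGraph V).Walk v v := c.transfer ⊤ hsub with hc'
  apply rainbow_of_cycle χ c'.length c' rfl
  · rw [hc', Walk.length_transfer]
    exact hcyc.three_le_length
  · rw [hc', Walk.support_transfer]
    exact hcyc.support_nodup
  · rw [hc', Walk.edges_transfer]
    refine List.Nodup.map_on ?_ hcyc.edges_nodup
    intro e1 h1 e2 h2 h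
    exact hinj (hHedge ▸ c.edges_subset_edgeSet h1) (hHedge ▸ c.edges_subset_edgeSet h2) h
end

section
/- Let G be an edge-colored graph on n ≥ 3 vertices. If e(G) + c(G) ≥ n(n+1)/2, where e(G) is the number of edges and c(G) is the number of distinct colors used, then G contains a rainbow triangle. -/
open SimpleGraph Finset

universe u

/-- Colors all of whose edges are incident to `v`. -/
private def exCol {V : Type u} (G : SimpleGraph V) (χ : Sym2 V → ℕ) (v : V) : Set ℕ :=
  {γ | γ ∈ χ '' G.edgeSet ∧ ∀ e ∈ G.edgeSet, χ e = γ → v ∈ e}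

/-- Key lemma: in a rainbow-triangle-free graph there is a vertex `v` with
`deg v + #(exclusive colors at v) ≤ n`. -/
private lemma exists_small_vertex {V : Type u} [Finite V] [Nonempty V]
    (G : SimpleGraph V) (χ : Sym2 V → ℕ) (hno : ¬ HasRainbowTriangle G χ) :
    ∃ v, (G.neighborSet v).ncard + (exCol G χ v).ncard ≤ Nat.card V := by
  by_contra hcon
  push_neg at hcon
  classical
  have := Fintype.ofFinite V
  obtain ⟨v, -, hmin⟩ := Finset.exists_min_image Finset.univ
      (fun w => (G.neighborSet w).ncard) ⟨Classical.arbitrary V, Finset.mem_univ _⟩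
  set n := Nat.card V with hn
  -- deg v + 1 ≤ n
  have hdv : (G.neighborSet v).ncard + 1 ≤ n := by
    have h2 := Set.ncard_add_ncard_compl (insert v (G.neighborSet v))
    have hnm : v ∉ G.neighborSet v := by simp
    rw [Set.ncard_insert_of_notMem hnm (Set.toFinite _)] at h2
    omega
  -- hence at least one exclusive color at v
  have hune : (exCol G χ v).Nonempty := by
    rcases Set.eq_empty_or_nonempty (exCol G χ v) with hemp | hne
    · exfalso; have := hcon v; rw [hemp, Set.ncard_empty] at this; omega
    · exact hne
  obtain ⟨α, hα⟩ := hune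
  obtain ⟨e₀, he₀E, he₀c⟩ := hα.1
  have hv0 : v ∈ e₀ := hα.2 e₀ he₀E he₀c
  obtain ⟨a, rfl⟩ := Sym2.mem_iff_exists.mp hv0
  have hva : G.Adj v a := G.mem_edgeSet.mp he₀E
  -- injection from remaining exclusive colors into non-neighbors of a
  set f : ℕ → V := fun β => if h : ∃ b, G.Adj v b ∧ χ s(v, b) = β then h.choose else v with hf
  set T : Set V := (insert a (G.neighborSet a))ᶜ with hT
  have hfprop : ∀ β ∈ exCol G χ v \ {α}, G.Adj v (f β) ∧ χ s(v, f β) = β := by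
    intro β hβ
    obtain ⟨⟨⟨eβ, heβE, heβc⟩, hβex⟩, -⟩ := hβ
    have hvβ : v ∈ eβ := hβex eβ heβE heβc
    obtain ⟨b, rfl⟩ := Sym2.mem_iff_exists.mp hvβ
    have hvb : G.Adj v b := G.mem_edgeSet.mp heβE
    have hex : ∃ b, G.Adj v b ∧ χ s(v, b) = β := ⟨b, hvb, heβc⟩
    rw [hf]
    simp only [dif_pos hex]
    exact hex.choose_spec
  have hmaps : ∀ β ∈ exCol G χ v \ {α}, f β ∈ T := by
    intro β hβ
    obtain ⟨hvb, hχb⟩ := hfprop β hβ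
    obtain ⟨⟨-, hβex⟩, hβne⟩ := hβ
    have hβα : β ≠ α := by simpa using hβne
    rw [hT, Set.mem_compl_iff]
    intro hmem
    rcases Set.mem_insert_iff.mp hmem with heq | hadj
    · -- f β = a gives β = α
      apply hβα
      rw [← hχb, heq, he₀c]
    · -- a adjacent to f β gives a rainbow triangle v, a, f β
      have hab : G.Adj a (f β) := hadj
      have habE : s(a, f β) ∈ G.edgeSet := G.mem_edgeSet.mpr hab
      have hvna : v ≠ a := hva.ne
      have hvnb : v ≠ f β := hvb.ne
      have hγα : χ s(a, f β) ≠ α := by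
        intro hc
        have := hα.2 _ habE hc
        rw [Sym2.mem_iff] at this
        tauto
      have hγβ : χ s(a, f β) ≠ β := by
        intro hc
        have := hβex _ habE hc
        rw [Sym2.mem_iff] at this
        tauto
      apply hno
      refine ⟨a, v, f β, hva.symm, hvb, hab, ?_, ?_, ?_⟩
      · rw [Sym2.eq_swap, he₀c, hχb]; exact fun hc => hβα hc.symm
      · rw [hχb]; exact fun hc => hγβ hc.symm
      · rw [Sym2.eq_swap, he₀c]; exact fun hc => hγα hc.symm
  have hinj : Set.InjOn f (exCol G χ v \ {α}) := by
    intro β hβ β' hβ' heq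
    have h1 := (hfprop β hβ).2
    have h2 := (hfprop β' hβ').2
    rw [← h1, ← h2, heq]
  have hexfin : (exCol G χ v).Finite :=
    (G.edgeSet.toFinite.image χ).subset (fun γ hγ => hγ.1)
  have h3 : (exCol G χ v \ {α}).ncard ≤ T.ncard :=
    Set.ncard_le_ncard_of_injOn f hmaps hinj (Set.toFinite _)
  have h1 : (exCol G χ v \ {α}).ncard + 1 = (exCol G χ v).ncard :=
    Set.ncard_diff_singleton_add_one hα hexfin
  have h2 : (insert a (G.neighborSet a)).ncard + T.ncard = n :=
    Set.ncard_add_ncard_compl _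
  have h4 : (insert a (G.neighborSet a)).ncard = (G.neighborSet a).ncard + 1 :=
    Set.ncard_insert_of_notMem (by simp) (Set.toFinite _)
  have h5 := hmin a (Finset.mem_univ a)
  have h6 := hcon v
  omega

private lemma bound : ∀ (n : ℕ) (V : Type u), ∀ _ : Finite V, Nat.card V = n → 1 ≤ n →
    ∀ (G : SimpleGraph V) (χ : Sym2 V → ℕ), ¬ HasRainbowTriangle G χ →
    eCount G + cCount G χ + 1 ≤ n * (n + 1) / 2 := by
  intro n
  induction n using Nat.strong_induction_on with
  | _ n ih =>
    intro V _ hcard hn G χ hno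
    rcases eq_or_lt_of_le hn with h1 | h2
    · -- base case n = 1
      have hsub : Subsingleton V := (Nat.card_eq_one_iff_unique.mp (hcard.trans h1.symm)).1
      have hE : G.edgeSet = ∅ := by
        ext e
        simp only [Set.mem_empty_iff_false, iff_false]
        intro he
        induction e using Sym2.ind with
        | _ x y =>
          have hadj : G.Adj x y := G.mem_edgeSet.mp he
          exact hadj.ne (Subsingleton.elim x y)
      rw [eCount, cCount, hE, ← h1]
      simp only [Set.image_empty, Set.ncard_empty]
      norm_num
    · -- inductive step: n ≥ 2
      have hne : Nonempty V := by
        by_contra hc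
        have : IsEmpty V := not_nonempty_iff.mp hc
        rw [Nat.card_of_isEmpty] at hcard
        omega
      obtain ⟨v, hv⟩ := exists_small_vertex G χ hno
      rw [hcard] at hv
      classical
      set W : Set V := {v}ᶜ with hW
      set G' : SimpleGraph ↥W := G.induce W with hG'
      set χ' : Sym2 ↥W → ℕ := fun e => χ (e.map Subtype.val) with hχ'
      -- no rainbow triangle in G'
      have hno' : ¬ HasRainbowTriangle G' χ' := by
        rintro ⟨x, y, z, hxy, hyz, hxz, c1, c2, c3⟩
        refine hno ⟨x, y, z, hxy, hyz, hxz, ?_, ?_, ?_⟩ <;>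
          simpa only [hχ', Sym2.map_pair_eq] using (by assumption : _)
      -- card of W
      have hcW : Nat.card ↥W = n - 1 := by
        have := Set.ncard_add_ncard_compl ({v} : Set V)
        rw [Set.ncard_singleton, hcard] at this
        rw [Nat.card_coe_set_eq, ← hW] at *
        omega
      -- edge set correspondence
      have hB : Sym2.map (Subtype.val) '' G'.edgeSet = {e ∈ G.edgeSet | v ∉ e} := by
        ext e
        constructor
        · rintro ⟨e', he', rfl⟩
          induction e' using Sym2.ind with
          | _ x y =>
            have hadj : G.Adj ↑x ↑y := he'
            refine ⟨by rw [Sym2.map_pair_eq]; exact G.mem_edgeSet.mpr hadj, ?_⟩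
            rw [Sym2.map_pair_eq, Sym2.mem_iff]
            push_neg
            exact ⟨fun hc => x.2 hc.symm, fun hc => y.2 hc.symm⟩
        · rintro ⟨heE, hve⟩
          induction e using Sym2.ind with
          | _ x y =>
            have hadj : G.Adj x y := G.mem_edgeSet.mp heE
            rw [Sym2.mem_iff] at hve
            push_neg at hve
            refine ⟨s(⟨x, fun hc => hve.1 hc.symm⟩, ⟨y, fun hc => hve.2 hc.symm⟩), ?_, ?_⟩
            · exact hadj
            · rw [Sym2.map_pair_eq]
      -- edge count split
      have hdisj : Disjoint (G.incidenceSet v) {e ∈ G.edgeSet | v ∉ e} := by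
        rw [Set.disjoint_left]
        rintro e ⟨-, hvmem⟩ ⟨-, hvnot⟩
        exact hvnot hvmem
      have hunion : G.incidenceSet v ∪ {e ∈ G.edgeSet | v ∉ e} = G.edgeSet := by
        ext e
        constructor
        · rintro (⟨he, -⟩ | ⟨he, -⟩) <;> exact he
        · intro he
          by_cases hvm : v ∈ e
          · exact Or.inl ⟨he, hvm⟩
          · exact Or.inr ⟨he, hvm⟩
      have hEsplit : eCount G = (G.incidenceSet v).ncard + {e ∈ G.edgeSet | v ∉ e}.ncard := by
        have hu := Set.ncard_union_eq hdisj (Set.toFinite _) (Set.toFinite _)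
        rw [hunion] at hu
        rw [eCount, hu]
      -- incidence set card = degree
      have hinc : (G.incidenceSet v).ncard = (G.neighborSet v).ncard := by
        rw [← Nat.card_coe_set_eq, ← Nat.card_coe_set_eq]
        exact Nat.card_congr (G.incidenceSetEquivNeighborSet v)
      -- remaining edge count
      have hrest : {e ∈ G.edgeSet | v ∉ e}.ncard = eCount G' := by
        rw [← hB, eCount,
          Set.ncard_image_of_injective _ (Sym2.map.injective Subtype.val_injective)]
      -- color count
      have hexfin : (exCol G χ v).Finite :=
        (G.edgeSet.toFinite.image χ).subset (fun γ hγ => hγ.1)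
      have hcol : cCount G χ ≤ cCount G' χ' + (exCol G χ v).ncard := by
        have himg : χ' '' G'.edgeSet = χ '' {e ∈ G.edgeSet | v ∉ e} := by
          rw [← hB, ← Set.image_image (g := χ) (f := Sym2.map Subtype.val)]
        have hsub : χ '' G.edgeSet ⊆ (χ '' {e ∈ G.edgeSet | v ∉ e}) ∪ exCol G χ v := by
          rintro γ ⟨e, heE, rfl⟩
          by_cases hex : χ e ∈ exCol G χ v
          · exact Or.inr hex
          · left
            rw [exCol, Set.mem_setOf_eq] at hex
            push_neg at hex
            obtain ⟨e', he'E, he'c, hve'⟩ := hex ⟨e, heE, rfl⟩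
            exact ⟨e', ⟨he'E, hve'⟩, he'c⟩
        calc cCount G χ ≤ ((χ '' {e ∈ G.edgeSet | v ∉ e}) ∪ exCol G χ v).ncard :=
              Set.ncard_le_ncard hsub ((Set.toFinite _).union hexfin)
          _ ≤ (χ '' {e ∈ G.edgeSet | v ∉ e}).ncard + (exCol G χ v).ncard :=
              Set.ncard_union_le _ _
          _ = cCount G' χ' + (exCol G χ v).ncard := by rw [cCount, himg]
      -- apply IH
      have hIH := ih (n - 1) (by omega) ↥W inferInstance hcW (by omega) G' χ' hno'
      -- arithmetic
      have harith : (n - 1) * (n - 1 + 1) / 2 + n = n * (n + 1) / 2 := by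
        obtain ⟨m, rfl⟩ : ∃ m, n = m + 1 := ⟨n - 1, by omega⟩
        have e1 : (m + 1) * (m + 1 + 1) = m * (m + 1) + 2 * (m + 1) := by ring
        have e2 : m + 1 - 1 = m := by omega
        rw [e2, e1, Nat.add_mul_div_left _ _ (by norm_num : (0:ℕ) < 2)]
      omega

/-- Li–Ning–Xu–Zhang: if `e(G) + c(G) ≥ n(n+1)/2` for an edge-colored graph on
`n ≥ 3` vertices, then `G` contains a rainbow triangle. -/
theorem stmt_1 {V : Type*} [Fintype V] (hn : 3 ≤ Fintype.card V)
    (G : SimpleGraph V) (χ : Sym2 V → ℕ)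
    (h : Fintype.card V * (Fintype.card V + 1) / 2 ≤ eCount G + cCount G χ) :
    HasRainbowTriangle G χ := by
  by_contra hno
  have h1 := bound (Fintype.card V) V inferInstance (Nat.card_eq_fintype_card) (by omega) G χ hno
  omega
end

section
/- If G is an edge-colored complete graph K_n using at least n+1 distinct colors, then G contains a properly colored 4-cycle, i.e., a cycle v1v2v3v4v1 in which each pair of consecutive edges receives distinct colors. -/
/-!
Call a color private to `v` if every edge of that color is incident to `v`. Deleting a vertex `v`
from `K_n` loses exactly the colors private to `v`, so by induction on `n` it suffices to show that
without a properly colored `C₄` some vertex has at most one private color (for `n ≤ 3` the bound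
holds trivially, as `K_n` has at most `n` edges).

If `v` has distinct private colors on `v a` and `v b`, then for every other `x` the cycle `v a x b`
is not properly colored, which forces `χ(a x) = χ(x b)`; hence all private colors of `a` lie on
`a v` and `a b`. So if every vertex has two private colors, the private neighbours of `v` form a
triangle `v a b` closed under taking private neighbours, whose edges are each the only edge of
their color. A vertex `y` outside it (`n ≥ 4`) gives another such edge `y p` disjoint from `v a`,
and then `y p v a` is a properly colored `C₄`.
-/

open SimpleGraph Finset

section PrivateColors

variable {V : Type*} {χ : Sym2 V → ℕ}

def IsPrivateColor (χ : Sym2 V → ℕ) (v : V) (c : ℕ) : Prop :=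
  ∀ ⦃x y : V⦄, x ≠ y → χ s(x, y) = c → v = x ∨ v = y

def privateColors (χ : Sym2 V → ℕ) (v : V) : Set ℕ :=
  {c | c ∈ χ '' (⊤ : SimpleGraph V).edgeSet ∧ IsPrivateColor χ v c}

def IsPrivateNeighbor (χ : Sym2 V → ℕ) (v x : V) : Prop :=
  v ≠ x ∧ IsPrivateColor χ v (χ s(v, x))

def IsPrivatePair (χ : Sym2 V → ℕ) (v a b : V) : Prop :=
  IsPrivateNeighbor χ v a ∧ IsPrivateNeighbor χ v b ∧ χ s(v, a) ≠ χ s(v, b)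

lemma IsPrivatePair.symm {v a b : V} (h : IsPrivatePair χ v a b) : IsPrivatePair χ v b a :=
  ⟨h.2.1, h.1, h.2.2.symm⟩

lemma IsPrivatePair.ne {v a b : V} (h : IsPrivatePair χ v a b) : a ≠ b := by
  rintro rfl
  exact h.2.2 rfl

lemma IsPrivateColor.color_ne {v x y : V} {c : ℕ} (h : IsPrivateColor χ v c) (hxy : x ≠ y)
    (hvx : v ≠ x) (hvy : v ≠ y) : χ s(x, y) ≠ c :=
  fun hc => (h hxy hc).elim hvx hvy

lemma IsPrivatePair.color_eq (nopc : ¬ HasPCC4 (⊤ : SimpleGraph V) χ) {v a b x : V}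
    (h : IsPrivatePair χ v a b) (hxv : x ≠ v) (hxa : x ≠ a) (hxb : x ≠ b) :
    χ s(a, x) = χ s(x, b) := by
  -- otherwise `v a x b` is a properly colored `C₄`
  obtain ⟨⟨hva, pa⟩, ⟨hvb, pb⟩, hab⟩ := id h
  by_contra hne
  refine nopc ⟨v, a, x, b, hxv.symm, h.ne, hva, hxa.symm, hxb, hvb.symm, ?_, hne, ?_, ?_⟩
  · exact (pa.color_ne hxa.symm hva hxv.symm).symm
  · rw [Sym2.eq_swap (a := b)]
    exact pb.color_ne hxb hxv.symm hvb
  · rw [Sym2.eq_swap (a := b)]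
    exact hab.symm

lemma IsPrivatePair.eq_or_eq_of_isPrivateNeighbor (nopc : ¬ HasPCC4 (⊤ : SimpleGraph V) χ)
    {v a b x : V} (h : IsPrivatePair χ v a b) (hx : IsPrivateNeighbor χ a x) :
    x = v ∨ x = b := by
  by_contra! hxvb
  have hxa : x ≠ a := hx.1.symm
  exact hx.2.color_ne hxvb.2 hxa.symm h.ne (h.color_eq nopc hxvb.1 hxa hxvb.2).symm

lemma IsPrivatePair.rotate (nopc : ¬ HasPCC4 (⊤ : SimpleGraph V) χ) {v a b : V}
    (h : IsPrivatePair χ v a b) (ha : ∃ x y, IsPrivatePair χ a x y) :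
    IsPrivatePair χ a v b := by
  obtain ⟨x, y, hxy⟩ := ha
  have hx := h.eq_or_eq_of_isPrivateNeighbor nopc hxy.1
  have hy := h.eq_or_eq_of_isPrivateNeighbor nopc hxy.2.1
  rcases hx with rfl | rfl <;> rcases hy with rfl | rfl
  · exact absurd rfl hxy.ne
  · exact hxy
  · exact hxy.symm
  · exact absurd rfl hxy.ne

/-- An edge whose color is private to both its ends is the only edge of that color. -/
lemma hasPCC4_of_disjoint_private_edges {y p v a : V}
    (hyp : IsPrivateNeighbor χ y p) (hpy : IsPrivateNeighbor χ p y)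
    (hva : IsPrivateNeighbor χ v a) (hav : IsPrivateNeighbor χ a v)
    (hyv : y ≠ v) (hya : y ≠ a) (hpv : p ≠ v) (hpa : p ≠ a) :
    HasPCC4 (⊤ : SimpleGraph V) χ := by
  refine ⟨y, p, v, a, hyv, hpa, hyp.1, hpv, hva.1, hya.symm, ?_, ?_, ?_, ?_⟩
  · exact (hyp.2.color_ne hpv hyp.1 hyv).symm
  · rw [Sym2.eq_swap (a := v)]
    exact hav.2.color_ne hpv hpa.symm hav.1
  · exact (hva.2.color_ne hya.symm hva.1 hyv.symm).symm
  · rw [Sym2.eq_swap (a := y)]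
    exact hpy.2.color_ne hya.symm hpa hpy.1

theorem hasPCC4_of_forall_exists_isPrivatePair [Fintype V] (h4 : 4 ≤ Fintype.card V)
    (hp : ∀ v, ∃ a b, IsPrivatePair χ v a b) : HasPCC4 (⊤ : SimpleGraph V) χ := by
  classical
  by_contra nopc
  obtain ⟨v⟩ : Nonempty V := Fintype.card_pos_iff.mp (by omega)
  obtain ⟨a, b, hvab⟩ := hp v
  have habv := hvab.rotate nopc (hp a)
  have hclosed : ∀ p ∈ ({v, a, b} : Finset V), ∀ y, IsPrivateNeighbor χ p y →
      y ∈ ({v, a, b} : Finset V) := by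
    intro p hpT y hpy
    simp only [Finset.mem_insert, Finset.mem_singleton] at hpT ⊢
    rcases hpT with rfl | rfl | rfl
    · rcases habv.eq_or_eq_of_isPrivateNeighbor nopc hpy with rfl | rfl <;> simp
    · rcases hvab.eq_or_eq_of_isPrivateNeighbor nopc hpy with rfl | rfl <;> simp
    · rcases hvab.symm.eq_or_eq_of_isPrivateNeighbor nopc hpy with rfl | rfl <;> simp
  have hcard : ({v, a, b} : Finset V).card < (Finset.univ : Finset V).card := by
    rw [Finset.card_univ]
    exact Finset.card_le_three.trans_lt h4
  obtain ⟨y, -, hy⟩ := Finset.exists_mem_notMem_of_card_lt_card hcard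
  obtain ⟨p, q, hypq⟩ := hp y
  have hpyq := hypq.rotate nopc (hp p)
  have hpT : p ∉ ({v, a, b} : Finset V) := fun h => hy (hclosed p h y hpyq.1)
  simp only [Finset.mem_insert, Finset.mem_singleton, not_or] at hy hpT
  exact nopc (hasPCC4_of_disjoint_private_edges hypq.1 hpyq.1 hvab.1 habv.1
    hy.1 hy.2.1 hpT.1 hpT.2.1)

lemma privateColors_finite [Finite V] (χ : Sym2 V → ℕ) (v : V) :
    (privateColors χ v).Finite :=
  ((Set.toFinite _).image χ).subset fun _ hc => hc.1

lemma ncard_privateColors_le_one [Finite V] {v : V} (h : ¬ ∃ a b, IsPrivatePair χ v a b) :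
    (privateColors χ v).ncard ≤ 1 := by
  by_contra! h1
  obtain ⟨c, hc, d, hd, hcd⟩ := (Set.one_lt_ncard (privateColors_finite χ v)).mp h1
  have key : ∀ c ∈ privateColors χ v, ∃ a, IsPrivateNeighbor χ v a ∧ χ s(v, a) = c := by
    rintro c ⟨⟨e, he, rfl⟩, hpc⟩
    induction e using Sym2.ind with
    | h x y =>
      have hxy : x ≠ y := by simpa using he
      rcases hpc hxy rfl with rfl | rfl
      · exact ⟨y, ⟨hxy, hpc⟩, rfl⟩
      · rw [Sym2.eq_swap] at hpc ⊢
        exact ⟨x, ⟨hxy.symm, hpc⟩, rfl⟩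
  obtain ⟨a, ha, rfl⟩ := key c hc
  obtain ⟨b, hb, rfl⟩ := key d hd
  exact h ⟨a, b, ha, hb, hcd⟩

lemma HasPCC4.of_comp_map {W : Type*} {f : W → V} (hf : f.Injective)
    (h : HasPCC4 (⊤ : SimpleGraph W) (χ ∘ Sym2.map f)) : HasPCC4 (⊤ : SimpleGraph V) χ := by
  obtain ⟨a, b, c, d, hac, hbd, hab, hbc, hcd, hda, h⟩ := h
  exact ⟨f a, f b, f c, f d, hf.ne hac, hf.ne hbd, hf.ne hab, hf.ne hbc, hf.ne hcd, hf.ne hda,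
    h⟩

lemma cCount_top_le_cCount_subtype_add_ncard_privateColors [Finite V] (χ : Sym2 V → ℕ)
    (v : V) :
    cCount (⊤ : SimpleGraph V) χ ≤
      cCount (⊤ : SimpleGraph {x // x ≠ v}) (χ ∘ Sym2.map Subtype.val) +
        (privateColors χ v).ncard := by
  have hsub : χ '' (⊤ : SimpleGraph V).edgeSet ⊆
      (χ ∘ Sym2.map Subtype.val) '' (⊤ : SimpleGraph {x // x ≠ v}).edgeSet ∪
        privateColors χ v := by
    rintro c ⟨e, he, rfl⟩
    by_cases hpc : IsPrivateColor χ v (χ e)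
    · exact Or.inr ⟨⟨e, he, rfl⟩, hpc⟩
    · simp only [IsPrivateColor, not_forall, not_or] at hpc
      obtain ⟨x, y, hxy, hc, hvx, hvy⟩ := hpc
      refine Or.inl ⟨s(⟨x, Ne.symm hvx⟩, ⟨y, Ne.symm hvy⟩), ?_, hc⟩
      simpa [Subtype.ext_iff] using hxy
  calc cCount (⊤ : SimpleGraph V) χ
      ≤ ((χ ∘ Sym2.map Subtype.val) '' (⊤ : SimpleGraph {x // x ≠ v}).edgeSet ∪
          privateColors χ v).ncard :=
        Set.ncard_le_ncard hsub (((Set.toFinite _).image _).union (privateColors_finite χ v))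
    _ ≤ _ := Set.ncard_union_le _ _

lemma cCount_top_le_card_of_card_le_three [Fintype V] (χ : Sym2 V → ℕ)
    (h : Fintype.card V ≤ 3) : cCount (⊤ : SimpleGraph V) χ ≤ Fintype.card V := by
  classical
  calc cCount (⊤ : SimpleGraph V) χ ≤ (⊤ : SimpleGraph V).edgeSet.ncard :=
        Set.ncard_image_le (Set.toFinite _)
    _ = (Fintype.card V).choose 2 := by
        rw [← card_edgeFinset_top_eq_card_choose_two, edgeFinset, ← Set.ncard_eq_toFinset_card']
    _ ≤ Fintype.card V := by interval_cases Fintype.card V <;> decide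

theorem cCount_top_le_card_of_not_hasPCC4 [Fintype V] (nopc : ¬ HasPCC4 (⊤ : SimpleGraph V) χ) :
    cCount (⊤ : SimpleGraph V) χ ≤ Fintype.card V := by
  induction hn : Fintype.card V generalizing V with
  | zero => exact hn ▸ cCount_top_le_card_of_card_le_three χ (by omega)
  | succ n ih =>
    classical
    rcases le_or_gt (Fintype.card V) 3 with h3 | h4
    · exact hn ▸ cCount_top_le_card_of_card_le_three χ h3
    obtain ⟨v, hv⟩ : ∃ v, ¬ ∃ a b, IsPrivatePair χ v a b := by
      by_contra! hall
      exact nopc (hasPCC4_of_forall_exists_isPrivatePair h4 hall)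
    have hcard : Fintype.card {x // x ≠ v} = n := by
      simp [Fintype.card_subtype_compl, hn]
    calc cCount (⊤ : SimpleGraph V) χ
        ≤ cCount (⊤ : SimpleGraph {x // x ≠ v}) (χ ∘ Sym2.map Subtype.val) +
            (privateColors χ v).ncard :=
          cCount_top_le_cCount_subtype_add_ncard_privateColors χ v
      _ ≤ n + 1 := add_le_add (ih (fun h => nopc (h.of_comp_map Subtype.val_injective)) hcard)
          (ncard_privateColors_le_one hv)

end PrivateColors

/-- An edge-colored complete graph `K_n` using at least `n + 1` colors contains a
properly colored `C₄`. -/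
theorem stmt_2 {V : Type*} [Fintype V] (χ : Sym2 V → ℕ)
    (hc : Fintype.card V + 1 ≤ cCount (⊤ : SimpleGraph V) χ) :
    HasPCC4 (⊤ : SimpleGraph V) χ := by
  by_contra h
  have := cCount_top_le_card_of_not_hasPCC4 h
  omega
end

section
/- Let G be an edge-colored graph of order n ≥ 4. If e(G) + c(G) ≥ n(n+1)/2 + 1, where e(G) is the number of edges and c(G) the number of distinct colors, then G contains a properly colored 4-cycle. -/
open SimpleGraph Finset

/-!
Assume there is no properly colored `C₄`; we show `e(G[S]) + c(G[S]) ≤ |S|(|S|+1)/2` for every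
vertex set `S` by induction on `|S|`. Call a color private to `v` if it occurs at `v` but not in
`G[S - v]`. Deleting `v` loses `d(v)` edges and `p(v)` colors, so the induction goes through
unless `p(v) ≥ w(v) + 2` at every `v`, where `w(v) = |S| - 1 - d(v)` counts non-neighbours.

Two private colors of `u` on edges to common neighbours of `u, v`, together with two such
colors of `v`, close a properly colored `u x v y`. So for one of `u, v`, say `u`, the private
colors are bounded by `1 + |N(u) \ N(v)|`, which in turn compares `w(u)` with `w(v)`. If `S` is a
clique this forces every edge color to be unique, so any `4`-cycle is rainbow. Otherwise pick `u`
with `w(u)` maximal: `w` is injective on the non-neighbours of `u` with values in `[1, w(u))`,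
which is absurd.
-/

namespace PCC4

variable {V : Type*} (G : SimpleGraph V) [DecidableRel G.Adj] (χ : Sym2 V → ℕ)

def edgesIn (s : Finset V) : Finset (Sym2 V) := s.sym2.filter (· ∈ G.edgeSet)

def colorsIn (s : Finset V) : Finset ℕ := (edgesIn G s).image χ

variable {G} in
lemma mk_mem_edgesIn {s : Finset V} {a b : V} :
    s(a, b) ∈ edgesIn G s ↔ a ∈ s ∧ b ∈ s ∧ G.Adj a b := by
  simp [edgesIn, and_assoc]

variable [DecidableEq V]

def nbrsIn (s : Finset V) (v : V) : Finset V := (s.erase v).filter (G.Adj v)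

def nonNbrsIn (s : Finset V) (v : V) : Finset V := (s.erase v).filter (¬ G.Adj v ·)

def privateColors (s : Finset V) (v : V) : Finset ℕ :=
  (nbrsIn G s v).image (fun x => χ s(v, x)) \ colorsIn G χ (s.erase v)

def sharedPrivateColors (s : Finset V) (u v : V) : Finset ℕ :=
  privateColors G χ s u ∩ (nbrsIn G s u ∩ nbrsIn G s v).image (fun x => χ s(u, x))

variable {G χ} {s : Finset V} {u v x : V}

lemma mem_nbrsIn : x ∈ nbrsIn G s v ↔ x ∈ s ∧ G.Adj v x := by
  simp only [nbrsIn, Finset.mem_filter, Finset.mem_erase]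
  exact ⟨fun h => ⟨h.1.2, h.2⟩, fun h => ⟨⟨h.2.ne', h.1⟩, h.2⟩⟩

lemma mem_nonNbrsIn : x ∈ nonNbrsIn G s v ↔ x ≠ v ∧ x ∈ s ∧ ¬ G.Adj v x := by
  simp [nonNbrsIn, and_assoc]

lemma card_nbrsIn_add_card_nonNbrsIn (hv : v ∈ s) :
    #(nbrsIn G s v) + #(nonNbrsIn G s v) + 1 = #s := by
  rw [nbrsIn, nonNbrsIn, Finset.card_filter_add_card_filter_not, Finset.card_erase_add_one hv]

lemma card_edgesIn_le_choose_two (s : Finset V) : #(edgesIn G s) ≤ (#s).choose 2 := by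
  rw [← Sym2.card_image_offDiag]
  refine Finset.card_le_card fun e he => ?_
  induction e with
  | _ a b =>
    obtain ⟨ha, hb, hab⟩ := mk_mem_edgesIn.1 he
    exact Finset.mem_image.2 ⟨(a, b), Finset.mem_offDiag.2 ⟨ha, hb, hab.ne⟩, rfl⟩

lemma edgesIn_eq_union (hv : v ∈ s) :
    edgesIn G s = edgesIn G (s.erase v) ∪ (nbrsIn G s v).image (fun x => s(v, x)) := by
  ext e
  induction e with
  | _ a b =>
    simp only [Finset.mem_union, mk_mem_edgesIn, Finset.mem_erase, Finset.mem_image, mem_nbrsIn,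
      Sym2.eq_iff]
    constructor
    · rintro ⟨ha, hb, hab⟩
      by_cases hav : a = v
      · subst hav; exact Or.inr ⟨b, ⟨hb, hab⟩, Or.inl ⟨rfl, rfl⟩⟩
      by_cases hbv : b = v
      · subst hbv; exact Or.inr ⟨a, ⟨ha, hab.symm⟩, Or.inr ⟨rfl, rfl⟩⟩
      exact Or.inl ⟨⟨hav, ha⟩, ⟨hbv, hb⟩, hab⟩
    · rintro (⟨⟨-, ha⟩, ⟨-, hb⟩, hab⟩ | ⟨x, ⟨hx, hvx⟩, ⟨rfl, rfl⟩ | ⟨rfl, rfl⟩⟩)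
      exacts [⟨ha, hb, hab⟩, ⟨hv, hx, hvx⟩, ⟨hx, hv, hvx.symm⟩]

lemma card_edgesIn (hv : v ∈ s) :
    #(edgesIn G s) = #(edgesIn G (s.erase v)) + #(nbrsIn G s v) := by
  have hdisj : Disjoint (edgesIn G (s.erase v)) ((nbrsIn G s v).image (fun x => s(v, x))) := by
    refine Finset.disjoint_left.2 fun e he he' => ?_
    obtain ⟨x, -, rfl⟩ := Finset.mem_image.1 he'
    exact (Finset.mem_erase.1 (mk_mem_edgesIn.1 he).1).1 rfl
  rw [edgesIn_eq_union hv, Finset.card_union_of_disjoint hdisj,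
    Finset.card_image_of_injective _ fun _ _ => Sym2.congr_right.1]

lemma card_colorsIn_le (hv : v ∈ s) :
    #(colorsIn G χ s) ≤ #(colorsIn G χ (s.erase v)) + #(privateColors G χ s v) := by
  have : colorsIn G χ s = colorsIn G χ (s.erase v) ∪ privateColors G χ s v := by
    rw [privateColors, Finset.union_sdiff_self_eq_union, colorsIn, colorsIn,
      edgesIn_eq_union hv, Finset.image_union, Finset.image_image]
    rfl
  exact this ▸ Finset.card_union_le _ _

lemma color_ne_of_mem_privateColors {γ : ℕ} (hγ : γ ∈ privateColors G χ s v) {a b : V}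
    (ha : a ∈ s) (hb : b ∈ s) (hav : a ≠ v) (hbv : b ≠ v) (hab : G.Adj a b) : χ s(a, b) ≠ γ := by
  rintro rfl
  refine (Finset.mem_sdiff.1 hγ).2 (Finset.mem_image_of_mem χ ?_)
  exact mk_mem_edgesIn.2 ⟨Finset.mem_erase.2 ⟨hav, ha⟩, Finset.mem_erase.2 ⟨hbv, hb⟩, hab⟩

lemma card_privateColors_le (u v : V) :
    #(privateColors G χ s u) ≤
      #(sharedPrivateColors G χ s u v) + #(nbrsIn G s u \ nbrsIn G s v) := by
  have : privateColors G χ s u ⊆ sharedPrivateColors G χ s u v ∪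
      (nbrsIn G s u \ nbrsIn G s v).image (fun x => χ s(u, x)) := by
    intro γ hγ
    obtain ⟨x, hx, rfl⟩ := Finset.mem_image.1 (Finset.mem_sdiff.1 hγ).1
    by_cases hxv : x ∈ nbrsIn G s v
    · exact Finset.mem_union_left _ <| Finset.mem_inter.2
        ⟨hγ, Finset.mem_image_of_mem _ (Finset.mem_inter.2 ⟨hx, hxv⟩)⟩
    · exact Finset.mem_union_right _ <| Finset.mem_image_of_mem _ (Finset.mem_sdiff.2 ⟨hx, hxv⟩)
  exact (Finset.card_le_card this).trans <|
    (Finset.card_union_le _ _).trans (Nat.add_le_add_left Finset.card_image_le _)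


-- With `p x`, `q x` the colors of `ux`, `vx`, this says that `u x v y` is properly colored.
lemma exists_alternating_pair {W α : Type*} (M : W → Prop) (p q : W → α) {a₁ a₂ b₁ b₂ : W}
    (ha₁ : M a₁) (ha₂ : M a₂) (hb₁ : M b₁) (hb₂ : M b₂)
    (hpa : p a₁ ≠ p a₂) (hqb : q b₁ ≠ q b₂)
    (h₁ : p a₁ ≠ q a₁) (h₂ : p a₂ ≠ q a₂) (h₃ : p b₁ ≠ q b₁) (h₄ : p b₂ ≠ q b₂) :
    ∃ x y, M x ∧ M y ∧ p x ≠ q x ∧ q x ≠ q y ∧ q y ≠ p y ∧ p y ≠ p x := by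
  by_cases hqa : q a₁ = q a₂
  · by_cases hpb : p b₁ = p b₂
    · by_cases hi : p a₁ = p b₁ <;> by_cases hj : q b₁ = q a₁
      · exact ⟨a₂, b₂, ha₂, hb₂, h₂, by grind, by grind, by grind⟩
      · exact ⟨a₂, b₁, ha₂, hb₁, h₂, by grind, by grind, by grind⟩
      · exact ⟨a₁, b₂, ha₁, hb₂, h₁, by grind, by grind, by grind⟩
      · exact ⟨a₁, b₁, ha₁, hb₁, h₁, by grind, by grind, by grind⟩
    · exact ⟨b₁, b₂, hb₁, hb₂, h₃, hqb, Ne.symm h₄, Ne.symm hpb⟩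
  · exact ⟨a₁, a₂, ha₁, ha₂, h₁, hqa, Ne.symm h₂, Ne.symm hpa⟩

lemma color_ne_of_mem_nbrsIn_of_mem_privateColors (hvs : v ∈ s) (huv : u ≠ v)
    (hxu : x ∈ nbrsIn G s u) (hxv : x ∈ nbrsIn G s v) (hx : χ s(u, x) ∈ privateColors G χ s u) :
    χ s(u, x) ≠ χ s(v, x) := fun h =>
  color_ne_of_mem_privateColors hx hvs (mem_nbrsIn.1 hxv).1 huv.symm
    (mem_nbrsIn.1 hxu).2.ne' (mem_nbrsIn.1 hxv).2 h.symm

lemma hasPCC4_of_one_lt_card_sharedPrivateColors (hus : u ∈ s) (hvs : v ∈ s) (huv : u ≠ v)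
    (hu : 1 < #(sharedPrivateColors G χ s u v)) (hv : 1 < #(sharedPrivateColors G χ s v u)) :
    HasPCC4 G χ := by
  obtain ⟨γ₁, hγ₁, γ₂, hγ₂, hγ⟩ := Finset.one_lt_card.1 hu
  obtain ⟨δ₁, hδ₁, δ₂, hδ₂, hδ⟩ := Finset.one_lt_card.1 hv
  simp only [sharedPrivateColors, Finset.mem_inter, Finset.mem_image] at hγ₁ hγ₂ hδ₁ hδ₂
  obtain ⟨hγ₁, a₁, ⟨ha₁u, ha₁v⟩, rfl⟩ := hγ₁
  obtain ⟨hγ₂, a₂, ⟨ha₂u, ha₂v⟩, rfl⟩ := hγ₂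
  obtain ⟨hδ₁, b₁, ⟨hb₁v, hb₁u⟩, rfl⟩ := hδ₁
  obtain ⟨hδ₂, b₂, ⟨hb₂v, hb₂u⟩, rfl⟩ := hδ₂
  obtain ⟨x, y, ⟨hxu, hxv⟩, ⟨hyu, hyv⟩, h₁, h₂, h₃, h₄⟩ :=
    exists_alternating_pair (fun x => x ∈ nbrsIn G s u ∧ x ∈ nbrsIn G s v)
      (fun x => χ s(u, x)) (fun x => χ s(v, x)) ⟨ha₁u, ha₁v⟩ ⟨ha₂u, ha₂v⟩ ⟨hb₁u, hb₁v⟩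
      ⟨hb₂u, hb₂v⟩ hγ hδ
      (color_ne_of_mem_nbrsIn_of_mem_privateColors hvs huv ha₁u ha₁v hγ₁)
      (color_ne_of_mem_nbrsIn_of_mem_privateColors hvs huv ha₂u ha₂v hγ₂)
      (color_ne_of_mem_nbrsIn_of_mem_privateColors hus huv.symm hb₁v hb₁u hδ₁).symm
      (color_ne_of_mem_nbrsIn_of_mem_privateColors hus huv.symm hb₂v hb₂u hδ₂).symm
  refine ⟨u, x, v, y, huv, fun hxy => h₂ (hxy ▸ rfl), (mem_nbrsIn.1 hxu).2,
    (mem_nbrsIn.1 hxv).2.symm, (mem_nbrsIn.1 hyv).2, (mem_nbrsIn.1 hyu).2.symm, ?_⟩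
  simp only [Sym2.eq_swap (a := x), Sym2.eq_swap (a := y)]
  exact ⟨h₁, h₂, h₃, h₄⟩

lemma card_sharedPrivateColors_le_one (hno : ¬ HasPCC4 G χ) (hus : u ∈ s) (hvs : v ∈ s)
    (huv : u ≠ v) :
    #(sharedPrivateColors G χ s u v) ≤ 1 ∨ #(sharedPrivateColors G χ s v u) ≤ 1 := by
  by_contra! h
  exact hno (hasPCC4_of_one_lt_card_sharedPrivateColors hus hvs huv h.1 h.2)

lemma card_sdiff_nbrsIn_le (u v : V) :
    #(nbrsIn G s u \ nbrsIn G s v) ≤ #(nonNbrsIn G s v \ nonNbrsIn G s u) + 1 := by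
  refine (Finset.card_le_card fun x hx => ?_).trans (Finset.card_insert_le v _)
  simp only [Finset.mem_sdiff, mem_nbrsIn, not_and] at hx
  rw [Finset.mem_insert, Finset.mem_sdiff, mem_nonNbrsIn, mem_nonNbrsIn]
  by_cases hxv : x = v
  · exact Or.inl hxv
  · exact Or.inr ⟨⟨hxv, hx.1.1, hx.2 hx.1.1⟩, fun h => h.2.2 hx.1.2⟩

lemma card_sdiff_nbrsIn_add_one_le (hus : u ∈ s) (huv : u ≠ v) (hnadj : ¬ G.Adj u v) :
    #(nbrsIn G s u \ nbrsIn G s v) + 1 ≤ #(nonNbrsIn G s v \ nonNbrsIn G s u) := by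
  have hu : u ∈ nonNbrsIn G s v \ nonNbrsIn G s u := by
    simp only [Finset.mem_sdiff, mem_nonNbrsIn]
    exact ⟨⟨huv, hus, fun h => hnadj h.symm⟩, fun h => h.1 rfl⟩
  rw [← Finset.card_erase_add_one hu, Nat.add_le_add_iff_right]
  refine Finset.card_le_card fun x hx => ?_
  simp only [Finset.mem_sdiff, mem_nbrsIn, not_and] at hx
  simp only [Finset.mem_erase, Finset.mem_sdiff, mem_nonNbrsIn, not_and, not_not]
  exact ⟨hx.1.2.ne', ⟨fun h => hnadj (h ▸ hx.1.2), hx.1.1, hx.2 hx.1.1⟩, fun _ _ => hx.1.2⟩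

lemma card_nonNbrsIn_add_card_inter_le (hno : ¬ HasPCC4 G χ) (hus : u ∈ s) (hvs : v ∈ s)
    (huv : u ≠ v) (hu : #(nonNbrsIn G s u) + 2 ≤ #(privateColors G χ s u))
    (hv : #(nonNbrsIn G s v) + 2 ≤ #(privateColors G χ s v)) :
    #(nonNbrsIn G s u) + #(nonNbrsIn G s u ∩ nonNbrsIn G s v) ≤ #(nonNbrsIn G s v) ∨
    #(nonNbrsIn G s v) + #(nonNbrsIn G s u ∩ nonNbrsIn G s v) ≤ #(nonNbrsIn G s u) := by
  have := card_privateColors_le (G := G) (χ := χ) (s := s) u v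
  have := card_privateColors_le (G := G) (χ := χ) (s := s) v u
  have := card_sdiff_nbrsIn_le (G := G) (s := s) u v
  have := card_sdiff_nbrsIn_le (G := G) (s := s) v u
  have := Finset.card_sdiff_add_card_inter (nonNbrsIn G s u) (nonNbrsIn G s v)
  have := Finset.inter_comm (nonNbrsIn G s u) _ ▸
    Finset.card_sdiff_add_card_inter (nonNbrsIn G s v) (nonNbrsIn G s u)
  rcases card_sharedPrivateColors_le_one hno hus hvs huv with h | h <;> omega

lemma card_nonNbrsIn_add_two_le_of_not_adj (hno : ¬ HasPCC4 G χ) (hus : u ∈ s) (hvs : v ∈ s)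
    (huv : u ≠ v) (hnadj : ¬ G.Adj u v) (hu : #(nonNbrsIn G s u) + 2 ≤ #(privateColors G χ s u))
    (hv : #(nonNbrsIn G s v) + 2 ≤ #(privateColors G χ s v)) :
    #(nonNbrsIn G s u) + 2 + #(nonNbrsIn G s u ∩ nonNbrsIn G s v) ≤ #(nonNbrsIn G s v) ∨
    #(nonNbrsIn G s v) + 2 + #(nonNbrsIn G s u ∩ nonNbrsIn G s v) ≤ #(nonNbrsIn G s u) := by
  have := card_privateColors_le (G := G) (χ := χ) (s := s) u v
  have := card_privateColors_le (G := G) (χ := χ) (s := s) v u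
  have := card_sdiff_nbrsIn_add_one_le hus huv hnadj
  have := card_sdiff_nbrsIn_add_one_le hvs huv.symm fun h => hnadj h.symm
  have := Finset.card_sdiff_add_card_inter (nonNbrsIn G s u) (nonNbrsIn G s v)
  have := Finset.inter_comm (nonNbrsIn G s u) _ ▸
    Finset.card_sdiff_add_card_inter (nonNbrsIn G s v) (nonNbrsIn G s u)
  rcases card_sharedPrivateColors_le_one hno hus hvs huv with h | h <;> omega

lemma color_ne_of_isClique (hcl : G.IsClique (s : Set V)) (hus : u ∈ s) (hvs : v ∈ s)
    (huv : u ≠ v) (hu : 2 ≤ #(privateColors G χ s u))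
    (hshared : #(sharedPrivateColors G χ s u v) ≤ 1)
    {a b : V} (ha : a ∈ s) (hb : b ∈ s) (hab : G.Adj a b) (hne : s(a, b) ≠ s(u, v)) :
    χ s(a, b) ≠ χ s(u, v) := by
  obtain ⟨γ, hγ, hγS⟩ := Finset.exists_mem_notMem_of_card_lt_card (hshared.trans_lt hu)
  -- in a clique every `y ≠ u, v` is a common neighbour, so `γ` can only sit on `uv`
  have hcommon : ∀ y ∈ s, y ≠ u → y ≠ v → χ s(u, y) ≠ γ := fun y hy hyu hyv hyγ =>
    hγS <| Finset.mem_inter.2 ⟨hγ, Finset.mem_image.2 ⟨y, Finset.mem_inter.2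
      ⟨mem_nbrsIn.2 ⟨hy, hcl hus hy hyu.symm⟩, mem_nbrsIn.2 ⟨hy, hcl hvs hy hyv.symm⟩⟩, hyγ⟩⟩
  obtain ⟨x, hx, hxγ⟩ := Finset.mem_image.1 (Finset.mem_sdiff.1 hγ).1
  obtain rfl : x = v := by
    by_contra hxv
    exact hcommon x (mem_nbrsIn.1 hx).1 (mem_nbrsIn.1 hx).2.ne' hxv hxγ
  rw [hxγ]
  rcases eq_or_ne a u with rfl | hau
  · exact hcommon b hb hab.ne' fun hbv => hne (hbv ▸ rfl)
  rcases eq_or_ne b u with rfl | hbu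
  · rw [Sym2.eq_swap]
    exact hcommon a ha hab.ne fun hav => hne (hav ▸ Sym2.eq_swap)
  exact color_ne_of_mem_privateColors hγ ha hb hau hbu hab

lemma hasPCC4_of_isClique (hcl : G.IsClique (s : Set V)) (hs : 3 < #s)
    (hP : ∀ v ∈ s, 2 ≤ #(privateColors G χ s v)) : HasPCC4 G χ := by
  by_contra hno
  have hproper : ∀ a ∈ s, ∀ b ∈ s, ∀ c ∈ s, a ≠ b → b ≠ c → a ≠ c → χ s(a, b) ≠ χ s(b, c) := by
    intro a ha b hb c hc hab hbc hac
    have hne : s(b, c) ≠ s(a, b) := fun h => hac (Sym2.congr_right.1 (h.trans Sym2.eq_swap)).symm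
    rcases card_sharedPrivateColors_le_one hno ha hb hab with h | h
    · exact (color_ne_of_isClique hcl ha hb hab (hP a ha) h hb hc (hcl hb hc hbc) hne).symm
    · rw [Sym2.eq_swap (a := a)] at hne ⊢
      exact (color_ne_of_isClique hcl hb ha hab.symm (hP b hb) h hb hc (hcl hb hc hbc) hne).symm
  obtain ⟨a, b, c, d, ha, hb, hc, hd, hab, hac, had, hbc, hbd, hcd⟩ :=
    Finset.three_lt_card_iff.1 hs
  exact hno ⟨a, b, c, d, hac, hbd, hcl ha hb hab, hcl hb hc hbc, hcl hc hd hcd,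
    hcl hd ha had.symm, hproper a ha b hb c hc hab hbc hac, hproper b hb c hc d hd hbc hcd hbd,
    hproper c hc d hd a ha hcd had.symm hac.symm, hproper d hd a ha b hb had.symm hab hbd.symm⟩

lemma mem_nonNbrsIn_symm (hus : u ∈ s) (hv : v ∈ nonNbrsIn G s u) : u ∈ nonNbrsIn G s v := by
  rw [mem_nonNbrsIn] at hv ⊢
  exact ⟨hv.1.symm, hus, fun h => hv.2.2 h.symm⟩

lemma hasPCC4_of_not_isClique (hcl : ¬ G.IsClique (s : Set V))
    (hP : ∀ v ∈ s, #(nonNbrsIn G s v) + 2 ≤ #(privateColors G χ s v)) : HasPCC4 G χ := by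
  by_contra hno
  simp only [SimpleGraph.IsClique, Set.Pairwise, Finset.mem_coe, not_forall] at hcl
  obtain ⟨u₀, hu₀, v₀, hv₀, hne, hnadj⟩ := hcl
  obtain ⟨u, hus, hmax⟩ := Finset.exists_max_image s (fun v => #(nonNbrsIn G s v)) ⟨u₀, hu₀⟩
  have hWs : ∀ w ∈ nonNbrsIn G s u, w ∈ s := fun w hw => (mem_nonNbrsIn.1 hw).2.1
  have hmaps : ∀ w ∈ nonNbrsIn G s u, #(nonNbrsIn G s w) ∈ Finset.Ico 1 #(nonNbrsIn G s u) := by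
    intro w hw
    have hwu := mem_nonNbrsIn.1 hw
    have := card_nonNbrsIn_add_two_le_of_not_adj hno hus hwu.2.1 hwu.1.symm hwu.2.2
      (hP u hus) (hP w hwu.2.1)
    have := hmax w hwu.2.1
    have := Finset.card_pos.2 ⟨u, mem_nonNbrsIn_symm hus hw⟩
    rw [Finset.mem_Ico]
    omega
  have hinj : Set.InjOn (fun w => #(nonNbrsIn G s w)) (nonNbrsIn G s u) := by
    intro w₁ hw₁ w₂ hw₂ heq
    by_contra hne
    have hu : u ∈ nonNbrsIn G s w₁ ∩ nonNbrsIn G s w₂ :=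
      Finset.mem_inter.2 ⟨mem_nonNbrsIn_symm hus hw₁, mem_nonNbrsIn_symm hus hw₂⟩
    have := Finset.card_pos.2 ⟨u, hu⟩
    have := card_nonNbrsIn_add_card_inter_le hno (hWs w₁ hw₁) (hWs w₂ hw₂) hne
      (hP w₁ (hWs w₁ hw₁)) (hP w₂ (hWs w₂ hw₂))
    simp only at heq
    omega
  have hcard := Finset.card_le_card_of_injOn _ hmaps hinj
  have := Finset.card_pos.2 ⟨v₀, mem_nonNbrsIn.2 ⟨hne.symm, hv₀, hnadj⟩⟩
  have := hmax u₀ hu₀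
  rw [Nat.card_Ico] at hcard
  omega

lemma hasPCC4_of_forall_card_privateColors (hs : 3 < #s)
    (hP : ∀ v ∈ s, #(nonNbrsIn G s v) + 2 ≤ #(privateColors G χ s v)) : HasPCC4 G χ := by
  by_cases hcl : G.IsClique (s : Set V)
  · exact hasPCC4_of_isClique hcl hs fun v hv => le_of_add_le_right (hP v hv)
  · exact hasPCC4_of_not_isClique hcl hP

theorem card_edgesIn_add_card_colorsIn_le (hno : ¬ HasPCC4 G χ) (s : Finset V) :
    #(edgesIn G s) + #(colorsIn G χ s) ≤ (#s + 1).choose 2 := by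
  induction s using Finset.strongInduction with
  | H s ih =>
  by_cases hs : #s ≤ 3
  · have hE := card_edgesIn_le_choose_two (G := G) s
    have hC : #(colorsIn G χ s) ≤ #(edgesIn G s) := Finset.card_image_le
    have : 2 * (#s).choose 2 ≤ (#s + 1).choose 2 := by interval_cases #s <;> decide
    omega
  by_cases hred : ∃ v ∈ s, #(nbrsIn G s v) + #(privateColors G χ s v) ≤ #s
  · obtain ⟨v, hv, hle⟩ := hred
    have hIH := ih _ (Finset.erase_ssubset hv)
    have hC := card_colorsIn_le (G := G) (χ := χ) hv
    have hchoose : (#s + 1).choose 2 = #s + (#(s.erase v) + 1).choose 2 := by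
      rw [Finset.card_erase_add_one hv, Nat.choose_succ_succ', Nat.choose_one_right]
    rw [card_edgesIn hv]
    omega
  · push Not at hred
    refine absurd (hasPCC4_of_forall_card_privateColors (s := s) (by omega) fun v hv => ?_) hno
    have := hred v hv
    have := card_nbrsIn_add_card_nonNbrsIn (G := G) hv
    omega

end PCC4

theorem stmt_3_general {V : Type*} [Fintype V]
    (G : SimpleGraph V) (χ : Sym2 V → ℕ)
    (h : Fintype.card V * (Fintype.card V + 1) / 2 + 1 ≤ eCount G + cCount G χ) :
    HasPCC4 G χ := by
  classical
  by_contra hno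
  have hbound := PCC4.card_edgesIn_add_card_colorsIn_le hno Finset.univ
  have hedges : (PCC4.edgesIn G Finset.univ : Set (Sym2 V)) = G.edgeSet := by
    ext e
    induction e with
    | _ a b => simp [PCC4.mk_mem_edgesIn]
  rw [eCount, cCount, ← hedges, ← Finset.coe_image, Set.ncard_coe_finset,
    Set.ncard_coe_finset] at h
  rw [Finset.card_univ, Nat.choose_two_right, Nat.add_sub_cancel, Nat.mul_comm] at hbound
  exact absurd hbound (by rw [PCC4.colorsIn]; omega)

/-- If `e(G) + c(G) ≥ n(n+1)/2 + 1` for an edge-colored graph of order `n ≥ 4`,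
then `G` contains a properly colored `C₄`. -/
theorem stmt_3 {V : Type*} [Fintype V] (hn : 4 ≤ Fintype.card V)
    (G : SimpleGraph V) (χ : Sym2 V → ℕ)
    (h : Fintype.card V * (Fintype.card V + 1) / 2 + 1 ≤ eCount G + cCount G χ) :
    HasPCC4 G χ :=
  stmt_3_general G χ h
end

section
/- Let G be an edge-colored graph of order n ≥ 4. If the sum over all vertices v of the color degree d^c(v) (the number of distinct colors on edges incident to v) is at least n(n+1)/2 + 1, then G contains a properly colored 4-cycle. -/
open SimpleGraph Finset

set_option linter.unusedSectionVars false
set_option maxHeartbeats 1000000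
attribute [local instance 50] Classical.propDecidable

section Dev
variable {V : Type*} [Fintype V] [DecidableEq V]

/-- neighbors as a Finset, fully controlled -/
def nb (G : SimpleGraph V) [DecidableRel G.Adj] (v : V) : Finset V :=
  Finset.univ.filter (fun u => G.Adj v u)

lemma mem_nb {G : SimpleGraph V} [DecidableRel G.Adj] {v u : V} :
    u ∈ nb G v ↔ G.Adj v u := by simp [nb]

/-- color of edge vu -/
def col (χ : Sym2 V → ℕ) (v u : V) : ℕ := χ s(v, u)

lemma col_comm (χ : Sym2 V → ℕ) (v u : V) : col χ v u = col χ u v := by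
  unfold col; rw [Sym2.eq_swap]

/-- the color of edge vu is unique among edges at v -/
def uniqAt (G : SimpleGraph V) [DecidableRel G.Adj] (χ : Sym2 V → ℕ) (v u : V) : Prop :=
  ∀ w, G.Adj v w → w ≠ u → col χ v w ≠ col χ v u

noncomputable def dcF (G : SimpleGraph V) [DecidableRel G.Adj] (χ : Sym2 V → ℕ) (v : V) : ℕ :=
  ((nb G v).image (col χ v)).card

noncomputable def sSet (G : SimpleGraph V) [DecidableRel G.Adj] (χ : Sym2 V → ℕ) (v : V) :
    Finset V := (nb G v).filter (fun u => uniqAt G χ u v)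

noncomputable def σF (G : SimpleGraph V) [DecidableRel G.Adj] (χ : Sym2 V → ℕ) : ℕ :=
  ∑ v : V, dcF G χ v

def suppF (G : SimpleGraph V) [DecidableRel G.Adj] : Finset V :=
  Finset.univ.filter (fun v => (nb G v).Nonempty)

lemma mem_suppF {G : SimpleGraph V} [DecidableRel G.Adj] {v : V} :
    v ∈ suppF G ↔ ∃ u, G.Adj v u := by
  simp [suppF, Finset.Nonempty, mem_nb]

lemma nb_subset_suppF {G : SimpleGraph V} [DecidableRel G.Adj] {v : V} :
    nb G v ⊆ suppF G := by
  intro u hu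
  rw [mem_nb] at hu
  exact mem_suppF.2 ⟨v, hu.symm⟩

lemma colorDeg_eq (G : SimpleGraph V) [DecidableRel G.Adj] (χ : Sym2 V → ℕ) (v : V) :
    colorDeg G χ v = dcF G χ v := by
  unfold colorDeg dcF
  have h1 : G.neighborSet v = ↑(nb G v) := by
    ext u; simp [mem_nb, SimpleGraph.mem_neighborSet]
  rw [h1, ← Finset.coe_image, Set.ncard_coe_finset]; rfl

lemma dcF_le_card (G : SimpleGraph V) [DecidableRel G.Adj] (χ : Sym2 V → ℕ) (v : V) :
    dcF G χ v ≤ (nb G v).card := Finset.card_image_le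

lemma nb_card_le {G : SimpleGraph V} [DecidableRel G.Adj] {v : V} (hv : v ∈ suppF G) :
    (nb G v).card + 1 ≤ (suppF G).card := by
  have h : nb G v ⊆ (suppF G).erase v := by
    intro u hu
    refine Finset.mem_erase.2 ⟨?_, nb_subset_suppF hu⟩
    intro huv; subst huv
    exact G.irrefl (mem_nb.1 hu)
  calc (nb G v).card + 1 ≤ ((suppF G).erase v).card + 1 := by
        exact Nat.add_le_add_right (Finset.card_le_card h) 1
    _ = (suppF G).card := by
        rw [Finset.card_erase_of_mem hv]
        exact Nat.succ_pred_eq_of_pos (Finset.card_pos.2 ⟨v, hv⟩)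

end Dev
section Dev2
variable {V : Type*} [Fintype V] [DecidableEq V]

variable (G : SimpleGraph V) [DecidableRel G.Adj] (χ : Sym2 V → ℕ)

noncomputable def bigS (v : V) : Finset V := (nb G v).filter (fun u => ¬ uniqAt G χ v u)
noncomputable def usS (v : V) : Finset V := (nb G v).filter (fun u => uniqAt G χ v u)
noncomputable def buS (v : V) : Finset V :=
  (nb G v).filter (fun u => uniqAt G χ v u ∧ uniqAt G χ u v)
noncomputable def bigT (v : V) : ℕ := ((bigS G χ v).image (col χ v)).card

variable {G χ}

lemma drop_bound (v : V) :
    dcF G χ v + (sSet G χ v).card ≤ (nb G v).card + (bigT G χ v + (buS G χ v).card) := by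
  have h1 : dcF G χ v ≤ (usS G χ v).card + bigT G χ v := by
    unfold dcF bigT
    have hsplit : nb G v = usS G χ v ∪ bigS G χ v := by
      unfold usS bigS
      rw [← Finset.filter_or]
      ext u; simp [em]
    rw [hsplit, Finset.image_union]
    calc ((usS G χ v).image (col χ v) ∪ (bigS G χ v).image (col χ v)).card
        ≤ ((usS G χ v).image (col χ v)).card + ((bigS G χ v).image (col χ v)).card :=
          Finset.card_union_le _ _
      _ ≤ (usS G χ v).card + ((bigS G χ v).image (col χ v)).card :=
          Nat.add_le_add_right Finset.card_image_le _
  have h2 : (sSet G χ v).card ≤ (bigS G χ v).card + (buS G χ v).card := by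
    have hsub : sSet G χ v ⊆ bigS G χ v ∪ buS G χ v := by
      intro u hu
      rw [sSet, Finset.mem_filter] at hu
      by_cases hvu : uniqAt G χ v u
      · exact Finset.mem_union_right _ (by rw [buS, Finset.mem_filter]; exact ⟨hu.1, hvu, hu.2⟩)
      · exact Finset.mem_union_left _ (by rw [bigS, Finset.mem_filter]; exact ⟨hu.1, hvu⟩)
    exact le_trans (Finset.card_le_card hsub) (Finset.card_union_le _ _)
  have h3 : (usS G χ v).card + (bigS G χ v).card = (nb G v).card :=
    Finset.card_filter_add_card_filter_not _
  omega
end Dev2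
section Dev3
variable {V : Type*} [Fintype V] [DecidableEq V]
variable {G : SimpleGraph V} [DecidableRel G.Adj] {χ : Sym2 V → ℕ}

lemma mk4 {a b c d : V} (hac : a ≠ c) (hbd : b ≠ d)
    (h1 : G.Adj a b) (h2 : G.Adj b c) (h3 : G.Adj c d) (h4 : G.Adj d a)
    (c1 : col χ b a ≠ col χ b c) (c2 : col χ c b ≠ col χ c d)
    (c3 : col χ d c ≠ col χ d a) (c4 : col χ a d ≠ col χ a b) :
    HasPCC4 G χ := by
  refine ⟨a, b, c, d, hac, hbd, h1, h2, h3, h4, ?_, ?_, ?_, ?_⟩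
  · rw [show s(a,b) = s(b,a) from Sym2.eq_swap]; exact c1
  · rw [show s(b,c) = s(c,b) from Sym2.eq_swap]; exact c2
  · rw [show s(c,d) = s(d,c) from Sym2.eq_swap]; exact c3
  · rw [show s(d,a) = s(a,d) from Sym2.eq_swap]; exact c4

lemma caseC (hPC : ¬ HasPCC4 G χ)
    (hU : ∀ a b, G.Adj a b → uniqAt G χ a b)
    (hN : 4 ≤ (suppF G).card) :
    ∃ v ∈ suppF G, dcF G χ v + (sSet G χ v).card ≤ (suppF G).card := by
  set N := (suppF G).card with hNdef
  by_cases hsmall : ∃ v ∈ suppF G, 2 * (nb G v).card ≤ N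
  · obtain ⟨v, hv, hdv⟩ := hsmall
    refine ⟨v, hv, ?_⟩
    have h1 := dcF_le_card G χ v
    have h2 : (sSet G χ v).card ≤ (nb G v).card := Finset.card_le_card (Finset.filter_subset _ _)
    omega
  · exfalso
    push_neg at hsmall
    have hcn : ∀ a b x1 x2 : V, a ≠ b → x1 ≠ x2 → G.Adj x1 a → G.Adj x1 b →
        G.Adj x2 a → G.Adj x2 b → False := by
      intro a b x1 x2 hab hx hx1a hx1b hx2a hx2b
      exact hPC (mk4 hab hx hx1a.symm hx1b hx2b.symm hx2a
        ((hU x1 a hx1a) b hx1b hab.symm).symm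
        ((hU b x1 hx1b.symm) x2 hx2b.symm hx.symm).symm
        ((hU x2 b hx2b) a hx2a hab).symm
        ((hU a x2 hx2a.symm) x1 hx1a.symm hx).symm)
    set S := (suppF G).sigma (fun v => (nb G v).offDiag) with hSdef
    have hinj : S.card ≤ (suppF G).offDiag.card := by
      apply Finset.card_le_card_of_injOn (fun p => p.2)
      · rintro ⟨v, a, b⟩ hp
        simp only [Finset.mem_coe, hSdef, Finset.mem_sigma, Finset.mem_offDiag] at hp
        exact Finset.mem_offDiag.2 ⟨nb_subset_suppF hp.2.1, nb_subset_suppF hp.2.2.1, hp.2.2.2⟩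
      · rintro ⟨v, a, b⟩ hp ⟨w, a', b'⟩ hq heq
        simp only [Finset.mem_coe, hSdef, Finset.mem_sigma, Finset.mem_offDiag, mem_nb] at hp hq
        have ha : a = a' := congrArg Prod.fst heq
        have hb : b = b' := congrArg Prod.snd heq
        subst ha; subst hb
        have : v = w := by
          by_contra hvw
          exact hcn a b v w hp.2.2.2 hvw hp.2.1 hp.2.2.1 hq.2.1 hq.2.2.1
        subst this; rfl
    have hcardS : S.card = ∑ v ∈ suppF G, (nb G v).offDiag.card := Finset.card_sigma _ _
    have hper : ∀ v ∈ suppF G, N * N ≤ 4 * (nb G v).offDiag.card + 1 := by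
      intro v hv
      have hd := hsmall v hv
      set d := (nb G v).card with hddef
      have hod : (nb G v).offDiag.card = d * d - d := Finset.offDiag_card _
      have hdd : d ≤ d * d := Nat.le_mul_of_pos_left d (by omega)
      have key : N * N + 4 * d ≤ 4 * (d * d) + 1 := by nlinarith [hd]
      omega
    have htot : N * (N * N) ≤ 4 * S.card + N := by
      calc N * (N * N) = ∑ _v ∈ suppF G, N * N := by rw [Finset.sum_const, smul_eq_mul]
        _ ≤ ∑ v ∈ suppF G, (4 * (nb G v).offDiag.card + 1) := Finset.sum_le_sum hper
        _ = 4 * S.card + N := by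
            rw [hcardS, Finset.mul_sum, Finset.sum_add_distrib, Finset.sum_const, smul_eq_mul, mul_one]
    have hOD : (suppF G).offDiag.card = N * N - N := Finset.offDiag_card _
    have hNN : N ≤ N * N := Nat.le_mul_of_pos_left N (by omega)
    have h2 : 4 * (N * N) ≤ N * (N * N) := Nat.mul_le_mul_right _ hN
    omega
end Dev3
section Dev4
variable {V : Type*} [Fintype V] [DecidableEq V]
variable {G : SimpleGraph V} [DecidableRel G.Adj] {χ : Sym2 V → ℕ}

lemma not_uniqAt {v u : V} (h : ¬ uniqAt G χ v u) :
    ∃ w, G.Adj v w ∧ w ≠ u ∧ col χ v w = col χ v u := by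
  rw [uniqAt] at h; push_neg at h; exact h

lemma big_double (v : V) : 2 * bigT G χ v ≤ (bigS G χ v).card := by
  rw [Finset.card_eq_sum_card_image (col χ v) (bigS G χ v), bigT]
  have h : ∀ c ∈ (bigS G χ v).image (col χ v),
      2 ≤ ((bigS G χ v).filter (fun a => col χ v a = c)).card := by
    intro c hc
    obtain ⟨z, hz, hzc⟩ := Finset.mem_image.1 hc
    have hznu : ¬ uniqAt G χ v z := (Finset.mem_filter.1 hz).2
    obtain ⟨w, hw_adj, hwz, hwcol⟩ := not_uniqAt hznu
    have hw : w ∈ bigS G χ v := by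
      rw [bigS, Finset.mem_filter]
      refine ⟨mem_nb.2 hw_adj, fun hq => ?_⟩
      exact hq z (mem_nb.1 (Finset.mem_filter.1 hz).1) (Ne.symm hwz) hwcol.symm
    have hsub : ({z, w} : Finset V) ⊆ (bigS G χ v).filter (fun a => col χ v a = c) := by
      intro x hx
      rcases Finset.mem_insert.1 hx with rfl | hx
      · exact Finset.mem_filter.2 ⟨hz, hzc⟩
      · rw [Finset.mem_singleton] at hx; subst hx
        exact Finset.mem_filter.2 ⟨hw, by rw [hwcol, hzc]⟩
    calc 2 = ({z, w} : Finset V).card := (Finset.card_pair (Ne.symm hwz)).symm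
      _ ≤ _ := Finset.card_le_card hsub
  calc 2 * ((bigS G χ v).image (col χ v)).card
      = ((bigS G χ v).image (col χ v)).card • 2 := by rw [smul_eq_mul, mul_comm]
    _ ≤ _ := Finset.card_nsmul_le_sum _ _ _ h

lemma caseB (hPC : ¬ HasPCC4 G χ)
    (hMin : ∀ a b, G.Adj a b → uniqAt G χ a b ∨ uniqAt G χ b a)
    {v₀ : V} (h2 : 2 ≤ bigT G χ v₀ + (buS G χ v₀).card) (hT : 1 ≤ bigT G χ v₀) :
    ∃ v ∈ suppF G, dcF G χ v + (sSet G χ v).card ≤ (suppF G).card := by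
  set N := (suppF G).card with hNdef
  -- the far end u of a big-class edge at v₀
  have hbigne : (bigS G χ v₀).Nonempty := by
    by_contra hne
    rw [Finset.not_nonempty_iff_eq_empty] at hne
    rw [bigT, hne] at hT; simp at hT
  obtain ⟨u, hu⟩ := hbigne
  have hu_adj : G.Adj v₀ u := mem_nb.1 (Finset.mem_filter.1 hu).1
  have hu_nu : ¬ uniqAt G χ v₀ u := (Finset.mem_filter.1 hu).2
  have hu_far : uniqAt G χ u v₀ := (hMin v₀ u hu_adj).resolve_left hu_nu
  -- a second far-unique neighbor y with a different color
  obtain ⟨y, hy_adj, hy_far, hcol⟩ :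
      ∃ y, G.Adj v₀ y ∧ uniqAt G χ y v₀ ∧ col χ v₀ y ≠ col χ v₀ u := by
    by_cases hbu : (buS G χ v₀).Nonempty
    · obtain ⟨y, hy⟩ := hbu
      rw [buS, Finset.mem_filter] at hy
      have hyadj := mem_nb.1 hy.1
      have huy : u ≠ y := fun h => hu_nu (h ▸ hy.2.1)
      exact ⟨y, hyadj, hy.2.2, fun h => hy.2.1 u hu_adj huy h.symm⟩
    · rw [Finset.not_nonempty_iff_eq_empty] at hbu
      rw [hbu] at h2; simp only [Finset.card_empty, add_zero] at h2
      obtain ⟨c, hc, hcne⟩ := Finset.exists_mem_ne (lt_of_lt_of_le one_lt_two h2)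
        (col χ v₀ u)
      obtain ⟨y, hy, hyc⟩ := Finset.mem_image.1 hc
      have hy_adj := mem_nb.1 (Finset.mem_filter.1 hy).1
      exact ⟨y, hy_adj, (hMin v₀ y hy_adj).resolve_left (Finset.mem_filter.1 hy).2,
        by rw [hyc]; exact hcne⟩
  have huy : u ≠ y := fun h => hcol (h ▸ rfl)
  -- twin lemma
  have htwin : ∀ x, G.Adj u x → G.Adj y x → x ≠ v₀ → col χ u x = col χ y x := by
    intro x hux hyx hxv
    by_contra hne
    refine hPC (mk4 huy (Ne.symm hxv) hu_adj.symm hy_adj hyx hux.symm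
      hcol.symm ?_ ?_ ?_)
    · exact fun h => hy_far x hyx hxv h.symm
    · rw [col_comm χ x y, col_comm χ x u]; exact fun h => hne h.symm
    · exact hu_far x hux hxv
  have hF2u : ∀ z, G.Adj u z → G.Adj y z → z ≠ v₀ → uniqAt G χ u z ∧ ¬ uniqAt G χ z u := by
    intro z huz hyz hzv
    have hcz : col χ z u = col χ z y := by
      rw [← col_comm χ u z, ← col_comm χ y z]; exact htwin z huz hyz hzv
    have hnzu : ¬ uniqAt G χ z u := fun h => h y hyz.symm huy.symm hcz.symm
    exact ⟨(hMin z u huz.symm).resolve_left hnzu, hnzu⟩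
  have hF2y : ∀ z, G.Adj y z → G.Adj u z → z ≠ v₀ → uniqAt G χ y z ∧ ¬ uniqAt G χ z y := by
    intro z hyz huz hzv
    have hcz : col χ z y = col χ z u := by
      rw [← col_comm χ u z, ← col_comm χ y z]; exact (htwin z huz hyz hzv).symm
    have hnzy : ¬ uniqAt G χ z y := fun h => h u huz.symm huy hcz.symm
    exact ⟨(hMin z y hyz.symm).resolve_left hnzy, hnzy⟩
  -- containments
  have hbigSu : bigS G χ u ⊆ nb G u \ nb G y := by
    intro z hz
    rw [bigS, Finset.mem_filter] at hz
    refine Finset.mem_sdiff.2 ⟨hz.1, fun hzy => ?_⟩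
    have hadj_uz := mem_nb.1 hz.1
    have hadj_yz := mem_nb.1 hzy
    by_cases hzv : z = v₀
    · subst hzv; exact hz.2 hu_far
    · exact hz.2 (hF2u z hadj_uz hadj_yz hzv).1
  have hbuSu : buS G χ u ⊆ nb G u \ nb G y := by
    intro z hz
    rw [buS, Finset.mem_filter] at hz
    refine Finset.mem_sdiff.2 ⟨hz.1, fun hzy => ?_⟩
    have hadj_uz := mem_nb.1 hz.1
    have hadj_yz := mem_nb.1 hzy
    by_cases hzv : z = v₀
    · subst hzv; exact hu_nu hz.2.2
    · exact (hF2u z hadj_uz hadj_yz hzv).2 hz.2.2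
  have hbigSy : bigS G χ y ⊆ nb G y \ nb G u := by
    intro z hz
    rw [bigS, Finset.mem_filter] at hz
    refine Finset.mem_sdiff.2 ⟨hz.1, fun hzu => ?_⟩
    have hadj_yz := mem_nb.1 hz.1
    have hadj_uz := mem_nb.1 hzu
    by_cases hzv : z = v₀
    · subst hzv; exact hz.2 hy_far
    · exact hz.2 (hF2y z hadj_yz hadj_uz hzv).1
  have hbuSy : buS G χ y ⊆ (nb G y \ nb G u) ∪ {v₀} := by
    intro z hz
    rw [buS, Finset.mem_filter] at hz
    by_cases hzv : z = v₀
    · exact Finset.mem_union_right _ (Finset.mem_singleton.2 hzv)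
    · refine Finset.mem_union_left _ (Finset.mem_sdiff.2 ⟨hz.1, fun hzu => ?_⟩)
      exact (hF2y z (mem_nb.1 hz.1) (mem_nb.1 hzu) hzv).2 hz.2.2
  -- disjointness of bigS and buS
  have hdisj : ∀ v : V, Disjoint (bigS G χ v) (buS G χ v) := by
    intro v
    rw [Finset.disjoint_left]
    intro z hz1 hz2
    exact (Finset.mem_filter.1 hz1).2 (Finset.mem_filter.1 hz2).2.1
  -- bounds
  have hboundU : dcF G χ u + (sSet G χ u).card ≤ (nb G u).card + (nb G u \ nb G y).card := by
    refine le_trans (drop_bound u) (Nat.add_le_add_left ?_ _)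
    have := big_double (G := G) (χ := χ) u
    have hun : (bigS G χ u ∪ buS G χ u).card = (bigS G χ u).card + (buS G χ u).card :=
      Finset.card_union_of_disjoint (hdisj u)
    have hsub : (bigS G χ u ∪ buS G χ u).card ≤ (nb G u \ nb G y).card :=
      Finset.card_le_card (Finset.union_subset hbigSu hbuSu)
    omega
  have hboundY : dcF G χ y + (sSet G χ y).card ≤ (nb G y).card + ((nb G y \ nb G u).card + 1) := by
    refine le_trans (drop_bound y) (Nat.add_le_add_left ?_ _)
    have := big_double (G := G) (χ := χ) y
    have hun : (bigS G χ y ∪ buS G χ y).card = (bigS G χ y).card + (buS G χ y).card :=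
      Finset.card_union_of_disjoint (hdisj y)
    have hsub : (bigS G χ y ∪ buS G χ y).card ≤ (nb G y \ nb G u).card + 1 := by
      refine le_trans (Finset.card_le_card (Finset.union_subset
        (le_trans hbigSy (Finset.subset_union_left) : bigS G χ y ⊆ _) hbuSy)) ?_
      exact le_trans (Finset.card_union_le _ _) (by simp)
    omega
  -- assembling
  have hUsupp : u ∈ suppF G := mem_suppF.2 ⟨v₀, hu_adj.symm⟩
  have hYsupp : y ∈ suppF G := mem_suppF.2 ⟨v₀, hy_adj.symm⟩
  by_contra hcon
  push_neg at hcon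
  have hU' := hcon u hUsupp
  have hY' := hcon y hYsupp
  have hc1 : (nb G u \ nb G y).card + (nb G y).card = (nb G u ∪ nb G y).card :=
    Finset.card_sdiff_add_card _ _
  have hc2 : (nb G y \ nb G u).card + (nb G u).card = (nb G y ∪ nb G u).card :=
    Finset.card_sdiff_add_card _ _
  have hc3 : nb G u ∪ nb G y = nb G y ∪ nb G u := Finset.union_comm _ _
  have hc4 : (nb G u ∪ nb G y).card ≤ N := by
    refine Finset.card_le_card (Finset.union_subset nb_subset_suppF nb_subset_suppF)
  rw [hc3] at hc1 hc4
  omega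
end Dev4
section Dev5
variable {V : Type*} [Fintype V] [DecidableEq V]

lemma good_vertex {G : SimpleGraph V} [DecidableRel G.Adj] {χ : Sym2 V → ℕ}
    (hPC : ¬ HasPCC4 G χ)
    (hMin : ∀ a b, G.Adj a b → uniqAt G χ a b ∨ uniqAt G χ b a)
    (hN : 4 ≤ (suppF G).card) :
    ∃ v ∈ suppF G, dcF G χ v + (sSet G χ v).card ≤ (suppF G).card := by
  by_cases hA : ∃ v ∈ suppF G, bigT G χ v + (buS G χ v).card ≤ 1
  · obtain ⟨v, hv, hv1⟩ := hA
    refine ⟨v, hv, ?_⟩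
    have h1 := drop_bound (G := G) (χ := χ) v
    have h2 := nb_card_le (G := G) hv
    omega
  · push_neg at hA
    by_cases hB : ∃ v₀ ∈ suppF G, 1 ≤ bigT G χ v₀
    · obtain ⟨v₀, hv₀, hT⟩ := hB
      exact caseB hPC hMin (hA v₀ hv₀) hT
    · push_neg at hB
      refine caseC hPC (fun a b hab => ?_) hN
      have ha : a ∈ suppF G := mem_suppF.2 ⟨b, hab⟩
      have hT0 : bigT G χ a = 0 := by
        have := hB a ha; omega
      by_contra hnu
      have hb : b ∈ bigS G χ a := Finset.mem_filter.2 ⟨mem_nb.2 hab, hnu⟩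
      rw [bigT, Finset.card_eq_zero, Finset.image_eq_empty] at hT0
      rw [hT0] at hb
      exact absurd hb (Finset.notMem_empty b)

lemma key (χ : Sym2 V → ℕ) :
    ∀ (m : ℕ) (G : SimpleGraph V) [DecidableRel G.Adj], G.edgeSet.ncard ≤ m →
      ¬ HasPCC4 G χ → 2 * σF G χ ≤ (suppF G).card * ((suppF G).card + 1) := by
  intro m
  induction m with
  | zero =>
    intro G _ hm _
    have hE : G.edgeSet = ∅ := (Set.ncard_eq_zero (Set.toFinite _)).1 (Nat.le_zero.1 hm)
    have hσ : σF G χ = 0 := by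
      apply Finset.sum_eq_zero
      intro v _
      have hnb : nb G v = ∅ := by
        ext u
        simp only [mem_nb, Finset.notMem_empty, iff_false]
        intro hadj
        exact absurd (G.mem_edgeSet.2 hadj) (by rw [hE]; exact Set.notMem_empty _)
      rw [dcF, hnb]; simp
    rw [hσ]; simp
  | succ m ih =>
    intro G instG hm hPC
    set N := (suppF G).card with hNdef
    by_cases hN3 : N ≤ 3
    · -- small case
      have hσ : σF G χ ≤ N * (N - 1) := by
        have hzero : ∀ v ∈ Finset.univ, v ∉ suppF G → dcF G χ v = 0 := by
          intro v _ hv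
          rw [dcF]
          have : nb G v = ∅ := by
            rw [← Finset.not_nonempty_iff_eq_empty]
            intro hne
            exact hv (by simp [suppF, hne])
          rw [this]; simp
        have hsplit : σF G χ = ∑ v ∈ suppF G, dcF G χ v :=
          (Finset.sum_subset (Finset.subset_univ _) hzero).symm
        rw [hsplit]
        calc ∑ v ∈ suppF G, dcF G χ v ≤ ∑ _v ∈ suppF G, (N - 1) := by
              refine Finset.sum_le_sum (fun v hv => ?_)
              have h1 := dcF_le_card G χ v
              have h2 := nb_card_le (G := G) hv
              omega
          _ = N * (N - 1) := by rw [Finset.sum_const, smul_eq_mul]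
      interval_cases N <;> omega
    · push_neg at hN3
      by_cases hE : ∃ x y, G.Adj x y ∧ ¬ uniqAt G χ x y ∧ ¬ uniqAt G χ y x
      · -- delete a doubly non-unique edge
        obtain ⟨x, y, hxy, hnxy, hnyx⟩ := hE
        set G' := G.deleteEdges {s(x, y)} with hG'def
        haveI : DecidableRel G'.Adj := Classical.decRel _
        have hadj' : ∀ a b, G'.Adj a b ↔ G.Adj a b ∧ s(a, b) ≠ s(x, y) := by
          intro a b
          rw [hG'def, SimpleGraph.deleteEdges_adj]
          simp
        have hmono : ∀ a b, G'.Adj a b → G.Adj a b := fun a b h => ((hadj' a b).1 h).1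
        have hPC' : ¬ HasPCC4 G' χ := by
          intro ⟨a, b, c, d, h1, h2, h3, h4, h5, h6, hr⟩
          exact hPC ⟨a, b, c, d, h1, h2, hmono _ _ h3, hmono _ _ h4, hmono _ _ h5,
            hmono _ _ h6, hr⟩
        have hecard : G'.edgeSet.ncard ≤ m := by
          have hsub : G'.edgeSet ⊂ G.edgeSet := by
            rw [hG'def, SimpleGraph.edgeSet_deleteEdges]
            constructor
            · exact Set.diff_subset
            · intro hsup
              have : s(x, y) ∈ G.edgeSet \ {s(x, y)} := hsup (G.mem_edgeSet.2 hxy)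
              simp at this
          have := Set.ncard_lt_ncard hsub (Set.toFinite _)
          omega
        have hσeq : σF G' χ = σF G χ := by
          apply Finset.sum_congr rfl
          intro v _
          rw [dcF, dcF]
          congr 1
          apply Finset.Subset.antisymm
          · apply Finset.image_subset_image
            intro u hu
            exact mem_nb.2 (hmono _ _ (mem_nb.1 hu))
          · intro c hc
            obtain ⟨u, hu, huc⟩ := Finset.mem_image.1 hc
            have hadj_vu : G.Adj v u := mem_nb.1 hu
            by_cases hne : s(v, u) = s(x, y)
            · rcases Sym2.eq_iff.1 hne with ⟨hvx, huy⟩ | ⟨hvy, hux⟩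
              · subst hvx; subst huy
                obtain ⟨w, hw_adj, hwy, hwcol⟩ := not_uniqAt hnxy
                refine Finset.mem_image.2 ⟨w, mem_nb.2 ((hadj' v w).2 ⟨hw_adj, ?_⟩), by
                  rw [← huc]; exact hwcol⟩
                intro hs
                rcases Sym2.eq_iff.1 hs with ⟨_, h2⟩ | ⟨h2, _⟩
                · exact hwy h2
                · exact (G.ne_of_adj hadj_vu) h2
              · subst hvy; subst hux
                obtain ⟨w, hw_adj, hwx, hwcol⟩ := not_uniqAt hnyx
                refine Finset.mem_image.2 ⟨w, mem_nb.2 ((hadj' v w).2 ⟨hw_adj, ?_⟩), by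
                  rw [← huc]; exact hwcol⟩
                intro hs
                rcases Sym2.eq_iff.1 hs with ⟨h2, _⟩ | ⟨_, h2⟩
                · exact (G.ne_of_adj hadj_vu) h2
                · exact hwx h2
            · exact Finset.mem_image.2 ⟨u, mem_nb.2 ((hadj' v u).2 ⟨hadj_vu, hne⟩), huc⟩
        have hsupp' : suppF G' ⊆ suppF G := by
          intro v hv
          obtain ⟨u, hu⟩ := mem_suppF.1 hv
          exact mem_suppF.2 ⟨u, hmono _ _ hu⟩
        have hNle : (suppF G').card ≤ N := Finset.card_le_card hsupp'
        calc 2 * σF G χ = 2 * σF G' χ := by rw [hσeq]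
          _ ≤ (suppF G').card * ((suppF G').card + 1) := ih G' hecard hPC'
          _ ≤ N * (N + 1) := Nat.mul_le_mul hNle (by omega)
      · -- minimal graph: use the good vertex
        push_neg at hE
        have hMin : ∀ a b, G.Adj a b → uniqAt G χ a b ∨ uniqAt G χ b a := by
          intro a b hab
          by_contra hc
          push_neg at hc
          exact hc.2 (hE a b hab hc.1)
        obtain ⟨v, hvsupp, hvdrop⟩ := good_vertex hPC hMin (by omega)
        set G' := G.deleteEdges (G.incidenceSet v) with hG'def
        haveI : DecidableRel G'.Adj := Classical.decRel _
        have hadj' : ∀ a b, G'.Adj a b ↔ G.Adj a b ∧ a ≠ v ∧ b ≠ v := by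
          intro a b
          rw [hG'def, SimpleGraph.deleteEdges_adj, SimpleGraph.mk'_mem_incidenceSet_iff]
          constructor
          · rintro ⟨h1, h2⟩
            push_neg at h2
            exact ⟨h1, fun hav => ((h2 h1).1 hav.symm), fun hbv => ((h2 h1).2 hbv.symm)⟩
          · rintro ⟨h1, h2, h3⟩
            exact ⟨h1, fun hc => by
              rcases hc.2 with h | h
              exacts [h2 h.symm, h3 h.symm]⟩
        have hmono : ∀ a b, G'.Adj a b → G.Adj a b := fun a b h => ((hadj' a b).1 h).1
        have hPC' : ¬ HasPCC4 G' χ := by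
          intro ⟨a, b, c, d, h1, h2, h3, h4, h5, h6, hr⟩
          exact hPC ⟨a, b, c, d, h1, h2, hmono _ _ h3, hmono _ _ h4, hmono _ _ h5,
            hmono _ _ h6, hr⟩
        obtain ⟨w, hvw⟩ := mem_suppF.1 hvsupp
        have hecard : G'.edgeSet.ncard ≤ m := by
          have hsub : G'.edgeSet ⊂ G.edgeSet := by
            constructor
            · intro e he
              rw [hG'def, SimpleGraph.edgeSet_deleteEdges] at he
              exact he.1
            · intro hsup
              have h1 : s(v, w) ∈ G.edgeSet := G.mem_edgeSet.2 hvw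
              have h2 := hsup h1
              rw [hG'def, SimpleGraph.edgeSet_deleteEdges] at h2
              exact h2.2 (G.mk'_mem_incidenceSet_iff.2 ⟨hvw, Or.inl rfl⟩)
          have := Set.ncard_lt_ncard hsub (Set.toFinite _)
          omega
        have hsupp' : suppF G' ⊆ (suppF G).erase v := by
          intro u hu
          obtain ⟨z, hz⟩ := mem_suppF.1 hu
          rw [hadj'] at hz
          exact Finset.mem_erase.2 ⟨hz.2.1, mem_suppF.2 ⟨z, hz.1⟩⟩
        have hNle : (suppF G').card + 1 ≤ N := by
          have h1 : (suppF G').card ≤ ((suppF G).erase v).card := Finset.card_le_card hsupp'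
          have h2 : ((suppF G).erase v).card + 1 = N := by
            rw [Finset.card_erase_of_mem hvsupp]
            exact Nat.succ_pred_eq_of_pos (Finset.card_pos.2 ⟨v, hvsupp⟩)
          omega
        -- per-vertex inequality
        have hper : ∀ u ∈ Finset.univ.erase v,
            dcF G χ u ≤ dcF G' χ u + (if u ∈ sSet G χ v then 1 else 0) := by
          intro u hu
          have huv : u ≠ v := (Finset.mem_erase.1 hu).1
          by_cases hadj_uv : G.Adj u v
          · by_cases huniq : uniqAt G χ u v
            · -- u sees v's color uniquely : may lose one color
              have hmem : u ∈ sSet G χ v :=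
                Finset.mem_filter.2 ⟨mem_nb.2 hadj_uv.symm, huniq⟩
              rw [if_pos hmem]
              have hsub : (nb G u).image (col χ u) ⊆
                  insert (col χ u v) ((nb G' u).image (col χ u)) := by
                intro c hc
                obtain ⟨z, hz, hzc⟩ := Finset.mem_image.1 hc
                by_cases hzv : z = v
                · subst hzv; exact Finset.mem_insert.2 (Or.inl hzc.symm)
                · refine Finset.mem_insert.2 (Or.inr (Finset.mem_image.2 ⟨z, ?_, hzc⟩))
                  exact mem_nb.2 ((hadj' u z).2 ⟨mem_nb.1 hz, huv, hzv⟩)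
              calc dcF G χ u ≤ (insert (col χ u v) ((nb G' u).image (col χ u))).card :=
                    Finset.card_le_card hsub
                _ ≤ dcF G' χ u + 1 := Finset.card_insert_le _ _
            · -- color not unique: no loss
              have hge : dcF G χ u ≤ dcF G' χ u := by
                apply Finset.card_le_card
                intro c hc
                obtain ⟨z, hz, hzc⟩ := Finset.mem_image.1 hc
                by_cases hzv : z = v
                · subst hzv
                  obtain ⟨w', hw'_adj, hw'v, hw'col⟩ := not_uniqAt huniq
                  refine Finset.mem_image.2 ⟨w', ?_, by rw [← hzc]; exact hw'col⟩
                  exact mem_nb.2 ((hadj' u w').2 ⟨hw'_adj, huv, hw'v⟩)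
                · refine Finset.mem_image.2 ⟨z, ?_, hzc⟩
                  exact mem_nb.2 ((hadj' u z).2 ⟨mem_nb.1 hz, huv, hzv⟩)
              omega
          · -- not adjacent to v : neighborhood unchanged
            have heq : nb G' u = nb G u := by
              ext z
              rw [mem_nb, mem_nb, hadj']
              constructor
              · exact fun h => h.1
              · intro h
                refine ⟨h, huv, fun hzv => ?_⟩
                subst hzv; exact hadj_uv h
            have : dcF G' χ u = dcF G χ u := by rw [dcF, dcF, heq]
            omega
        have hvzero : dcF G' χ v = 0 := by
          rw [dcF]
          have : nb G' v = ∅ := by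
            ext z
            simp only [mem_nb, hadj', Finset.notMem_empty, iff_false]
            rintro ⟨_, hvv, _⟩
            exact hvv rfl
          rw [this]; simp
        -- sum up
        have hsum : σF G χ ≤ dcF G χ v + (σF G' χ + (sSet G χ v).card) := by
          rw [σF, ← Finset.add_sum_erase _ _ (Finset.mem_univ v)]
          have h1 : ∑ u ∈ Finset.univ.erase v, dcF G χ u ≤
              ∑ u ∈ Finset.univ.erase v, (dcF G' χ u + (if u ∈ sSet G χ v then 1 else 0)) :=
            Finset.sum_le_sum hper
          have h2 : ∑ u ∈ Finset.univ.erase v,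
              (dcF G' χ u + (if u ∈ sSet G χ v then 1 else 0)) =
              (∑ u ∈ Finset.univ.erase v, dcF G' χ u) +
              ∑ u ∈ Finset.univ.erase v, (if u ∈ sSet G χ v then 1 else 0) :=
            Finset.sum_add_distrib
          have h3 : ∑ u ∈ Finset.univ.erase v, dcF G' χ u = σF G' χ := by
            rw [σF, ← Finset.add_sum_erase _ _ (Finset.mem_univ v), hvzero, zero_add]
          have h4 : (∑ u ∈ Finset.univ.erase v, (if u ∈ sSet G χ v then 1 else 0)) =
              (sSet G χ v).card := by
            rw [Finset.sum_boole]
            norm_cast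
            congr 1
            apply Finset.Subset.antisymm
            · intro z hz
              exact (Finset.mem_filter.1 hz).2
            · intro z hz
              refine Finset.mem_filter.2 ⟨Finset.mem_erase.2 ⟨?_, Finset.mem_univ z⟩, hz⟩
              intro hzv
              subst hzv
              exact G.irrefl (mem_nb.1 (Finset.mem_filter.1 hz).1)
          omega
        have hIH := ih G' hecard hPC'
        have hfin : (suppF G').card * ((suppF G').card + 1) ≤ (N - 1) * N := by
          exact Nat.mul_le_mul (by omega) (by omega)
        have e1 : (N - 1) * N = N * N - 1 * N := Nat.sub_mul _ _ _
        have e2 : N * (N + 1) = N * N + N := Nat.mul_succ _ _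
        have e3 : N ≤ N * N := Nat.le_mul_of_pos_left N (by omega)
        omega
end Dev5

/-- If the color degree sum satisfies `∑ d^c(v) ≥ n(n+1)/2 + 1` for an edge-colored
graph of order `n ≥ 4`, then `G` contains a properly colored `C₄`. -/
theorem stmt_5 {V : Type*} [Fintype V] (hn : 4 ≤ Fintype.card V)
    (G : SimpleGraph V) (χ : Sym2 V → ℕ)
    (h : Fintype.card V * (Fintype.card V + 1) / 2 + 1 ≤ ∑ v : V, colorDeg G χ v) :
    HasPCC4 G χ := by
  by_contra hPC
  letI : DecidableEq V := Classical.decEq V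
  letI : DecidableRel G.Adj := Classical.decRel _
  have hkey := key χ G.edgeSet.ncard G le_rfl hPC
  have hσ : σF G χ = ∑ v : V, colorDeg G χ v :=
    Finset.sum_congr rfl (fun v _ => (colorDeg_eq G χ v).symm)
  have hNn : (suppF G).card ≤ Fintype.card V := Finset.card_le_univ _
  have h2 : (suppF G).card * ((suppF G).card + 1) ≤ Fintype.card V * (Fintype.card V + 1) :=
    Nat.mul_le_mul hNn (by omega)
  have heven : 2 * (Fintype.card V * (Fintype.card V + 1) / 2) =
      Fintype.card V * (Fintype.card V + 1) :=
    Nat.two_mul_div_two_of_even (Nat.even_mul_succ_self _)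
  rw [← hσ] at h
  omega
end

section
/- Let G be an edge-colored graph. For a vertex v, define the colored saturated degree d^s(v) = c(G) - c(G - v), the number of colors that disappear when v is deleted. Then the sum over all vertices of d^s(v) is at most 2·c(G), with equality if and only if G is rainbow (all edges have pairwise distinct colors). -/
open SimpleGraph Finset

/-- Colored saturated degree: the number of colors that disappear when `v` is deleted. -/
noncomputable def satDeg {V : Type*} (G : SimpleGraph V) (χ : Sym2 V → ℕ) (v : V) : ℕ :=
  cCount G χ - (χ '' {e ∈ G.edgeSet | v ∉ e}).ncard

/-!
A color `c` disappears from `G - v` exactly when `v` lies on every edge of color `c`. Counting the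
pairs (vertex, color) with this property in two ways, `∑ v, d^s(v)` is the sum over the colors of
the number of vertices common to all edges of that color. This is at most 2, the two ends of one
such edge, and it equals 2 exactly when the color is used on a single edge: two distinct edges
share at most one vertex.
-/

namespace SimpleGraph

def CoversColor {V α : Type*} (G : SimpleGraph V) (χ : Sym2 V → α) (v : V) (c : α) : Prop :=
  ∀ e ∈ G.edgeSet, χ e = c → v ∈ e

open scoped Classical

variable {V : Type*} [Fintype V] (G : SimpleGraph V)

section

variable {α : Type*} (χ : Sym2 V → α)

lemma card_filter_coversColor_le_two {e : Sym2 V} (he : e ∈ G.edgeSet) :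
    #{v | G.CoversColor χ v (χ e)} ≤ 2 := by
  induction e using Sym2.ind with
  | _ a b =>
    calc #{v | G.CoversColor χ v (χ s(a, b))} ≤ #{a, b} := by
          refine card_le_card fun v hv ↦ ?_
          simpa using (mem_filter.mp hv).2 _ he rfl
      _ ≤ 2 := card_le_two

lemma card_filter_coversColor_eq_two_iff {e : Sym2 V} (he : e ∈ G.edgeSet) :
    #{v | G.CoversColor χ v (χ e)} = 2 ↔ ∀ e' ∈ G.edgeSet, χ e' = χ e → e' = e := by
  constructor
  · intro h2 e' he' hχ
    by_contra hne
    suffices #{v | G.CoversColor χ v (χ e)} ≤ 1 by omega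
    refine card_le_one.mpr fun v hv w hw ↦ by_contra fun hvw ↦ hne ?_
    simp only [mem_filter, mem_univ, true_and] at hv hw
    rw [(Sym2.mem_and_mem_iff hvw).mp ⟨hv e' he' hχ, hw e' he' hχ⟩,
      (Sym2.mem_and_mem_iff hvw).mp ⟨hv e he rfl, hw e he rfl⟩]
  · intro hinj
    induction e using Sym2.ind with
    | _ a b =>
      have hab : a ≠ b := G.ne_of_adj he
      suffices ({v | G.CoversColor χ v (χ s(a, b))} : Finset V) = {a, b} by
        rw [this, card_pair hab]
      ext v
      simp only [mem_filter, mem_univ, true_and, mem_insert, mem_singleton]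
      refine ⟨fun hv ↦ by simpa using hv _ he rfl, ?_⟩
      rintro hv e' he' hχ
      rw [hinj e' he' hχ]
      rcases hv with rfl | rfl <;> simp

end

variable (χ : Sym2 V → ℕ)

lemma cCount_eq_card_image : cCount G χ = #(G.edgeFinset.image χ) := by
  rw [cCount, ← coe_edgeFinset, ← coe_image, Set.ncard_coe_finset]

lemma satDeg_eq_card_filter_coversColor (v : V) :
    satDeg G χ v = #{c ∈ G.edgeFinset.image χ | G.CoversColor χ v c} := by
  have hkept : χ '' {e ∈ G.edgeSet | v ∉ e} = ↑({e ∈ G.edgeFinset | v ∉ e}.image χ) := by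
    simp
  have hgone : ({c ∈ G.edgeFinset.image χ | G.CoversColor χ v c} : Finset ℕ)
      = G.edgeFinset.image χ \ {e ∈ G.edgeFinset | v ∉ e}.image χ := by
    ext c
    rw [mem_filter]
    simp only [mem_sdiff, mem_filter, mem_image, mem_edgeFinset, not_exists, not_and, CoversColor]
    exact and_congr_right fun _ ↦ forall_congr' fun e ↦ by tauto
  rw [satDeg, cCount_eq_card_image, hkept, Set.ncard_coe_finset, hgone,
    card_sdiff_of_subset (image_subset_image (filter_subset _ _))]

lemma sum_satDeg_eq_sum_card_coversColor :
    ∑ v, satDeg G χ v = ∑ c ∈ G.edgeFinset.image χ, #{v | G.CoversColor χ v c} := by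
  simp_rw [satDeg_eq_card_filter_coversColor]
  exact sum_card_bipartiteAbove_eq_sum_card_bipartiteBelow _

end SimpleGraph

/-- `∑ v, d^s(v) ≤ 2 c(G)`, with equality iff `G` is rainbow. -/
theorem stmt_7 {V : Type*} [Fintype V] (G : SimpleGraph V) (χ : Sym2 V → ℕ) :
    (∑ v : V, satDeg G χ v ≤ 2 * cCount G χ) ∧
      ((∑ v : V, satDeg G χ v = 2 * cCount G χ) ↔ Set.InjOn χ G.edgeSet) := by
  classical
  have hle : ∀ c ∈ G.edgeFinset.image χ, #{v | G.CoversColor χ v c} ≤ 2 := by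
    simpa only [forall_mem_image, mem_edgeFinset] using
      fun e he ↦ G.card_filter_coversColor_le_two χ he
  have htwo : 2 * cCount G χ = ∑ _c ∈ G.edgeFinset.image χ, 2 := by
    rw [cCount_eq_card_image, sum_const, smul_eq_mul, mul_comm]
  rw [sum_satDeg_eq_sum_card_coversColor, htwo]
  refine ⟨sum_le_sum hle, (sum_eq_sum_iff_of_le hle).trans ?_⟩
  simp only [forall_mem_image, mem_edgeFinset]
  exact ⟨fun h e he e' he' hχ ↦ (G.card_filter_coversColor_eq_two_iff χ he').mp (h he') e he hχ,
    fun h e he ↦ (G.card_filter_coversColor_eq_two_iff χ he).mpr fun e' he' hχ ↦ h he' he hχ⟩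
end

section
/- Let f : ℕ → ℕ and let H be a fixed graph. Suppose that for every edge-colored graph G on n vertices, e(G) + c(G) ≥ f(n) implies G contains a properly colored copy of H. Then for every edge-colored graph G on n vertices, Σ_v d^c(v) ≥ f(n) also implies G contains a properly colored copy of H. -/
open SimpleGraph Finset

/-- `G` (with coloring `χ`) contains a properly colored copy of `H`. -/
def ContainsPCCopy {V W : Type*} (G : SimpleGraph V) (χ : Sym2 V → ℕ)
    (H : SimpleGraph W) : Prop :=
  ∃ f : W ↪ V, (∀ a b : W, H.Adj a b → G.Adj (f a) (f b)) ∧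
    ∀ a b c : W, H.Adj a b → H.Adj b c → a ≠ c → χ s(f a, f b) ≠ χ s(f b, f c)


open scoped Classical

section Aux

private lemma exists_closer {V : Type*} (Hg : SimpleGraph V) {r v : V}
    (h : Hg.Reachable v r) (hne : v ≠ r) :
    ∃ u, Hg.Adj v u ∧ Hg.dist r u < Hg.dist r v := by
  obtain ⟨p, hp⟩ := h.exists_walk_length_eq_dist
  cases p with
  | nil => exact absurd rfl hne
  | @cons _ u _ hadj q =>
      refine ⟨u, hadj, ?_⟩
      rw [Hg.dist_comm (u := r) (v := u), Hg.dist_comm (u := r) (v := v)]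
      calc Hg.dist u r ≤ q.length := dist_le q
        _ < q.length + 1 := Nat.lt_succ_self _
        _ = Hg.dist v r := by rw [← hp]; simp [SimpleGraph.Walk.length_cons]

variable {n : ℕ} (G : SimpleGraph (Fin n)) (χ : Sym2 (Fin n) → ℕ)

private def colorG (c : ℕ) : SimpleGraph (Fin n) where
  Adj a b := G.Adj a b ∧ χ s(a, b) = c
  symm := by
    refine ⟨?_⟩; rintro a b ⟨h1, h2⟩
    exact ⟨h1.symm, by rwa [Sym2.eq_swap]⟩
  loopless := ⟨fun a h => G.loopless.irrefl a h.1⟩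

private lemma repset_nonempty (v : Fin n) (c : ℕ) :
    (Finset.univ.filter fun u => (colorG G χ c).Reachable v u).Nonempty :=
  ⟨v, Finset.mem_filter.2 ⟨Finset.mem_univ v, Reachable.refl v⟩⟩

private noncomputable def rep (v : Fin n) (c : ℕ) : Fin n :=
  (Finset.univ.filter fun u => (colorG G χ c).Reachable v u).min'
    (repset_nonempty G χ v c)

private lemma rep_reachable (v : Fin n) (c : ℕ) :
    (colorG G χ c).Reachable v (rep G χ v c) :=
  (Finset.mem_filter.1 (Finset.min'_mem _ _)).2

private lemma rep_eq_of_reachable {a b : Fin n} {c : ℕ}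
    (h : (colorG G χ c).Reachable a b) : rep G χ a c = rep G χ b c := by
  apply le_antisymm
  · exact Finset.min'_le _ _ (Finset.mem_filter.2
      ⟨Finset.mem_univ _, h.trans (rep_reachable G χ b c)⟩)
  · exact Finset.min'_le _ _ (Finset.mem_filter.2
      ⟨Finset.mem_univ _, h.symm.trans (rep_reachable G χ a c)⟩)

private noncomputable def parent (v : Fin n) (c : ℕ) : Fin n :=
  if h : v = rep G χ v c then v
  else Classical.choose (exists_closer (colorG G χ c) (rep_reachable G χ v c) h)

private lemma parent_spec {v : Fin n} {c : ℕ} (h : v ≠ rep G χ v c) :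
    (colorG G χ c).Adj v (parent G χ v c) ∧
      (colorG G χ c).dist (rep G χ v c) (parent G χ v c)
        < (colorG G χ c).dist (rep G χ v c) v := by
  rw [parent, dif_neg h]
  exact Classical.choose_spec (exists_closer (colorG G χ c) (rep_reachable G χ v c) h)

private noncomputable def recolor : Sym2 (Fin n) → ℕ :=
  Sym2.lift ⟨fun a b => Nat.pair (χ s(a, b))
      (min ((rep G χ a (χ s(a, b))) : ℕ) ((rep G χ b (χ s(a, b))) : ℕ)), by
    intro a b
    dsimp only
    rw [Sym2.eq_swap, min_comm]⟩

private lemma recolor_edge {a b : Fin n} (h : G.Adj a b) :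
    recolor G χ s(a, b) = Nat.pair (χ s(a, b)) ((rep G χ a (χ s(a, b))) : ℕ) := by
  have hr : rep G χ a (χ s(a, b)) = rep G χ b (χ s(a, b)) :=
    rep_eq_of_reachable G χ (SimpleGraph.Adj.reachable (⟨h, rfl⟩ :
      (colorG G χ (χ s(a, b))).Adj a b))
  rw [recolor, Sym2.lift_mk]
  dsimp only
  rw [← hr, min_self]

end Aux

/-- If `e(G)+c(G) ≥ f(n)` forces a properly colored copy of `H` in every edge-colored
graph on `n` vertices, then so does `∑ v, d^c(v) ≥ f(n)`. -/
theorem stmt_9 {W : Type*} [Fintype W] (H : SimpleGraph W) (f : ℕ → ℕ)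
    (hA : ∀ (n : ℕ) (G : SimpleGraph (Fin n)) (χ : Sym2 (Fin n) → ℕ),
      f n ≤ eCount G + cCount G χ → ContainsPCCopy G χ H) :
    ∀ (n : ℕ) (G : SimpleGraph (Fin n)) (χ : Sym2 (Fin n) → ℕ),
      f n ≤ ∑ v : Fin n, colorDeg G χ v → ContainsPCCopy G χ H := by
  intro n G χ hsum
  classical
  set χ' := recolor G χ with hχ'
  set E : Finset (Sym2 (Fin n)) := Finset.univ.filter (· ∈ G.edgeSet) with hE
  have hEcoe : (E : Set (Sym2 (Fin n))) = G.edgeSet := by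
    ext e; simp [hE]
  have hEmem : ∀ e, e ∈ E ↔ e ∈ G.edgeSet := by
    intro e; simp [hE]
  have heC : eCount G = E.card := by
    rw [eCount, ← hEcoe, Set.ncard_coe_finset]
  have hcC : cCount G χ' = (E.image χ').card := by
    rw [cCount, ← hEcoe, ← Finset.coe_image, Set.ncard_coe_finset]
  set pal : Fin n → Finset ℕ :=
    fun v => (Finset.univ.filter (G.Adj v)).image fun u => χ s(v, u) with hpal
  have hdeg : ∀ v, colorDeg G χ v = (pal v).card := by
    intro v
    rw [colorDeg, ← Set.ncard_coe_finset (pal v)]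
    congr 1
    rw [hpal]
    rw [Finset.coe_image]
    ext u
    simp [SimpleGraph.mem_neighborSet]
  have hpalmem : ∀ v c, c ∈ pal v ↔ ∃ u, G.Adj v u ∧ χ s(v, u) = c := by
    intro v c; simp [hpal]
  have hsum' : ∑ v : Fin n, colorDeg G χ v = (Finset.univ.sigma fun v => pal v).card := by
    rw [Finset.card_sigma]
    exact Finset.sum_congr rfl fun v _ => hdeg v
  set Φ : (Σ _ : Fin n, ℕ) → Sym2 (Fin n) ⊕ ℕ := fun p =>
    if p.1 = rep G χ p.1 p.2 then Sum.inr (Nat.pair p.2 (p.1 : ℕ))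
    else Sum.inl s(p.1, parent G χ p.1 p.2) with hΦ
  have hinj : (Finset.univ.sigma fun v => pal v).card ≤ (E.disjSum (E.image χ')).card := by
    apply Finset.card_le_card_of_injOn Φ
    · rintro ⟨v, c⟩ hv
      obtain ⟨u, hu, huc⟩ := (hpalmem v c).1 (Finset.mem_sigma.1 hv).2
      by_cases hvr : v = rep G χ v c
      · rw [hΦ]
        simp only [if_pos hvr]
        rw [Finset.mem_coe, Finset.inr_mem_disjSum]
        refine Finset.mem_image.2 ⟨s(v, u), (hEmem _).2 (G.mem_edgeSet.2 hu), ?_⟩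
        rw [hχ', recolor_edge G χ hu, huc, ← hvr]
      · rw [hΦ]
        simp only [if_neg hvr]
        rw [Finset.mem_coe, Finset.inl_mem_disjSum]
        exact (hEmem _).2 (G.mem_edgeSet.2 ((parent_spec G χ hvr).1.1))
    · rintro ⟨v, c⟩ hv ⟨v', c'⟩ hv' heq
      simp only [hΦ] at heq
      by_cases h1 : v = rep G χ v c <;> by_cases h2 : v' = rep G χ v' c'
      · rw [if_pos h1, if_pos h2] at heq
        obtain ⟨hc, hv⟩ := Nat.pair_eq_pair.1 (Sum.inr.inj heq)
        subst hc
        have : v = v' := Fin.val_injective hv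
        subst this
        rfl
      · rw [if_pos h1, if_neg h2] at heq
        exact absurd heq (by simp)
      · rw [if_neg h1, if_pos h2] at heq
        exact absurd heq (by simp)
      · rw [if_neg h1, if_neg h2] at heq
        have hedge := Sum.inl.inj heq
        -- colors agree
        have hc1 : χ s(v, parent G χ v c) = c := (parent_spec G χ h1).1.2
        have hc2 : χ s(v', parent G χ v' c') = c' := (parent_spec G χ h2).1.2
        have hcc : c = c' := by rw [← hc1, ← hc2, hedge]
        subst hcc
        rcases Sym2.eq_iff.1 hedge with ⟨hvv, _⟩ | ⟨hvp, hpv⟩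
        · subst hvv; rfl
        · exfalso
          have hradj : rep G χ v c = rep G χ v' c := by
            apply rep_eq_of_reachable G χ
            have := (parent_spec G χ h1).1
            rw [hpv] at this
            exact this.reachable
          have d1 := (parent_spec G χ h1).2
          have d2 := (parent_spec G χ h2).2
          rw [hpv] at d1
          rw [← hvp, ← hradj] at d2
          exact lt_asymm d1 d2
  have hb : f n ≤ eCount G + cCount G χ' := by
    calc f n ≤ ∑ v : Fin n, colorDeg G χ v := hsum
      _ = (Finset.univ.sigma fun v => pal v).card := hsum'
      _ ≤ (E.disjSum (E.image χ')).card := hinj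
      _ = E.card + (E.image χ').card := Finset.card_disjSum _ _
      _ = eCount G + cCount G χ' := by rw [heC, hcC]
  obtain ⟨F, hadj, hpc⟩ := hA n G χ' hb
  refine ⟨F, hadj, fun a b c hab hbc hac hcol => ?_⟩
  apply hpc a b c hab hbc hac
  rw [hχ', recolor_edge G χ (hadj a b hab), recolor_edge G χ (hadj b c hbc), hcol]
  congr 2
  exact rep_eq_of_reachable G χ
    (SimpleGraph.Adj.reachable (⟨hadj a b hab, hcol⟩ :
      (colorG G χ (χ s(F b, F c))).Adj (F a) (F b)))
end

section
/- Let G be an edge-colored complete graph containing no properly colored 4-cycle. Then for each color i, the subgraph G^i consisting of the edges of color i contains a dominating vertex, i.e., a vertex adjacent in color i to every other non-isolated vertex of G^i. -/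
open SimpleGraph Finset

/-- The color class of color `i`: the spanning subgraph of edges colored `i`. -/
def colorClass {V : Type*} (G : SimpleGraph V) (χ : Sym2 V → ℕ) (i : ℕ) : SimpleGraph V where
  Adj u v := G.Adj u v ∧ χ s(u, v) = i
  symm := by
    constructor
    intro u v h
    exact ⟨h.1.symm, by rw [Sym2.eq_swap]; exact h.2⟩
  loopless := ⟨fun u h => G.loopless.irrefl u h.1⟩

/-- In an edge-colored complete graph with no properly colored `C₄`, each (nonempty)
color class has a dominating vertex: one adjacent in that color to every other
non-isolated vertex of the color class. -/
theorem stmt_10 {V : Type*} [Fintype V] (χ : Sym2 V → ℕ)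
    (h : ¬ HasPCC4 (⊤ : SimpleGraph V) χ) (i : ℕ)
    (hne : ∃ x y : V, (colorClass (⊤ : SimpleGraph V) χ i).Adj x y) :
    ∃ u : V, (∃ w : V, (colorClass (⊤ : SimpleGraph V) χ i).Adj u w) ∧
      ∀ v : V, v ≠ u → (∃ w : V, (colorClass (⊤ : SimpleGraph V) χ i).Adj v w) →
        (colorClass (⊤ : SimpleGraph V) χ i).Adj u v := by
  classical
  set H := colorClass (⊤ : SimpleGraph V) χ i with hH
  have cross : ∀ a b c d : V, H.Adj a b → H.Adj c d → a ≠ c → b ≠ d → b ≠ c → d ≠ a →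
      (H.Adj b c ∨ H.Adj d a) := by
    intro a b c d hab hcd hac hbd hbc hda
    by_contra hcon
    push_neg at hcon
    have hbc' : χ s(b, c) ≠ i := fun e => hcon.1 (show (colorClass ⊤ χ i).Adj b c from ⟨by simpa using hbc, e⟩)
    have hda' : χ s(d, a) ≠ i := fun e => hcon.2 (show (colorClass ⊤ χ i).Adj d a from ⟨by simpa using hda, e⟩)
    replace hab : (colorClass ⊤ χ i).Adj a b := hab
    replace hcd : (colorClass ⊤ χ i).Adj c d := hcd
    exact h ⟨a, b, c, d, hac, hbd, hab.1, by simpa using hbc, hcd.1, by simpa using hda,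
      by rw [hab.2]; exact fun e => hbc' e.symm,
      by rw [hcd.2]; exact hbc',
      by rw [hcd.2]; exact fun e => hda' e.symm,
      by rw [hab.2]; exact hda'⟩
  obtain ⟨x, y, hxy⟩ := hne
  let nbr : V → Finset V := fun v => univ.filter (H.Adj v)
  let d : V → ℕ := fun v => (nbr v).card
  obtain ⟨w, -, hmax⟩ := Finset.exists_max_image (univ : Finset V) d ⟨x, mem_univ x⟩
  have hx1 : 1 ≤ d x := card_pos.mpr ⟨y, by simp [nbr, hxy]⟩
  have hw1 : 1 ≤ d w := le_trans hx1 (hmax x (mem_univ x))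
  obtain ⟨p, hp⟩ : ∃ p, H.Adj w p := by
    obtain ⟨p, hp⟩ := card_pos.mp hw1
    exact ⟨p, (mem_filter.mp hp).2⟩
  refine ⟨w, ⟨p, hp⟩, ?_⟩
  by_contra hcon
  push_neg at hcon
  obtain ⟨z, hzw, ⟨z', hzz'⟩, hnadj⟩ := hcon
  have hwz' : w ≠ z' := by
    rintro rfl
    exact hnadj hzz'.symm
  by_cases hc : H.Adj w z'
  · -- Case 1: `w` adjacent to `z'`; then `z'` beats `w` in degree.
    have claim : ∀ r, H.Adj w r → r ≠ z' → H.Adj z' r := by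
      intro r hr hrz'
      have hrz : r ≠ z := fun e => hnadj (e ▸ hr)
      rcases cross w r z' z hr hzz'.symm hwz' hrz hrz' hzw with h' | h'
      · exact h'.symm
      · exact absurd h'.symm hnadj
    have hsub : insert w (insert z ((nbr w).erase z')) ⊆ nbr z' := by
      intro t ht
      simp only [mem_insert, mem_erase, nbr, mem_filter, mem_univ, true_and] at ht ⊢
      rcases ht with rfl | rfl | ⟨htz', hwt⟩
      · exact hc.symm
      · exact hzz'.symm
      · exact claim t hwt htz'
    have hz'w : z' ∈ nbr w := by simp [nbr, hc]
    have h1 : w ∉ insert z ((nbr w).erase z') := by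
      simp only [mem_insert, mem_erase, nbr, mem_filter, mem_univ, true_and]
      push_neg
      exact ⟨fun e => hzw e.symm, fun _ => H.irrefl⟩
    have h2 : z ∉ (nbr w).erase z' := by
      simp only [mem_erase, nbr, mem_filter, mem_univ, true_and]
      exact fun e => hnadj e.2
    have hcard : d w + 1 ≤ d z' := by
      have := card_le_card hsub
      rw [card_insert_of_notMem h1, card_insert_of_notMem h2, card_erase_of_mem hz'w] at this
      have hw1' : 1 ≤ (nbr w).card := hw1
      simp only [d] at *
      omega
    have := hmax z' (mem_univ z')
    omega
  · -- Case 2: `w` not adjacent to `z'`; then `z` beats `w` in degree.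
    have claim : ∀ r, H.Adj w r → H.Adj z r := by
      intro r hr
      have hrz : r ≠ z := fun e => hnadj (e ▸ hr)
      have hrz' : r ≠ z' := fun e => hc (e ▸ hr)
      rcases cross w r z z' hr hzz' (fun e => hzw e.symm) hrz' hrz (fun e => hwz' e.symm) with h' | h'
      · exact h'.symm
      · exact absurd h'.symm hc
    have hsub : insert z' (nbr w) ⊆ nbr z := by
      intro t ht
      simp only [mem_insert, nbr, mem_filter, mem_univ, true_and] at ht ⊢
      rcases ht with rfl | hwt
      · exact hzz'
      · exact claim t hwt
    have hz'notin : z' ∉ nbr w := by simp [nbr, hc]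
    have hcard : d w + 1 ≤ d z := by
      have := card_le_card hsub
      rw [card_insert_of_notMem hz'notin] at this
      simpa [d, Nat.add_comm] using this
    have := hmax z (mem_univ z)
    omega
end

section
/- A graph is a threshold graph if and only if it contains no induced subgraph isomorphic to 2K_2 (two disjoint edges), P_4 (a path on four vertices), or C_4 (a 4-cycle). -/
open SimpleGraph Finset

/-- Constructive threshold graph: there is an ordering of the vertices in which each
vertex is either isolated or dominating with respect to the earlier vertices. -/
def IsThresholdC {V : Type*} [Fintype V] (G : SimpleGraph V) : Prop :=
  ∃ f : Fin (Fintype.card V) ≃ V,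
    ∀ i : Fin (Fintype.card V),
      (∀ j, j < i → ¬ G.Adj (f j) (f i)) ∨ (∀ j, j < i → G.Adj (f j) (f i))

/-- `G` has no induced `2K₂`. -/
def NoInduced2K2 {V : Type*} (G : SimpleGraph V) : Prop :=
  ¬ ∃ a b c d : V, a ≠ c ∧ a ≠ d ∧ b ≠ c ∧ b ≠ d ∧ G.Adj a b ∧ G.Adj c d ∧
      ¬ G.Adj a c ∧ ¬ G.Adj a d ∧ ¬ G.Adj b c ∧ ¬ G.Adj b d

/-- `G` has no induced `P₄`. -/
def NoInducedP4 {V : Type*} (G : SimpleGraph V) : Prop :=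
  ¬ ∃ a b c d : V, a ≠ c ∧ a ≠ d ∧ b ≠ d ∧ G.Adj a b ∧ G.Adj b c ∧ G.Adj c d ∧
      ¬ G.Adj a c ∧ ¬ G.Adj a d ∧ ¬ G.Adj b d

/-- `G` has no induced `C₄`. -/
def NoInducedC4 {V : Type*} (G : SimpleGraph V) : Prop :=
  ¬ ∃ a b c d : V, a ≠ c ∧ b ≠ d ∧ G.Adj a b ∧ G.Adj b c ∧ G.Adj c d ∧ G.Adj d a ∧
      ¬ G.Adj a c ∧ ¬ G.Adj b d

/-! ### Auxiliary lemmas -/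

/-- Transport `IsThresholdC` across a cardinality computation. -/
lemma isThresholdC_iff_exists {V : Type*} [Fintype V] (G : SimpleGraph V) {m : ℕ}
    (h : Fintype.card V = m) :
    IsThresholdC G ↔ ∃ g : Fin m ≃ V,
      ∀ i : Fin m, (∀ j, j < i → ¬ G.Adj (g j) (g i)) ∨ (∀ j, j < i → G.Adj (g j) (g i)) := by
  subst h; rfl

/-- In a threshold graph there is no "alternating path" configuration. -/
lemma alt_free {V : Type*} [Fintype V] {G : SimpleGraph V} (h : IsThresholdC G)
    {a b c d : V} (eab : G.Adj a b) (ecd : G.Adj c d)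
    (nad : ¬ G.Adj a d) (nbc : ¬ G.Adj b c) (had : a ≠ d) (hbc : b ≠ c) : False := by
  obtain ⟨f, hf⟩ := h
  have key : ∀ p q r : V, G.Adj p q → ¬ G.Adj p r →
      f.symm q < f.symm p → f.symm r < f.symm p → False := by
    intro p q r hpq hpr h1 h2
    rcases hf (f.symm p) with h | h
    · have := h (f.symm q) h1
      rw [Equiv.apply_symm_apply, Equiv.apply_symm_apply] at this
      exact this hpq.symm
    · have := h (f.symm r) h2
      rw [Equiv.apply_symm_apply, Equiv.apply_symm_apply] at this
      exact hpr this.symm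
  have hab : a ≠ b := eab.ne
  have hcd : c ≠ d := ecd.ne
  have hac : a ≠ c := fun h => nbc (by rw [← h]; exact eab.symm)
  have hbd : b ≠ d := fun h => nad (by rw [← h]; exact eab)
  set ia := f.symm a with hia
  set ib := f.symm b with hib
  set ic := f.symm c with hic
  set id := f.symm d with hid
  have ne' : ∀ {x y : V}, x ≠ y → f.symm x ≠ f.symm y := fun h => f.symm.injective.ne h
  rcases le_total ia ib with h1 | h1 <;> rcases le_total ic id with h2 | h2
  · rcases le_total ib id with h3 | h3
    · exact key d c a ecd.symm (fun h => nad h.symm)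
        (h2.lt_of_ne (ne' hcd)) ((h1.trans h3).lt_of_ne (ne' had))
    · exact key b a c eab.symm nbc
        (h1.lt_of_ne (ne' hab)) ((h2.trans h3).lt_of_ne (ne' hbc.symm))
  · rcases le_total ib ic with h3 | h3
    · exact key c d b ecd (fun h => nbc h.symm)
        (h2.lt_of_ne (ne' hcd.symm)) (h3.lt_of_ne (ne' hbc))
    · exact key b a c eab.symm nbc
        (h1.lt_of_ne (ne' hab)) (h3.lt_of_ne (ne' hbc.symm))
  · rcases le_total ia id with h3 | h3
    · exact key d c a ecd.symm (fun h => nad h.symm)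
        (h2.lt_of_ne (ne' hcd)) (h3.lt_of_ne (ne' had))
    · exact key a b d eab nad
        (h1.lt_of_ne (ne' hab.symm)) (h3.lt_of_ne (ne' had.symm))
  · rcases le_total ia ic with h3 | h3
    · exact key c d b ecd (fun h => nbc h.symm)
        (h2.lt_of_ne (ne' hcd.symm)) ((h1.trans h3).lt_of_ne (ne' hbc))
    · exact key a b d eab nad
        (h1.lt_of_ne (ne' hab.symm)) ((h2.trans h3).lt_of_ne (ne' had.symm))

/-- Neighbourhoods are nested in a `2K₂, P₄, C₄`-free graph. -/
lemma nbhd_comparable {V : Type*} (G : SimpleGraph V)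
    (h1 : NoInduced2K2 G) (h2 : NoInducedP4 G) (h3 : NoInducedC4 G) (u v : V) :
    (∀ w, G.Adj u w → w ≠ v → G.Adj v w) ∨ (∀ w, G.Adj v w → w ≠ u → G.Adj u w) := by
  by_contra hc
  push_neg at hc
  obtain ⟨⟨a, hua, hav, hva⟩, ⟨b, hvb, hbu, hub⟩⟩ := hc
  have huv_ne : u ≠ v := fun h => hva (by rwa [← h])
  have hab_ne : a ≠ b := fun h => hva (by rwa [← h] at hvb)
  by_cases hab : G.Adj a b <;> by_cases huv : G.Adj u v
  · exact h3 ⟨u, a, b, v, hbu.symm, hav, hua, hab, hvb.symm, huv.symm, hub,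
      fun h => hva h.symm⟩
  · exact h2 ⟨u, a, b, v, hbu.symm, huv_ne, hav, hua, hab, hvb.symm, hub, huv,
      fun h => hva h.symm⟩
  · exact h2 ⟨a, u, v, b, hav, hab_ne, hbu.symm, hua.symm, huv, hvb,
      fun h => hva h.symm, hab, hub⟩
  · exact h1 ⟨u, a, v, b, huv_ne, hbu.symm, hav, hab_ne, hua, hvb, huv, hub,
      fun h => hva h.symm, hab⟩

/-- Any total transitive relation on a nonempty finset has a top element. -/
lemma exists_top {α : Type*} (r : α → α → Prop) (htot : ∀ u v, r u v ∨ r v u)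
    (htrans : ∀ {x y z : α}, r x y → r y z → r x z) (s : Finset α) :
    s.Nonempty → ∃ v ∈ s, ∀ u ∈ s, r u v := by
  classical
  induction s using Finset.cons_induction with
  | empty => intro h; exact absurd h (by simp)
  | cons a s ha ih =>
    intro _
    rcases s.eq_empty_or_nonempty with rfl | hs
    · refine ⟨a, by simp, ?_⟩
      intro u hu
      simp only [Finset.cons_empty, Finset.mem_singleton] at hu
      subst hu
      exact (htot u u).elim id id
    · obtain ⟨v, hv, hvtop⟩ := ih hs
      rcases htot a v with h | h
      · refine ⟨v, Finset.mem_cons_of_mem hv, ?_⟩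
        intro u hu
        rcases Finset.mem_cons.mp hu with rfl | hu
        · exact h
        · exact hvtop u hu
      · refine ⟨a, Finset.mem_cons_self a s, ?_⟩
        intro u hu
        rcases Finset.mem_cons.mp hu with rfl | hu
        · exact (htot u u).elim id id
        · exact htrans (hvtop u hu) h

/-- A forbidden-subgraph-free nonempty graph has an isolated or dominating vertex. -/
lemma exists_iso_or_dom {V : Type*} [Fintype V] [Nonempty V] (G : SimpleGraph V)
    (h1 : NoInduced2K2 G) (h2 : NoInducedP4 G) (h3 : NoInducedC4 G) :
    ∃ x : V, (∀ w, ¬ G.Adj x w) ∨ (∀ w, w ≠ x → G.Adj x w) := by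
  classical
  set r : V → V → Prop := fun u v => ∀ w, G.Adj u w → w ≠ v → G.Adj v w with hr
  have htot : ∀ u v, r u v ∨ r v u := nbhd_comparable G h1 h2 h3
  have htrans : ∀ {x y z : V}, r x y → r y z → r x z := by
    intro x y z hxy hyz w hw hwz
    by_cases hwy : w = y
    · subst hwy
      by_cases hxz : x = z
      · subst hxz; exact hw
      · have h1' : G.Adj z x := hyz x hw.symm hxz
        exact (hxy z h1'.symm (fun h => hwz h.symm)).symm
    · exact hyz w (hxy w hw hwy) hwz
  obtain ⟨x, -, hx⟩ := exists_top r htot htrans Finset.univ Finset.univ_nonempty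
  by_cases hiso : ∃ w, ∀ y, ¬ G.Adj w y
  · obtain ⟨w, hw⟩ := hiso
    exact ⟨w, Or.inl hw⟩
  · push_neg at hiso
    refine ⟨x, Or.inr ?_⟩
    intro u hux
    obtain ⟨w, huw⟩ := hiso u
    exact hx w (Finset.mem_univ w) u huw.symm hux

lemma aux_threshold : ∀ (n : ℕ) {V : Type*} [Fintype V] [DecidableEq V] (G : SimpleGraph V),
    Fintype.card V = n → NoInduced2K2 G → NoInducedP4 G → NoInducedC4 G → IsThresholdC G := by
  intro n
  induction n with
  | zero =>
    intro V _ _ G hcard _ _ _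
    rw [isThresholdC_iff_exists G hcard]
    haveI : IsEmpty V := Fintype.card_eq_zero_iff.mp hcard
    exact ⟨Equiv.equivOfIsEmpty (Fin 0) V, fun i => i.elim0⟩
  | succ n ih =>
    intro V _ _ G hcard h1 h2 h3
    haveI : Nonempty V := Fintype.card_pos_iff.mp (by omega)
    obtain ⟨x, hx⟩ := exists_iso_or_dom G h1 h2 h3
    set W := {y : V // y ≠ x} with hWdef
    set G' : SimpleGraph W := SimpleGraph.comap (Subtype.val : W → V) G with hG'def
    have hW : Fintype.card W = n := by
      have := Fintype.card_congr (Equiv.optionSubtypeNe x)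
      rw [Fintype.card_option, hcard] at this
      exact Nat.succ_injective this
    have h1' : NoInduced2K2 G' := by
      rintro ⟨a, b, c, d, hac, had, hbc, hbd, e1, e2, n1, n2, n3, n4⟩
      exact h1 ⟨a, b, c, d, Subtype.coe_injective.ne hac, Subtype.coe_injective.ne had,
        Subtype.coe_injective.ne hbc, Subtype.coe_injective.ne hbd, e1, e2, n1, n2, n3, n4⟩
    have h2' : NoInducedP4 G' := by
      rintro ⟨a, b, c, d, hac, had, hbd, e1, e2, e3, n1, n2, n3⟩
      exact h2 ⟨a, b, c, d, Subtype.coe_injective.ne hac, Subtype.coe_injective.ne had,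
        Subtype.coe_injective.ne hbd, e1, e2, e3, n1, n2, n3⟩
    have h3' : NoInducedC4 G' := by
      rintro ⟨a, b, c, d, hac, hbd, e1, e2, e3, e4, n1, n2⟩
      exact h3 ⟨a, b, c, d, Subtype.coe_injective.ne hac, Subtype.coe_injective.ne hbd,
        e1, e2, e3, e4, n1, n2⟩
    have hth' := ih G' hW h1' h2' h3'
    rw [isThresholdC_iff_exists G' hW] at hth'
    obtain ⟨g', hg'⟩ := hth'
    rw [isThresholdC_iff_exists G hcard]
    set g : Fin (n + 1) ≃ V :=
      (finSuccEquivLast.trans (g'.optionCongr)).trans (Equiv.optionSubtypeNe x) with hgdef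
    have hglast : g (Fin.last n) = x := by
      rw [hgdef]
      simp only [Equiv.trans_apply, finSuccEquivLast_last, Equiv.optionCongr_apply,
        Option.map_none]
      rfl
    have hgcast : ∀ j : Fin n, g (Fin.castSucc j) = (g' j).val := by
      intro j
      rw [hgdef]
      simp only [Equiv.trans_apply, finSuccEquivLast_castSucc, Equiv.optionCongr_apply,
        Option.map_some]
      rfl
    refine ⟨g, ?_⟩
    intro i
    induction i using Fin.lastCases with
    | last =>
      have hgj : ∀ j : Fin (n + 1), j < Fin.last n → g j ≠ x := by
        intro j hj hjx
        exact absurd (g.injective (hjx.trans hglast.symm)) (Fin.ne_of_lt hj)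
      rcases hx with hiso | hdom
      · left
        intro j hj
        rw [hglast]
        exact fun h => hiso _ h.symm
      · right
        intro j hj
        rw [hglast]
        exact (hdom (g j) (hgj j hj)).symm
    | cast i' =>
      have hsplit : ∀ j : Fin (n + 1), j < Fin.castSucc i' →
          ∃ j' : Fin n, j = Fin.castSucc j' ∧ j' < i' := by
        intro j hj
        have hjval : (j : ℕ) < (i' : ℕ) := by simpa [Fin.lt_def] using hj
        have hjn : (j : ℕ) < n := hjval.trans i'.isLt
        exact ⟨⟨j, hjn⟩, Fin.ext rfl, by simpa [Fin.lt_def] using hjval⟩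
      rcases hg' i' with h | h
      · left
        intro j hj
        obtain ⟨j', rfl, hj'⟩ := hsplit j hj
        rw [hgcast, hgcast]
        exact h j' hj'
      · right
        intro j hj
        obtain ⟨j', rfl, hj'⟩ := hsplit j hj
        rw [hgcast, hgcast]
        exact h j' hj'

/-- Chvátal–Hammer: a graph is a threshold graph iff it contains no induced
`2K₂`, `P₄`, or `C₄`. -/
theorem stmt_11 {V : Type*} [Fintype V] (G : SimpleGraph V) :
    IsThresholdC G ↔ NoInduced2K2 G ∧ NoInducedP4 G ∧ NoInducedC4 G := by
  constructor
  · intro h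
    refine ⟨?_, ?_, ?_⟩
    · rintro ⟨a, b, c, d, hac, had, hbc, hbd, eab, ecd, nac, nad, nbc, nbd⟩
      exact alt_free h eab ecd nad nbc had hbc
    · rintro ⟨a, b, c, d, hac, had, hbd, eab, ebc, ecd, nac, nad, nbd⟩
      exact alt_free h eab.symm ecd nbd nac hbd hac
    · rintro ⟨a, b, c, d, hac, hbd, eab, ebc, ecd, eda, nac, nbd⟩
      exact alt_free h eab ecd.symm nac nbd hac hbd
  · rintro ⟨h1, h2, h3⟩
    classical
    exact aux_threshold (Fintype.card V) G rfl h1 h2 h3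
end

section
/- Every graph on n vertices with more than (1/2)·√(b−1)·n^{2−1/a} + ((a−1)/2)·n edges contains the complete bipartite graph K_{a,b} as a subgraph (where a ≤ b). -/
open SimpleGraph Finset

/-- Kővári–Sós–Turán: a graph on `n` vertices with more than
`(1/2)(b-1)^{1/a} n^{2-1/a} + ((a-1)/2) n` edges contains `K_{a,b}`. -/
theorem stmt_12 {V : Type*} [Fintype V] (G : SimpleGraph V) (a b : ℕ)
    (ha : 1 ≤ a) (hab : a ≤ b)
    (h : (1 / 2 : ℝ) * ((b : ℝ) - 1) ^ ((1 : ℝ) / a) *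
          (Fintype.card V : ℝ) ^ ((2 : ℝ) - 1 / a) +
        ((a : ℝ) - 1) / 2 * (Fintype.card V : ℝ) < (eCount G : ℝ)) :
    ∃ A B : Finset V, A.card = a ∧ B.card = b ∧ Disjoint A B ∧
      ∀ x ∈ A, ∀ y ∈ B, G.Adj x y := by
  classical
  by_contra hc
  push_neg at hc
  set n := Fintype.card V with hn
  have hb1 : 1 ≤ b := le_trans ha hab
  have ha0 : (a : ℝ) ≠ 0 := by positivity
  have hbR : (0 : ℝ) ≤ (b : ℝ) - 1 := by
    have : (1 : ℝ) ≤ b := by exact_mod_cast hb1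
    linarith
  have hec : eCount G = G.edgeFinset.card := by
    rw [eCount, ← G.coe_edgeFinset, Set.ncard_coe_finset]
  have hsum : ∑ v : V, G.degree v = 2 * eCount G := by
    rw [hec]; exact G.sum_degrees_eq_twice_card_edges
  -- trivial case n = 0
  rcases Nat.eq_zero_or_pos n with hn0 | hnpos
  · have hV : IsEmpty V := Fintype.card_eq_zero_iff.mp hn0
    have he0 : eCount G = 0 := by
      have := hsum
      rw [Finset.univ_eq_empty, Finset.sum_empty] at this
      omega
    rw [he0, hn0] at h
    have hexp : ((2 : ℝ) - 1 / a) ≠ 0 := by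
      have h1 : (1 : ℝ) ≤ (a : ℝ) := by exact_mod_cast ha
      have : (1 : ℝ) / a ≤ 1 := by
        rw [div_le_one (by linarith)]; linarith
      intro hh; linarith
    rw [Nat.cast_zero, Real.zero_rpow hexp] at h
    simp at h
  -- every a-set has at most b - 1 common neighbors
  have key : ∀ S : Finset V, S.card = a →
      (univ.filter (fun v => S ⊆ G.neighborFinset v)).card ≤ b - 1 := by
    intro S hS
    by_contra hlt
    push_neg at hlt
    have hble : b ≤ (univ.filter (fun v => S ⊆ G.neighborFinset v)).card := by omega
    obtain ⟨B, hBsub, hB⟩ := Finset.exists_subset_card_eq hble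
    have hBadj : ∀ y ∈ B, S ⊆ G.neighborFinset y := by
      intro y hy
      have := hBsub hy
      simp only [mem_filter] at this
      exact this.2
    have hdisj : Disjoint S B := by
      rw [Finset.disjoint_left]
      intro x hxS hxB
      exact G.irrefl ((G.mem_neighborFinset _ _).1 (hBadj x hxB hxS))
    obtain ⟨x, hx, y, hy, hxy⟩ := hc S B hS hB hdisj
    exact hxy (G.adj_symm ((G.mem_neighborFinset _ _).1 (hBadj y hy hx)))
  -- double counting
  have count : ∑ v : V, (G.degree v).choose a ≤ (b - 1) * n.choose a := by
    have h1 : ∀ v : V, (G.degree v).choose a =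
        ((univ.powersetCard a).filter (fun S => S ⊆ G.neighborFinset v)).card := by
      intro v
      rw [← G.card_neighborFinset_eq_degree, ← Finset.card_powersetCard]
      congr 1
      ext S
      simp only [Finset.mem_powersetCard, Finset.mem_filter, Finset.subset_univ,
        true_and]
      tauto
    calc ∑ v : V, (G.degree v).choose a
        = ∑ v : V, ∑ S ∈ univ.powersetCard a,
            if S ⊆ G.neighborFinset v then 1 else 0 := by
          simp_rw [h1, Finset.card_filter]
      _ = ∑ S ∈ univ.powersetCard a, ∑ v : V,
            if S ⊆ G.neighborFinset v then 1 else 0 := Finset.sum_comm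
      _ ≤ ∑ _S ∈ univ.powersetCard a, (b - 1) := by
          apply Finset.sum_le_sum
          intro S hS
          rw [← Finset.card_filter]
          exact key S (Finset.mem_powersetCard.1 hS).2
      _ = (b - 1) * n.choose a := by
          rw [Finset.sum_const, Finset.card_powersetCard, Finset.card_univ,
            smul_eq_mul, mul_comm]
  -- pointwise: (d + 1 - a)^a ≤ a! * C(d, a)
  have nat1 : ∀ v : V, (G.degree v + 1 - a) ^ a ≤ a.factorial * (G.degree v).choose a := by
    intro v
    rw [← Nat.descFactorial_eq_factorial_mul_choose, Nat.descFactorial_eq_prod_range]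
    calc (G.degree v + 1 - a) ^ a
        = ∏ _i ∈ Finset.range a, (G.degree v + 1 - a) := by
          rw [Finset.prod_const, Finset.card_range]
      _ ≤ ∏ i ∈ Finset.range a, (G.degree v - i) := by
          apply Finset.prod_le_prod'
          intro i hi
          have : i < a := Finset.mem_range.1 hi
          omega
  have nat2 : ∑ v : V, (G.degree v + 1 - a) ^ a ≤ (b - 1) * n ^ a := by
    calc ∑ v : V, (G.degree v + 1 - a) ^ a
        ≤ ∑ v : V, a.factorial * (G.degree v).choose a :=
          Finset.sum_le_sum fun v _ => nat1 v
      _ = a.factorial * ∑ v : V, (G.degree v).choose a := by rw [Finset.mul_sum]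
      _ ≤ a.factorial * ((b - 1) * n.choose a) := Nat.mul_le_mul_left _ count
      _ = (b - 1) * (a.factorial * n.choose a) := by ring
      _ ≤ (b - 1) * n ^ a := by
          apply Nat.mul_le_mul_left
          rw [← Nat.descFactorial_eq_factorial_mul_choose]
          exact Nat.descFactorial_le_pow n a
  -- move to the reals
  set f : V → ℝ := fun v => ((G.degree v + 1 - a : ℕ) : ℝ) with hf
  set T : ℝ := ∑ v : V, f v with hT
  have hfnn : ∀ v ∈ (univ : Finset V), (0 : ℝ) ≤ f v := fun v _ => Nat.cast_nonneg _
  have hTnn : 0 ≤ T := Finset.sum_nonneg hfnn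
  have hnR : (0 : ℝ) < n := by exact_mod_cast hnpos
  have hpow : T ^ a ≤ ((b : ℝ) - 1) * (n : ℝ) ^ (a - 1) * (n : ℝ) ^ a := by
    have hpm := pow_sum_div_card_le_sum_pow (s := (univ : Finset V)) hfnn (a - 1)
    rw [Nat.sub_add_cancel ha] at hpm
    have hcard : (#(univ : Finset V) : ℝ) = (n : ℝ) := by
      rw [Finset.card_univ]
    rw [hcard] at hpm
    have hsumpow : ∑ v : V, f v ^ a ≤ ((b : ℝ) - 1) * (n : ℝ) ^ a := by
      have := nat2
      have hcast : ((∑ v : V, (G.degree v + 1 - a) ^ a : ℕ) : ℝ)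
          ≤ (((b - 1) * n ^ a : ℕ) : ℝ) := by exact_mod_cast this
      push_cast [Nat.cast_sub hb1] at hcast
      convert hcast using 2 <;> simp [hf]
    have h1 : T ^ a / (n : ℝ) ^ (a - 1) ≤ ((b : ℝ) - 1) * (n : ℝ) ^ a :=
      le_trans hpm hsumpow
    rw [div_le_iff₀ (by positivity)] at h1
    linarith [h1]
  -- extract the a-th root
  have hroot : T ≤ ((b : ℝ) - 1) ^ ((1 : ℝ) / a) * (n : ℝ) ^ ((2 : ℝ) - 1 / a) := by
    have hTa : T = (T ^ a) ^ ((a : ℝ)⁻¹) := by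
      rw [← Real.rpow_natCast T a, ← Real.rpow_mul hTnn, mul_inv_cancel₀ ha0,
        Real.rpow_one]
    have hc0 : (0 : ℝ) ≤ ((b : ℝ) - 1) * (n : ℝ) ^ (a - 1) * (n : ℝ) ^ a := by positivity
    have h2 : (T ^ a) ^ ((a : ℝ)⁻¹)
        ≤ (((b : ℝ) - 1) * (n : ℝ) ^ (a - 1) * (n : ℝ) ^ a) ^ ((a : ℝ)⁻¹) :=
      Real.rpow_le_rpow (by positivity) hpow (by positivity)
    have h3 : (((b : ℝ) - 1) * (n : ℝ) ^ (a - 1) * (n : ℝ) ^ a) ^ ((a : ℝ)⁻¹)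
        = ((b : ℝ) - 1) ^ ((1 : ℝ) / a) * (n : ℝ) ^ ((2 : ℝ) - 1 / a) := by
      rw [mul_assoc, Real.mul_rpow hbR (by positivity), ← pow_add,
        ← Real.rpow_natCast (n : ℝ) ((a - 1) + a), ← Real.rpow_mul hnR.le,
        one_div]
      congr 1
      have : ((a - 1 + a : ℕ) : ℝ) = 2 * (a : ℝ) - 1 := by
        push_cast [Nat.cast_sub ha]; ring
      rw [this]
      field_simp
    rw [hTa]
    rw [h3] at h2
    exact h2
  -- lower bound on T
  have hlow : 2 * (eCount G : ℝ) - ((a : ℝ) - 1) * n ≤ T := by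
    have hdeg : ∑ v : V, (G.degree v : ℝ) = 2 * (eCount G : ℝ) := by
      exact_mod_cast congrArg (Nat.cast : ℕ → ℝ) hsum
    have hptw : ∀ v ∈ (univ : Finset V), (G.degree v : ℝ) - ((a : ℝ) - 1) ≤ f v := by
      intro v _
      rcases le_or_gt a (G.degree v + 1) with h' | h'
      · have : ((G.degree v + 1 - a : ℕ) : ℝ) = (G.degree v : ℝ) + 1 - a := by
          push_cast [Nat.cast_sub h']; ring
        rw [hf]; dsimp only; rw [this]; linarith
      · have h0 : G.degree v + 1 - a = 0 := by omega
        have hle : (G.degree v : ℝ) + 1 ≤ a := by exact_mod_cast h'.le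
        rw [hf]; dsimp only; rw [h0]
        push_cast
        linarith
    have := Finset.sum_le_sum hptw
    rw [Finset.sum_sub_distrib, hdeg, Finset.sum_const, Finset.card_univ,
      nsmul_eq_mul] at this
    rw [← hn] at this
    linarith [this]
  linarith [hroot, hlow, h]
end

section
/- Every graph on n ≥ 5 vertices with n^{3/2}/2 + n/2 or more edges (strictly more than ex(n, C_4)) contains a 4-cycle. Equivalently, ex(n, C_4) ≤ n^{3/2}/2 + n/2. -/
open SimpleGraph Finset

/-- A graph on `n ≥ 5` vertices with at least `n^{3/2}/2 + n/2` edges contains a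
4-cycle. -/
theorem stmt_13 {V : Type*} [Fintype V] (hn : 5 ≤ Fintype.card V) (G : SimpleGraph V)
    (h : (Fintype.card V : ℝ) ^ ((3 : ℝ) / 2) / 2 + (Fintype.card V : ℝ) / 2 ≤
        (eCount G : ℝ)) :
    ∃ a b c d : V, a ≠ b ∧ a ≠ c ∧ a ≠ d ∧ b ≠ c ∧ b ≠ d ∧ c ≠ d ∧
      G.Adj a b ∧ G.Adj b c ∧ G.Adj c d ∧ G.Adj d a := by
  classical
  by_contra hc
  set n := Fintype.card V with hn'
  -- number of edges
  have hE : eCount G = G.edgeFinset.card := by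
    rw [eCount, ← Set.ncard_coe_finset, coe_edgeFinset]
  set e : ℕ := G.edgeFinset.card with he
  -- path-counting Finset
  set P : Finset ((_ : V) × V × V) :=
      univ.sigma (fun b => (G.neighborFinset b).offDiag) with hP
  have hmemP : ∀ t : (_ : V) × V × V, t ∈ P ↔
      (G.Adj t.1 t.2.1 ∧ G.Adj t.1 t.2.2 ∧ t.2.1 ≠ t.2.2) := by
    intro t
    simp [hP, Finset.mem_sigma, Finset.mem_offDiag, mem_neighborFinset]
  have hmaps : ∀ t ∈ P, (fun t : (_ : V) × V × V => t.2) t ∈ (univ : Finset V).offDiag := by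
    intro t ht
    rw [hmemP] at ht
    simp [Finset.mem_offDiag, ht.2.2]
  have hinj : Set.InjOn (fun t : (_ : V) × V × V => t.2) P := by
    intro t ht t' ht' htt
    rw [Finset.mem_coe, hmemP] at ht ht'
    simp only at htt
    obtain ⟨b, a, c⟩ := t
    obtain ⟨b', a', c'⟩ := t'
    simp only at htt
    obtain ⟨rfl, rfl⟩ := Prod.mk.injEq .. ▸ (by exact Prod.ext_iff.mp htt : a = a' ∧ c = c')
    by_contra hne
    have hbb' : b ≠ b' := fun hbeq => hne (by simp [hbeq])
    obtain ⟨h1, h2, h3⟩ := ht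
    obtain ⟨h4, h5, -⟩ := ht'
    exact hc ⟨a, b, c, b', h1.symm.ne, h3, h4.ne', h2.ne, hbb', h5.ne',
      h1.symm, h2, h5.symm, h4⟩
  have hcard : P.card ≤ (univ : Finset V).offDiag.card :=
    Finset.card_le_card_of_injOn _ hmaps hinj
  have hPcard : P.card = ∑ b : V, ((G.neighborFinset b).offDiag).card :=
    Finset.card_sigma _ _
  -- degrees
  have hsumdeg : ∑ v : V, G.degree v = 2 * e := G.sum_degrees_eq_twice_card_edges
  -- real versions
  have hoffR : ∀ s : Finset V, ((s.offDiag.card : ℝ)) = (s.card : ℝ)^2 - s.card := by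
    intro s
    rw [Finset.offDiag_card]
    rcases Nat.eq_zero_or_pos s.card with h0 | h0
    · simp [h0]
    · rw [Nat.cast_sub (Nat.le_mul_of_pos_left _ h0)]
      push_cast; ring
  have key : ∑ v : V, ((G.degree v : ℝ))^2 - ∑ v : V, (G.degree v : ℝ)
      ≤ (n : ℝ)^2 - n := by
    have := hcard
    rw [hPcard] at this
    calc ∑ v : V, ((G.degree v : ℝ))^2 - ∑ v : V, (G.degree v : ℝ)
        = ∑ v : V, (((G.neighborFinset v).offDiag.card : ℝ)) := by
          rw [← Finset.sum_sub_distrib]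
          refine Finset.sum_congr rfl fun v _ => ?_
          rw [hoffR]
          rfl
      _ ≤ ((univ : Finset V).offDiag.card : ℝ) := by
          rw [← Nat.cast_sum]; exact_mod_cast this
      _ = (n : ℝ)^2 - n := by rw [hoffR]; simp [hn']
  have hCS : (∑ v : V, (G.degree v : ℝ))^2 ≤ (n : ℝ) * ∑ v : V, ((G.degree v : ℝ))^2 := by
    simpa [hn'] using sq_sum_le_card_mul_sum_sq (s := (univ : Finset V))
      (f := fun v => (G.degree v : ℝ))
  have hsumdegR : ∑ v : V, (G.degree v : ℝ) = 2 * e := by exact_mod_cast hsumdeg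
  rw [hsumdegR] at key hCS
  -- rpow facts
  set x : ℝ := (n : ℝ) ^ ((3 : ℝ) / 2) with hx
  have hn5 : (5 : ℝ) ≤ (n : ℝ) := by exact_mod_cast hn
  have hnpos : (0 : ℝ) < (n : ℝ) := by linarith
  have hx2 : x * x = (n : ℝ) ^ 3 := by
    rw [hx, ← Real.rpow_add hnpos]
    norm_num
  have hxnonneg : (0 : ℝ) ≤ x := Real.rpow_nonneg hnpos.le _
  have hh : x / 2 + (n : ℝ) / 2 ≤ (e : ℝ) := by
    rwa [hE] at h
  have h1 : x + (n : ℝ) ≤ 2 * e := by linarith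
  have hS : (2 * (e : ℝ)) ^ 2 ≤ (n : ℝ) * ((n : ℝ) ^ 2 - n + 2 * e) := by
    refine le_trans hCS ?_
    exact mul_le_mul_of_nonneg_left (by linarith [key]) hnpos.le
  have h2 : (x + (n : ℝ)) * x ≤ (2 * e) * (2 * e - n) :=
    mul_le_mul h1 (by linarith) hxnonneg (by linarith)
  nlinarith [hS, h2, hx2, hnpos, hxnonneg, mul_nonneg hnpos.le hxnonneg, mul_pos hnpos hnpos]
end

section
/- For k ≥ 1 and n ≥ 2k, the maximum number of edges of an n-vertex graph containing no matching of size k (i.e., no kK_2 subgraph) equals max{ C(2k−1, 2), C(k−1, 2) + (k−1)(n−k+1) }. -/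
open SimpleGraph Finset

/-- `G` contains a matching of size `k`. -/
def HasMatchingOfSize {V : Type*} (G : SimpleGraph V) (k : ℕ) : Prop :=
  ∃ p : Fin k → V × V, (∀ i, G.Adj (p i).1 (p i).2) ∧
    ∀ i j, i ≠ j → (p i).1 ≠ (p j).1 ∧ (p i).1 ≠ (p j).2 ∧
      (p i).2 ≠ (p j).1 ∧ (p i).2 ≠ (p j).2

namespace EG


lemma card_filter_val_lt (n c : ℕ) (hc : c ≤ n) :
    (univ.filter (fun x : Fin n => x.val < c)).card = c := by
  have h : univ.filter (fun x : Fin n => x.val < c)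
      = (Finset.range c).attachFin (fun m hm => lt_of_lt_of_le (Finset.mem_range.mp hm) hc) := by
    ext a
    simp [Finset.mem_attachFin]
  rw [h, Finset.card_attachFin, Finset.card_range]

lemma card_filter_band (n a b : ℕ) (hab : a ≤ b) (hb : b ≤ n) :
    (univ.filter (fun x : Fin n => a ≤ x.val ∧ x.val < b)).card = b - a := by
  have h : univ.filter (fun x : Fin n => x.val < b)
      = univ.filter (fun x : Fin n => x.val < a) ∪
        univ.filter (fun x : Fin n => a ≤ x.val ∧ x.val < b) := by
    ext x; simp only [mem_filter, mem_union, mem_univ, true_and]; omega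
  have hd : Disjoint (univ.filter (fun x : Fin n => x.val < a))
      (univ.filter (fun x : Fin n => a ≤ x.val ∧ x.val < b)) := by
    rw [Finset.disjoint_left]
    intro x hx hx'
    simp only [mem_filter, mem_univ, true_and] at hx hx'
    omega
  have := Finset.card_union_of_disjoint hd
  rw [← h, card_filter_val_lt n b hb, card_filter_val_lt n a (by omega)] at this
  omega

lemma card_filter_ge (n b : ℕ) (hb : b ≤ n) :
    (univ.filter (fun x : Fin n => b ≤ x.val)).card = n - b := by
  have h : univ.filter (fun x : Fin n => b ≤ x.val)
      = univ.filter (fun x : Fin n => b ≤ x.val ∧ x.val < n) := by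
    ext x; simp only [mem_filter, mem_univ, true_and]
    exact ⟨fun hx => ⟨hx, x.isLt⟩, fun hx => hx.1⟩
  rw [h, card_filter_band n b n hb le_rfl]

lemma val_zero (n k : ℕ) (e : ℕ) (hk : 1 ≤ k) (hn : 2*k ≤ n)
    (h : 2 * e = 0*(n-1) + (2*k-1-2*0)*(2*k-2-0) + (n-(2*k-1-0))*0) :
    e = Nat.choose (2*k-1) 2 := by
  have h2 : 2*k-1-2*0 = 2*k-1 := by omega
  have h3 : 2*k-2-0 = 2*k-2 := by omega
  rw [h2, h3] at h
  simp only [Nat.zero_mul, Nat.mul_zero, Nat.zero_add, Nat.add_zero] at h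
  rw [Nat.choose_two_right]
  have h4 : 2*k-1-1 = 2*k-2 := by omega
  rw [h4]
  omega

lemma val_last (n k : ℕ) (e : ℕ) (hk : 1 ≤ k) (hn : 2*k ≤ n)
    (h : 2 * e = (k-1)*(n-1) + (2*k-1-2*(k-1))*(2*k-2-(k-1)) + (n-(2*k-1-(k-1)))*(k-1)) :
    e = Nat.choose (k-1) 2 + (k-1) * (n-k+1) := by
  have h2 : 2*k-1-2*(k-1) = 1 := by omega
  have h3 : 2*k-2-(k-1) = k-1 := by omega
  have h4 : 2*k-1-(k-1) = k := by omega
  rw [h2, h3, h4] at h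
  rw [Nat.choose_two_right]
  have h5 : k-1-1 = k-2 := by omega
  rw [h5]
  have hkey : (k-1)*(n-1) + 1*(k-1) + (n-k)*(k-1) = (k-1)*(k-2) + 2*((k-1)*(n-k+1)) := by
    rcases Nat.lt_or_ge k 2 with hh | hh
    · have hk1 : k = 1 := by omega
      subst hk1; simp
    · zify [(by omega : 1 ≤ k), (by omega : 1 ≤ n), (by omega : k ≤ n), (by omega : 2 ≤ k)]
      ring
  have heven : Even ((k-1) * (k-2)) := by
    rcases Nat.lt_or_ge k 2 with hh | hh
    · have : k - 2 = 0 := by omega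
      simp [this]
    · have he : (k-1) * (k-2) = (k-2) * ((k-2)+1) := by
        have h6 : k - 2 + 1 = k - 1 := by omega
        rw [h6, Nat.mul_comm]
      rw [he]
      exact Nat.even_mul_succ_self _
  omega


lemma convexZ (a b c : ℤ) (ha : 0 ≤ a) (hab : a ≤ b-1) (hb : 1 ≤ b) (hc : 2*b ≤ c) :
    (b-1) * (a*(c-1) + (2*b-1-2*a)*(2*b-2-a) + (c-(2*b-1-a))*a)
      ≤ (b-1-a) * ((2*b-1)*(2*b-2)) + a * ((b-1)*(b-2)+2*(b-1)*(c-b+1)) := by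
  nlinarith [mul_nonneg (mul_nonneg ha (by linarith : (0:ℤ) ≤ b-1)) (by linarith : (0:ℤ) ≤ b-1-a)]

lemma convexN (n k j e : ℕ) (hk : 1 ≤ k) (hj : j ≤ k-1) (hn : 2*k ≤ n)
    (h : 2 * e = j*(n-1) + (2*k-1-2*j)*(2*k-2-j) + (n-(2*k-1-j))*j) :
    2 * e ≤ max ((2*k-1)*(2*k-2)) ((k-1)*(k-2)+2*((k-1)*(n-k+1))) := by
  rcases Nat.lt_or_ge k 2 with h2 | h2
  · have hk1 : k = 1 := by omega
    subst hk1
    have hj0 : j = 0 := by omega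
    subst hj0
    simp at h ⊢
    omega
  -- k ≥ 2
  zify [show 1 ≤ n by omega, show 2*j ≤ 2*k-1 by omega, show j ≤ 2*k-2 by omega,
    show 2*k-1-j ≤ n by omega, show j ≤ 2*k-1 by omega, show 1 ≤ 2*k by omega,
    show 2 ≤ 2*k by omega, show 1 ≤ k by omega, show 2 ≤ k by omega, show k ≤ n by omega,
    show j ≤ k - 1 by omega] at h ⊢
  have hkey := convexZ (j:ℤ) (k:ℤ) (n:ℤ) (by positivity) (by push_cast at h ⊢; omega)
    (by push_cast; omega) (by push_cast; omega)
  rw [le_max_iff]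
  rcases le_total ((2*(k:ℤ)-1)*(2*(k:ℤ)-2)) (((k:ℤ)-1)*((k:ℤ)-2)+2*(((k:ℤ)-1)*((n:ℤ)-(k:ℤ)+1))) with hc | hc
  · right
    have hb1 : (0:ℤ) < (k:ℤ)-1 := by push_cast; omega
    nlinarith [hkey, hc, mul_nonneg (by push_cast; omega : (0:ℤ) ≤ (k:ℤ)-1-(j:ℤ)) (sub_nonneg.mpr hc)]
  · left
    have hb1 : (0:ℤ) < (k:ℤ)-1 := by push_cast; omega
    nlinarith [hkey, hc, mul_nonneg (by push_cast; omega : (0:ℤ) ≤ (j:ℤ)) (sub_nonneg.mpr hc)]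

def Hg (n k j : ℕ) : SimpleGraph (Fin n) where
  Adj a b := a ≠ b ∧ (min a.val b.val < j ∨ max a.val b.val < 2*k-1-j)
  symm := by
    constructor
    intro a b h
    have h2 := h.2
    exact ⟨h.1.symm, by omega⟩
  loopless := ⟨fun a h => h.1 rfl⟩

instance (n k j : ℕ) : DecidableRel (Hg n k j).Adj :=
  fun _ _ => inferInstanceAs (Decidable (_ ∧ _))

lemma Hg_adj {n k j : ℕ} {a b : Fin n} :
    (Hg n k j).Adj a b ↔ a ≠ b ∧ (min a.val b.val < j ∨ max a.val b.val < 2*k-1-j) := Iff.rfl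

lemma Hg_degree_lo {n k j : ℕ} (hk : 1 ≤ k) (hj : j ≤ k - 1) (hn : 2*k ≤ n) {x : Fin n}
    (hx : x.val < j) : (Hg n k j).degree x = n - 1 := by
  show ((Hg n k j).neighborFinset x).card = n - 1
  have h : (Hg n k j).neighborFinset x = Finset.univ.erase x := by
    ext b
    simp only [SimpleGraph.mem_neighborFinset, Finset.mem_erase, Finset.mem_univ, and_true,
      Hg_adj]
    constructor
    · rintro ⟨h1, -⟩; exact fun hbx => h1 (hbx ▸ rfl)
    · intro h1
      exact ⟨fun h' => h1 h'.symm, Or.inl (by omega)⟩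
  rw [h, Finset.card_erase_of_mem (Finset.mem_univ x), Finset.card_univ, Fintype.card_fin]

lemma Hg_degree_mid {n k j : ℕ} (hk : 1 ≤ k) (hj : j ≤ k - 1) (hn : 2*k ≤ n) {x : Fin n}
    (hx1 : j ≤ x.val) (hx2 : x.val < 2*k-1-j) : (Hg n k j).degree x = 2*k-2-j := by
  show ((Hg n k j).neighborFinset x).card = 2*k-2-j
  have h : (Hg n k j).neighborFinset x
      = ({b : Fin n | b.val < 2*k-1-j} : Finset (Fin n)).erase x := by
    ext b
    simp only [SimpleGraph.mem_neighborFinset, Finset.mem_erase, Finset.mem_filter,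
      Finset.mem_univ, true_and, Hg_adj, Set.mem_setOf_eq]
    constructor
    · rintro ⟨h1, h2⟩
      refine ⟨fun hbx => h1 (hbx ▸ rfl), by omega⟩
    · rintro ⟨h1, h2⟩
      refine ⟨fun h' => h1 h'.symm, by omega⟩
  rw [h, Finset.card_erase_of_mem, card_filter_val_lt n _ (by omega)]
  · omega
  · simp only [Finset.mem_filter, Finset.mem_univ, true_and, Set.mem_setOf_eq]
    exact hx2

lemma Hg_degree_hi {n k j : ℕ} (hk : 1 ≤ k) (hj : j ≤ k - 1) (hn : 2*k ≤ n) {x : Fin n}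
    (hx : 2*k-1-j ≤ x.val) : (Hg n k j).degree x = j := by
  show ((Hg n k j).neighborFinset x).card = j
  have h : (Hg n k j).neighborFinset x = ({b : Fin n | b.val < j} : Finset (Fin n)) := by
    ext b
    simp only [SimpleGraph.mem_neighborFinset, Finset.mem_filter, Finset.mem_univ, true_and,
      Hg_adj, Set.mem_setOf_eq]
    constructor
    · rintro ⟨h1, h2⟩; omega
    · intro h1
      have : b.val ≠ x.val := by omega
      exact ⟨fun h' => this (h' ▸ rfl), Or.inl (by omega)⟩
  rw [h, card_filter_val_lt n _ (by omega)]

lemma Hg_double_count (n k j : ℕ) (hk : 1 ≤ k) (hj : j ≤ k - 1) (hn : 2*k ≤ n) :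
    2 * (Hg n k j).edgeFinset.card
      = j*(n-1) + (2*k-1-2*j)*(2*k-2-j) + (n-(2*k-1-j))*j := by
  rw [← SimpleGraph.sum_degrees_eq_twice_card_edges]
  have hu : (univ : Finset (Fin n)) =
      (univ.filter (fun x : Fin n => x.val < j) ∪
        univ.filter (fun x : Fin n => j ≤ x.val ∧ x.val < 2*k-1-j)) ∪
        univ.filter (fun x : Fin n => 2*k-1-j ≤ x.val) := by
    ext x; simp; omega
  have hd1 : Disjoint (univ.filter (fun x : Fin n => x.val < j))
      (univ.filter (fun x : Fin n => j ≤ x.val ∧ x.val < 2*k-1-j)) := by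
    rw [Finset.disjoint_left]; intro x hx hx'
    simp only [mem_filter, mem_univ, true_and] at hx hx'; omega
  have hd2 : Disjoint ((univ.filter (fun x : Fin n => x.val < j)) ∪
      univ.filter (fun x : Fin n => j ≤ x.val ∧ x.val < 2*k-1-j))
      (univ.filter (fun x : Fin n => 2*k-1-j ≤ x.val)) := by
    rw [Finset.disjoint_left]; intro x hx hx'
    simp only [mem_filter, mem_union, mem_univ, true_and] at hx hx'; omega
  rw [hu, Finset.sum_union hd2, Finset.sum_union hd1]
  have e1 : ∑ x ∈ univ.filter (fun x : Fin n => x.val < j), (Hg n k j).degree x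
      = j * (n-1) := by
    rw [Finset.sum_congr rfl (fun x hx => Hg_degree_lo hk hj hn
      (by simpa using (mem_filter.mp hx).2)), Finset.sum_const, smul_eq_mul,
      card_filter_val_lt n j (by omega)]
  have e2 : ∑ x ∈ univ.filter (fun x : Fin n => j ≤ x.val ∧ x.val < 2*k-1-j),
      (Hg n k j).degree x = (2*k-1-2*j) * (2*k-2-j) := by
    rw [Finset.sum_congr rfl (fun x hx => Hg_degree_mid hk hj hn
      (mem_filter.mp hx).2.1 (mem_filter.mp hx).2.2), Finset.sum_const, smul_eq_mul,
      card_filter_band n j (2*k-1-j) (by omega) (by omega)]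
    congr 1
    omega
  have e3 : ∑ x ∈ univ.filter (fun x : Fin n => 2*k-1-j ≤ x.val), (Hg n k j).degree x
      = (n-(2*k-1-j)) * j := by
    rw [Finset.sum_congr rfl (fun x hx => Hg_degree_hi hk hj hn
      (by simpa using (mem_filter.mp hx).2)), Finset.sum_const, smul_eq_mul,
      card_filter_ge n _ (by omega)]
  rw [e1, e2, e3]


lemma two_choose_two (m : ℕ) : 2 * Nat.choose m 2 = m * (m-1) := by
  rw [Nat.choose_two_right]
  rcases Nat.eq_zero_or_pos m with h | h
  · subst h; simp
  · have he : Even (m * (m-1)) := by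
      have h1 : m * (m-1) = (m-1) * ((m-1)+1) := by
        rw [Nat.mul_comm]; congr 1; omega
      rw [h1]; exact Nat.even_mul_succ_self _
    obtain ⟨t, ht⟩ := he
    omega

lemma Hg_card_zero (n k : ℕ) (hk : 1 ≤ k) (hn : 2*k ≤ n) :
    (Hg n k 0).edgeFinset.card = Nat.choose (2*k-1) 2 :=
  val_zero n k _ hk hn (Hg_double_count n k 0 hk (by omega) hn)

lemma Hg_card_last (n k : ℕ) (hk : 1 ≤ k) (hn : 2*k ≤ n) :
    (Hg n k (k-1)).edgeFinset.card = Nat.choose (k-1) 2 + (k-1) * (n-k+1) :=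
  val_last n k _ hk hn (Hg_double_count n k (k-1) hk (by omega) hn)

lemma Hg_card_le (n k j : ℕ) (hk : 1 ≤ k) (hj : j ≤ k - 1) (hn : 2*k ≤ n) :
    (Hg n k j).edgeFinset.card
      ≤ max (Nat.choose (2*k-1) 2) (Nat.choose (k-1) 2 + (k-1) * (n-k+1)) := by
  have hc := convexN n k j _ hk hj hn (Hg_double_count n k j hk hj hn)
  have hA := two_choose_two (2*k-1)
  have hB := two_choose_two (k-1)
  have e1 : 2*k-1-1 = 2*k-2 := by omega
  have e2 : k-1-1 = k-2 := by omega
  rw [e1] at hA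
  rw [e2] at hB
  rw [le_max_iff] at hc ⊢
  omega


lemma card_subtype_val_lt (n c : ℕ) (hc : c ≤ n) :
    Fintype.card {x : Fin n // x.val < c} = c := by
  rw [Fintype.card_subtype]
  exact card_filter_val_lt n c hc

lemma Hg_zero_no_matching (n k : ℕ) (hk : 1 ≤ k) (hn : 2*k ≤ n) :
    ¬ HasMatchingOfSize (Hg n k 0) k := by
  rintro ⟨p, h1, h2⟩
  have hmem : ∀ i : Fin k, (p i).1.val < 2*k-1 ∧ (p i).2.val < 2*k-1 := by
    intro i
    have := (h1 i)
    rw [Hg_adj] at this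
    obtain ⟨-, h⟩ := this
    omega
  let F : Fin k × Bool → {x : Fin n // x.val < 2*k-1} := fun z =>
    if hb : z.2 then ⟨(p z.1).2, (hmem z.1).2⟩ else ⟨(p z.1).1, (hmem z.1).1⟩
  have hinj : Function.Injective F := by
    rintro ⟨i, bi⟩ ⟨j, bj⟩ heq
    by_cases hij : i = j
    · subst hij
      cases bi <;> cases bj <;> simp only [F] at heq <;> first | rfl | (exfalso; exact ((h1 i).ne) (by
        have := congrArg Subtype.val heq
        simp at this
        first | exact this | exact this.symm))
    · exfalso
      obtain ⟨d1, d2, d3, d4⟩ := h2 i j hij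
      have := congrArg Subtype.val heq
      cases bi <;> cases bj <;> simp only [F] at this <;> simp at this <;> tauto
  have hcard := Fintype.card_le_of_injective F hinj
  rw [card_subtype_val_lt n _ (by omega), Fintype.card_prod, Fintype.card_fin,
    Fintype.card_bool] at hcard
  omega

lemma Hg_last_no_matching (n k : ℕ) (hk : 1 ≤ k) (hn : 2*k ≤ n) :
    ¬ HasMatchingOfSize (Hg n k (k-1)) k := by
  rintro ⟨p, h1, h2⟩
  have hmem : ∀ i : Fin k, ¬ (p i).1.val < k-1 → (p i).2.val < k-1 := by
    intro i hni
    have h := h1 i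
    rw [Hg_adj] at h
    obtain ⟨hne, h⟩ := h
    have hv : (p i).1.val ≠ (p i).2.val := fun hh => hne (Fin.ext hh)
    omega
  let F : Fin k → {x : Fin n // x.val < k-1} := fun i =>
    if hb : (p i).1.val < k-1 then ⟨(p i).1, hb⟩ else ⟨(p i).2, hmem i hb⟩
  have hinj : Function.Injective F := by
    intro i j heq
    by_contra hij
    obtain ⟨d1, d2, d3, d4⟩ := h2 i j hij
    have := congrArg Subtype.val heq
    by_cases hi : (p i).1.val < k-1 <;> by_cases hj' : (p j).1.val < k-1 <;>
      simp only [F, hi, hj', dif_pos, dif_neg, not_false_iff] at this <;> tauto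
  have hcard := Fintype.card_le_of_injective F hinj
  rw [card_subtype_val_lt n _ (by omega), Fintype.card_fin] at hcard
  omega

def cpr (G : SimpleGraph (Fin n)) (u v : Fin n) : SimpleGraph (Fin n) where
  Adj a b :=
    (G.Adj a b ∧ a ≠ u ∧ a ≠ v ∧ b ≠ u ∧ b ≠ v) ∨
    (G.Adj a b ∧ ((a = u ∧ b = v) ∨ (a = v ∧ b = u))) ∨
    (a = u ∧ b ≠ u ∧ b ≠ v ∧ (G.Adj u b ∨ G.Adj v b)) ∨
    (b = u ∧ a ≠ u ∧ a ≠ v ∧ (G.Adj u a ∨ G.Adj v a)) ∨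
    (a = v ∧ b ≠ u ∧ b ≠ v ∧ G.Adj u b ∧ G.Adj v b) ∨
    (b = v ∧ a ≠ u ∧ a ≠ v ∧ G.Adj u a ∧ G.Adj v a)
  symm := by
    constructor
    intro a b h
    rcases h with ⟨h1,h2,h3,h4,h5⟩|⟨h1,h2|h2⟩|⟨h1,h2,h3,h4⟩|⟨h1,h2,h3,h4⟩|⟨h1,h2,h3,h4,h5⟩|⟨h1,h2,h3,h4,h5⟩
    · exact Or.inl ⟨h1.symm, h4, h5, h2, h3⟩
    · exact Or.inr (Or.inl ⟨h1.symm, Or.inr ⟨h2.2, h2.1⟩⟩)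
    · exact Or.inr (Or.inl ⟨h1.symm, Or.inl ⟨h2.2, h2.1⟩⟩)
    · exact Or.inr (Or.inr (Or.inr (Or.inl ⟨h1, h2, h3, h4⟩)))
    · exact Or.inr (Or.inr (Or.inl ⟨h1, h2, h3, h4⟩))
    · exact Or.inr (Or.inr (Or.inr (Or.inr (Or.inr ⟨h1, h2, h3, h4, h5⟩))))
    · exact Or.inr (Or.inr (Or.inr (Or.inr (Or.inl ⟨h1, h2, h3, h4, h5⟩))))
  loopless := by
    constructor
    intro a h
    rcases h with h|h|h|h|h|h <;> first | exact G.loopless.irrefl a h.1 | tauto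

instance (G : SimpleGraph (Fin n)) [DecidableRel G.Adj] (u v : Fin n) :
    DecidableRel (cpr G u v).Adj :=
  fun _ _ => inferInstanceAs (Decidable (_ ∨ _))

lemma cpr_adj_left (G : SimpleGraph (Fin n)) {u v : Fin n} (huv : u ≠ v) (b : Fin n) :
    (cpr G u v).Adj u b ↔
      ((b ≠ u ∧ b ≠ v ∧ (G.Adj u b ∨ G.Adj v b)) ∨ (b = v ∧ G.Adj u v)) := by
  show (_ ∨ _) ↔ _
  constructor
  · rintro (⟨h1,h2,-,-,-⟩|⟨h1,(⟨-,rfl⟩|⟨h2,-⟩)⟩|⟨-,h2,h3,h4⟩|⟨-,h2,-,-⟩|⟨h1,-,-,-,-⟩|⟨-,h2,-,-,-⟩)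
    · exact absurd rfl h2
    · exact Or.inr ⟨rfl, h1⟩
    · exact absurd h2 huv
    · exact Or.inl ⟨h2, h3, h4⟩
    · exact absurd rfl h2
    · exact absurd h1 huv
    · exact absurd rfl h2
  · rintro (⟨h1,h2,h3⟩|⟨rfl,h⟩)
    · exact Or.inr (Or.inr (Or.inl ⟨rfl, h1, h2, h3⟩))
    · exact Or.inr (Or.inl ⟨h, Or.inl ⟨rfl, rfl⟩⟩)

lemma cpr_adj_right (G : SimpleGraph (Fin n)) {u v : Fin n} (huv : u ≠ v) (b : Fin n) :
    (cpr G u v).Adj v b ↔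
      ((b ≠ u ∧ b ≠ v ∧ (G.Adj u b ∧ G.Adj v b)) ∨ (b = u ∧ G.Adj u v)) := by
  show (_ ∨ _) ↔ _
  constructor
  · rintro (⟨-,-,h3,-,-⟩|⟨h1,(⟨h2,-⟩|⟨-,rfl⟩)⟩|⟨h1,-,-,-⟩|⟨-,-,h3,-⟩|⟨-,h2,h3,h4,h5⟩|⟨-,-,h3,-,-⟩)
    · exact absurd rfl h3
    · exact absurd h2.symm huv
    · exact Or.inr ⟨rfl, h1.symm⟩
    · exact absurd h1.symm huv
    · exact absurd rfl h3
    · exact Or.inl ⟨h2, h3, h4, h5⟩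
    · exact absurd rfl h3
  · rintro (⟨h1,h2,h3⟩|⟨rfl,h⟩)
    · exact Or.inr (Or.inr (Or.inr (Or.inr (Or.inl ⟨rfl, h1, h2, h3.1, h3.2⟩))))
    · exact Or.inr (Or.inl ⟨h.symm, Or.inr ⟨rfl, rfl⟩⟩)

lemma cpr_adj_mid (G : SimpleGraph (Fin n)) {u v x : Fin n} (hxu : x ≠ u) (hxv : x ≠ v)
    (b : Fin n) :
    (cpr G u v).Adj x b ↔
      ((b = u ∧ (G.Adj u x ∨ G.Adj v x)) ∨ (b = v ∧ (G.Adj u x ∧ G.Adj v x)) ∨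
        (b ≠ u ∧ b ≠ v ∧ G.Adj x b)) := by
  show (_ ∨ _) ↔ _
  constructor
  · rintro (⟨h1,-,-,h4,h5⟩|⟨h1,(⟨h2,-⟩|⟨h2,-⟩)⟩|⟨h2,-,-,-⟩|⟨rfl,-,-,h4⟩|⟨h2,-,-,-,-⟩|⟨rfl,-,-,h4,h5⟩)
    · exact Or.inr (Or.inr ⟨h4, h5, h1⟩)
    · exact absurd h2 hxu
    · exact absurd h2 hxv
    · exact absurd h2 hxu
    · exact Or.inl ⟨rfl, h4⟩
    · exact absurd h2 hxv
    · exact Or.inr (Or.inl ⟨rfl, h4, h5⟩)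
  · rintro (⟨rfl,h⟩|⟨rfl,h⟩|⟨h1,h2,h3⟩)
    · exact Or.inr (Or.inr (Or.inr (Or.inl ⟨rfl, hxu, hxv, h⟩)))
    · exact Or.inr (Or.inr (Or.inr (Or.inr (Or.inr ⟨rfl, hxu, hxv, h.1, h.2⟩))))
    · exact Or.inl ⟨h3, hxu, hxv, h1, h2⟩

section count
variable (G : SimpleGraph (Fin n)) [DecidableRel G.Adj] (u v : Fin n)

lemma sum_split (huv : u ≠ v) (f : Fin n → ℕ) :
    ∑ x, f x = f u + f v + ∑ x ∈ (univ.erase u).erase v, f x := by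
  rw [← Finset.add_sum_erase _ f (mem_univ u),
    ← Finset.add_sum_erase _ f (Finset.mem_erase.mpr ⟨Ne.symm huv, mem_univ v⟩)]
  ring

lemma deg_filter (H : SimpleGraph (Fin n)) [DecidableRel H.Adj] (x : Fin n) :
    H.degree x = ∑ b, if H.Adj x b then 1 else 0 := by
  rw [← Finset.card_filter]
  show (H.neighborFinset x).card = _
  rw [SimpleGraph.neighborFinset_eq_filter]

lemma cpr_deg_u (huv : u ≠ v) :
    (cpr G u v).degree u = G.degree u +
      (univ.filter (fun b => b ≠ u ∧ b ≠ v ∧ G.Adj v b ∧ ¬ G.Adj u b)).card := by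
  rw [deg_filter, deg_filter, Finset.card_filter, ← Finset.sum_add_distrib]
  refine Finset.sum_congr rfl fun b _ => ?_
  simp only [cpr_adj_left G huv b]
  rcases eq_or_ne b u with hbu | hbu
  · simp [hbu, huv, SimpleGraph.irrefl]
  · rcases eq_or_ne b v with hbv | hbv
    · by_cases h1 : G.Adj u b <;> simp [hbv, huv, Ne.symm huv, hbu, h1]
    · by_cases h1 : G.Adj u b <;> by_cases h2 : G.Adj v b <;>
        simp [huv, hbu, hbv, h1, h2]

lemma cpr_deg_v (huv : u ≠ v) :
    G.degree v = (cpr G u v).degree v +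
      (univ.filter (fun b => b ≠ u ∧ b ≠ v ∧ G.Adj v b ∧ ¬ G.Adj u b)).card := by
  rw [deg_filter, deg_filter, Finset.card_filter, ← Finset.sum_add_distrib]
  refine Finset.sum_congr rfl fun b _ => ?_
  simp only [cpr_adj_right G huv b]
  rcases eq_or_ne b u with hbu | hbu
  · by_cases h1 : G.Adj u v <;>
      simp [hbu, huv, Ne.symm huv, h1, G.adj_comm v u]
  · rcases eq_or_ne b v with hbv | hbv
    · simp [hbv, huv, Ne.symm huv, hbu, SimpleGraph.irrefl]
    · by_cases h1 : G.Adj u b <;> by_cases h2 : G.Adj v b <;>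
        simp [huv, hbu, hbv, h1, h2]

lemma cpr_deg_mid (huv : u ≠ v) {x : Fin n} (hxu : x ≠ u) (hxv : x ≠ v) :
    (cpr G u v).degree x = G.degree x := by
  rw [deg_filter, deg_filter, sum_split u v huv, sum_split u v huv]
  have hend : (if (cpr G u v).Adj x u then 1 else 0) + (if (cpr G u v).Adj x v then 1 else 0)
      = (if G.Adj x u then 1 else 0) + (if G.Adj x v then 1 else 0) := by
    simp only [cpr_adj_mid G hxu hxv u, cpr_adj_mid G hxu hxv v]
    by_cases h1 : G.Adj u x <;> by_cases h2 : G.Adj v x <;>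
      simp [huv, Ne.symm huv, hxu, hxv, h1, h2, G.adj_comm x u, G.adj_comm x v]
  have hmid : ∑ b ∈ (univ.erase u).erase v, (if (cpr G u v).Adj x b then 1 else 0)
      = ∑ b ∈ (univ.erase u).erase v, (if G.Adj x b then 1 else 0) := by
    refine Finset.sum_congr rfl fun b hb => ?_
    obtain ⟨hbv, hbu⟩ := by
      simpa [Finset.mem_erase] using hb
    simp only [cpr_adj_mid G hxu hxv b]
    simp [hbu, hbv]
  omega

lemma cpr_sum_deg (huv : u ≠ v) :
    ∑ x, (cpr G u v).degree x = ∑ x, G.degree x := by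
  rw [sum_split u v huv, sum_split u v huv]
  have h1 := cpr_deg_u G u v huv
  have h2 := cpr_deg_v G u v huv
  have h3 : ∑ x ∈ (univ.erase u).erase v, (cpr G u v).degree x
      = ∑ x ∈ (univ.erase u).erase v, G.degree x := by
    refine Finset.sum_congr rfl fun x hx => ?_
    obtain ⟨hxv, hxu⟩ := by simpa [Finset.mem_erase] using hx
    exact cpr_deg_mid G u v huv hxu hxv
  omega

lemma cpr_ncard (huv : u ≠ v) :
    (cpr G u v).edgeSet.ncard = G.edgeSet.ncard := by
  have h1 : (cpr G u v).edgeSet.ncard = (cpr G u v).edgeFinset.card :=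
    Set.ncard_eq_toFinset_card' _
  have h2 : G.edgeSet.ncard = G.edgeFinset.card := Set.ncard_eq_toFinset_card' _
  have h3 := SimpleGraph.sum_degrees_eq_twice_card_edges (cpr G u v)
  have h4 := SimpleGraph.sum_degrees_eq_twice_card_edges G
  have h5 := cpr_sum_deg G u v huv
  omega

end count

noncomputable def wt (G : SimpleGraph (Fin n)) : ℕ := ∑ x : Fin n, (G.neighborSet x).ncard * x.val

lemma wt_eq (G : SimpleGraph (Fin n)) [DecidableRel G.Adj] :
    wt G = ∑ x, G.degree x * x.val := by
  refine Finset.sum_congr rfl fun x _ => ?_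
  congr 1
  rw [← SimpleGraph.card_neighborSet_eq_degree, ← Nat.card_coe_set_eq,
    Nat.card_eq_fintype_card]

lemma cpr_wt_lt (G : SimpleGraph (Fin n)) [DecidableRel G.Adj] (u v x₀ : Fin n)
    (hlt : u.val < v.val)
    (hx : x₀ ≠ u ∧ x₀ ≠ v ∧ G.Adj v x₀ ∧ ¬ G.Adj u x₀) :
    wt (cpr G u v) < wt G := by
  have huv : u ≠ v := fun h => by rw [h] at hlt; exact lt_irrefl _ hlt
  rw [wt_eq, wt_eq, sum_split u v huv, sum_split u v huv]
  have h1 := cpr_deg_u G u v huv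
  have h2 := cpr_deg_v G u v huv
  have h3 : ∑ x ∈ (univ.erase u).erase v, (cpr G u v).degree x * x.val
      = ∑ x ∈ (univ.erase u).erase v, G.degree x * x.val := by
    refine Finset.sum_congr rfl fun x hx' => ?_
    obtain ⟨hxv, hxu⟩ := by simpa [Finset.mem_erase] using hx'
    rw [cpr_deg_mid G u v huv hxu hxv]
  set t := (univ.filter (fun b => b ≠ u ∧ b ≠ v ∧ G.Adj v b ∧ ¬ G.Adj u b)).card with htdef
  have ht : 1 ≤ t := by
    rw [htdef]
    refine Finset.card_pos.mpr ⟨x₀, Finset.mem_filter.mpr ⟨mem_univ _, hx⟩⟩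
  have hmul : t * u.val < t * v.val := by
    exact Nat.mul_lt_mul_of_le_of_lt (le_refl t) hlt (by omega)
  rw [h3, h1, h2]
  nlinarith [hmul]

lemma cpr_adj_of_ne_u {G : SimpleGraph (Fin n)} {u v a b : Fin n}
    (h : (cpr G u v).Adj a b) (ha : a ≠ u) (hb : b ≠ u) : G.Adj a b := by
  rcases h with h|h|h|h|h|h
  · exact h.1
  · exact h.1
  · exact absurd h.1 ha
  · exact absurd h.1 hb
  · rcases h with ⟨rfl, -, -, -, h⟩; exact h
  · rcases h with ⟨rfl, -, -, -, h⟩; exact h.symm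

lemma cpr_adj_v {G : SimpleGraph (Fin n)} {u v y : Fin n} (huv : u ≠ v)
    (h : (cpr G u v).Adj v y) (hy : y ≠ u) : G.Adj u y ∧ G.Adj v y := by
  rcases h with h|h|h|h|h|h
  · exact absurd rfl h.2.2.1
  · rcases h.2 with ⟨h2, h3⟩ | ⟨h2, h3⟩
    · exact absurd h2.symm huv
    · exact absurd h3 hy
  · exact absurd h.1.symm huv
  · exact absurd h.1 hy
  · exact ⟨h.2.2.2.1, h.2.2.2.2⟩
  · exact absurd rfl h.2.2.1

lemma cpr_adj_u_cases {G : SimpleGraph (Fin n)} {u v a b : Fin n}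
    (h : (cpr G u v).Adj a b) (hG : ¬ G.Adj a b) :
    (a = u ∧ b ≠ u ∧ b ≠ v ∧ G.Adj v b ∧ ¬ G.Adj u b) ∨
    (b = u ∧ a ≠ u ∧ a ≠ v ∧ G.Adj v a ∧ ¬ G.Adj u a) := by
  rcases h with h|h|h|h|h|h
  · exact absurd h.1 hG
  · exact absurd h.1 hG
  · obtain ⟨rfl, h2, h3, h4⟩ := h
    rcases h4 with h4 | h4
    · exact absurd h4 hG
    · exact Or.inl ⟨rfl, h2, h3, h4, fun hc => hG hc⟩
  · obtain ⟨rfl, h2, h3, h4⟩ := h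
    rcases h4 with h4 | h4
    · exact absurd h4.symm hG
    · exact Or.inr ⟨rfl, h2, h3, h4, fun hc => hG hc.symm⟩
  · obtain ⟨rfl, h2, h3, h4, h5⟩ := h
    exact absurd h5 hG
  · obtain ⟨rfl, h2, h3, h4, h5⟩ := h
    exact absurd h5.symm hG


lemma matching_flip {V : Type*} {G : SimpleGraph V} {k : ℕ} (p q : Fin k → V × V)
    (σ : Fin k → Bool)
    (hq : ∀ i, q i = if σ i then ((p i).2, (p i).1) else p i)
    (h1 : ∀ i, G.Adj (p i).1 (p i).2)
    (h2 : ∀ i j, i ≠ j → (p i).1 ≠ (p j).1 ∧ (p i).1 ≠ (p j).2 ∧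
      (p i).2 ≠ (p j).1 ∧ (p i).2 ≠ (p j).2) :
    (∀ i, G.Adj (q i).1 (q i).2) ∧
    ∀ i j, i ≠ j → (q i).1 ≠ (q j).1 ∧ (q i).1 ≠ (q j).2 ∧
      (q i).2 ≠ (q j).1 ∧ (q i).2 ≠ (q j).2 := by
  constructor
  · intro i
    rw [hq i]
    by_cases hi : σ i <;> simp only [hi, if_true, if_false]
    · exact (h1 i).symm
    · exact h1 i
  · intro i j hij
    obtain ⟨d1, d2, d3, d4⟩ := h2 i j hij
    rw [hq i, hq j]
    by_cases hi : σ i <;> by_cases hj : σ j <;> simp only [hi, hj, if_true, if_false] <;>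
      exact ⟨by assumption, by assumption, by assumption, by assumption⟩

lemma cpr_transfer_two {G : SimpleGraph (Fin n)} {u v : Fin n} {k : ℕ} (huv : u ≠ v)
    (p : Fin k → Fin n × Fin n)
    (h1 : ∀ i, (cpr G u v).Adj (p i).1 (p i).2)
    (h2 : ∀ i j, i ≠ j → (p i).1 ≠ (p j).1 ∧ (p i).1 ≠ (p j).2 ∧
      (p i).2 ≠ (p j).1 ∧ (p i).2 ≠ (p j).2)
    (i₀ i₁ : Fin k) (hne : i₀ ≠ i₁)
    (hu1 : (p i₀).1 = u) (hv1 : (p i₁).1 = v)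
    (hx : G.Adj v (p i₀).2) :
    HasMatchingOfSize G k := by
  have hyu : (p i₁).2 ≠ u := by
    have h := (h2 i₀ i₁ hne).2.1
    rw [hu1] at h
    exact h.symm
  have hadj_vy : (cpr G u v).Adj v (p i₁).2 := hv1 ▸ h1 i₁
  obtain ⟨huy, hvy⟩ := cpr_adj_v huv hadj_vy hyu
  have hxv : (p i₀).2 ≠ v := by
    have h := (h2 i₀ i₁ hne).2.2.1
    rw [hv1] at h
    exact h
  have hxy : (p i₀).2 ≠ (p i₁).2 := (h2 i₀ i₁ hne).2.2.2
  have hux : u ≠ (p i₀).2 := hu1 ▸ ((h1 i₀).ne)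
  have hvyne : v ≠ (p i₁).2 := hv1 ▸ ((h1 i₁).ne)
  have huy2 : u ≠ (p i₁).2 := fun hc => hyu hc.symm
  have hyv : (p i₁).2 ≠ v := fun hc => hvyne hc.symm
  have hyx : (p i₁).2 ≠ (p i₀).2 := fun hc => hxy hc.symm
  have hvu : v ≠ u := fun hc => huv hc.symm
  have hvx : v ≠ (p i₀).2 := fun hc => hxv hc.symm
  have hxu : (p i₀).2 ≠ u := fun hc => hux hc.symm
  set q : Fin k → Fin n × Fin n :=
    fun i => if i = i₀ then (u, (p i₁).2) else if i = i₁ then (v, (p i₀).2) else p i with hqdef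
  have hq0 : q i₀ = (u, (p i₁).2) := by simp [hqdef]
  have hq1 : q i₁ = (v, (p i₀).2) := by simp [hqdef, Ne.symm hne]
  have hql : ∀ l, l ≠ i₀ → l ≠ i₁ → q l = p l := by
    intro l hl0 hl1
    simp [hqdef, hl0, hl1]
  have hother : ∀ l, l ≠ i₀ → l ≠ i₁ →
      (p l).1 ≠ u ∧ (p l).1 ≠ v ∧ (p l).1 ≠ (p i₀).2 ∧ (p l).1 ≠ (p i₁).2 ∧
      (p l).2 ≠ u ∧ (p l).2 ≠ v ∧ (p l).2 ≠ (p i₀).2 ∧ (p l).2 ≠ (p i₁).2 := by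
    intro l hl0 hl1
    obtain ⟨a1, a2, a3, a4⟩ := h2 l i₀ hl0
    obtain ⟨b1, b2, b3, b4⟩ := h2 l i₁ hl1
    rw [hu1] at a1 a3
    rw [hv1] at b1 b3
    exact ⟨a1, b1, a2, b2, a3, b3, a4, b4⟩
  refine ⟨q, ?_, ?_⟩
  · intro i
    rcases eq_or_ne i i₀ with rfl | hi0
    · rw [hq0]; exact huy
    · rcases eq_or_ne i i₁ with rfl | hi1
      · rw [hq1]; exact hx
      · rw [hql i hi0 hi1]
        refine cpr_adj_of_ne_u (h1 i) ?_ ?_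
        · exact (hother i hi0 hi1).1
        · exact (hother i hi0 hi1).2.2.2.2.1
  · intro i j hij
    rcases eq_or_ne i i₀ with rfl | hi0
    · rcases eq_or_ne j i₁ with rfl | hj1
      · rw [hq0, hq1]
        exact ⟨huv, hux, hyv, hyx⟩
      · have hj0 := Ne.symm hij
        obtain ⟨c1, c2, c3, c4, c5, c6, c7, c8⟩ := hother j hj0 hj1
        rw [hq0, hql j hj0 hj1]
        exact ⟨Ne.symm c1, Ne.symm c5, Ne.symm c4, Ne.symm c8⟩
    · rcases eq_or_ne i i₁ with rfl | hi1
      · rcases eq_or_ne j i₀ with rfl | hj0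
        · rw [hq1, hq0]
          exact ⟨hvu, hvyne, hxu, hxy⟩
        · have hj1 := Ne.symm hij
          obtain ⟨c1, c2, c3, c4, c5, c6, c7, c8⟩ := hother j hj0 hj1
          rw [hq1, hql j hj0 hj1]
          exact ⟨Ne.symm c2, Ne.symm c6, Ne.symm c3, Ne.symm c7⟩
      · obtain ⟨c1, c2, c3, c4, c5, c6, c7, c8⟩ := hother i hi0 hi1
        rcases eq_or_ne j i₀ with rfl | hj0
        · rw [hql i hi0 hi1, hq0]
          exact ⟨c1, c4, c5, c8⟩
        · rcases eq_or_ne j i₁ with rfl | hj1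
          · rw [hql i hi0 hi1, hq1]
            exact ⟨c2, c3, c6, c7⟩
          · rw [hql i hi0 hi1, hql j hj0 hj1]
            exact h2 i j hij

lemma cpr_transfer_main {G : SimpleGraph (Fin n)} {u v : Fin n} {k : ℕ} (huv : u ≠ v)
    (p : Fin k → Fin n × Fin n)
    (h1 : ∀ i, (cpr G u v).Adj (p i).1 (p i).2)
    (h2 : ∀ i j, i ≠ j → (p i).1 ≠ (p j).1 ∧ (p i).1 ≠ (p j).2 ∧
      (p i).2 ≠ (p j).1 ∧ (p i).2 ≠ (p j).2)
    (i₀ : Fin k) (hu1 : (p i₀).1 = u) (hx2 : (p i₀).2 ≠ v)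
    (hxadj : G.Adj v (p i₀).2) :
    HasMatchingOfSize G k := by
  by_cases hcov : ∃ i₁, (p i₁).1 = v ∨ (p i₁).2 = v
  · obtain ⟨i₁, hv1 | hv2⟩ := hcov
    · have hne : i₀ ≠ i₁ := by
        intro hc
        rw [← hc, hu1] at hv1
        exact huv hv1
      exact cpr_transfer_two huv p h1 h2 i₀ i₁ hne hu1 hv1 hxadj
    · have hne : i₀ ≠ i₁ := by
        intro hc
        rw [← hc] at hv2
        exact hx2 hv2
      set p' : Fin k → Fin n × Fin n :=
        fun i => if decide (i = i₁) then ((p i).2, (p i).1) else p i with hp'def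
      obtain ⟨g1, g2⟩ := matching_flip p p' (fun i => decide (i = i₁)) (fun i => rfl) h1 h2
      have hp0 : p' i₀ = p i₀ := by simp [hp'def, hne]
      have hp1 : (p' i₁).1 = v := by simp [hp'def]; exact hv2
      refine cpr_transfer_two huv p' g1 g2 i₀ i₁ hne ?_ hp1 ?_
      · rw [hp0]; exact hu1
      · rw [hp0]; exact hxadj
  · push_neg at hcov
    set q : Fin k → Fin n × Fin n :=
      fun i => if i = i₀ then (v, (p i₀).2) else p i with hqdef
    have hq0 : q i₀ = (v, (p i₀).2) := by simp [hqdef]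
    have hql : ∀ l, l ≠ i₀ → q l = p l := by
      intro l hl0
      simp [hqdef, hl0]
    refine ⟨q, ?_, ?_⟩
    · intro i
      rcases eq_or_ne i i₀ with rfl | hi0
      · rw [hq0]; exact hxadj
      · rw [hql i hi0]
        refine cpr_adj_of_ne_u (h1 i) ?_ ?_
        · have h := (h2 i i₀ hi0).1; rw [hu1] at h; exact h
        · have h := (h2 i i₀ hi0).2.2.1; rw [hu1] at h; exact h
    · intro i j hij
      rcases eq_or_ne i i₀ with rfl | hi0
      · have hj0 := Ne.symm hij
        obtain ⟨c1, c2, c3, c4⟩ := h2 i j hij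
        rw [hq0, hql j hj0]
        exact ⟨Ne.symm (hcov j).1, Ne.symm (hcov j).2, c3, c4⟩
      · rcases eq_or_ne j i₀ with rfl | hj0
        · obtain ⟨c1, c2, c3, c4⟩ := h2 i j hij
          rw [hq0, hql i hi0]
          refine ⟨(hcov i).1, ?_, (hcov i).2, ?_⟩
          · have h := (h2 i j hi0).2.1; exact h
          · have h := (h2 i j hi0).2.2.2; exact h
        · rw [hql i hi0, hql j hj0]
          exact h2 i j hij

lemma cpr_no_matching {G : SimpleGraph (Fin n)} {u v : Fin n} {k : ℕ} (huv : u ≠ v)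
    (h : ¬ HasMatchingOfSize G k) : ¬ HasMatchingOfSize (cpr G u v) k := by
  rintro ⟨p, h1, h2⟩
  apply h
  by_cases hall : ∀ i, G.Adj (p i).1 (p i).2
  · exact ⟨p, hall, h2⟩
  push_neg at hall
  obtain ⟨i₀, hbad⟩ := hall
  rcases cpr_adj_u_cases (h1 i₀) hbad with ⟨hc1, hc2, hc3, hc4, hc5⟩ | ⟨hc1, hc2, hc3, hc4, hc5⟩
  · exact cpr_transfer_main huv p h1 h2 i₀ hc1 hc3 hc4
  · set p' : Fin k → Fin n × Fin n :=
      fun i => if decide (i = i₀) then ((p i).2, (p i).1) else p i with hp'def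
    obtain ⟨g1, g2⟩ := matching_flip p p' (fun i => decide (i = i₀)) (fun i => rfl) h1 h2
    have hp0a : (p' i₀).1 = u := by simp [hp'def]; exact hc1
    have hp0b : (p' i₀).2 = (p i₀).1 := by simp [hp'def]
    refine cpr_transfer_main huv p' g1 g2 i₀ hp0a ?_ ?_
    · rw [hp0b]; exact hc3
    · rw [hp0b]; exact hc4


theorem upper_bound (n k : ℕ) (hk : 1 ≤ k) (hn : 2 * k ≤ n) (G : SimpleGraph (Fin n))
    (hG : ¬ HasMatchingOfSize G k) :
    G.edgeSet.ncard ≤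
      max (Nat.choose (2 * k - 1) 2) (Nat.choose (k - 1) 2 + (k - 1) * (n - k + 1)) := by
  classical
  set m := G.edgeSet.ncard with hm
  set S : Set ℕ := {w | ∃ G' : SimpleGraph (Fin n),
    ¬ HasMatchingOfSize G' k ∧ G'.edgeSet.ncard = m ∧ wt G' = w} with hSdef
  have hne : S.Nonempty := ⟨wt G, G, hG, rfl, rfl⟩
  obtain ⟨Gs, hGs1, hGs2, hGs3⟩ := Nat.sInf_mem hne
  have hstab : ∀ u v y : Fin n, u.val < v.val → y ≠ u → y ≠ v → Gs.Adj v y → Gs.Adj u y := by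
    intro u v y hlt hyu hyv hadj
    by_contra hnadj
    have huv : u ≠ v := fun h => by rw [h] at hlt; exact lt_irrefl _ hlt
    have hw : wt (cpr Gs u v) ∈ S := by
      refine ⟨cpr Gs u v, cpr_no_matching huv hGs1, ?_, rfl⟩
      rw [cpr_ncard Gs u v huv, hGs2]
    have hlt2 : wt (cpr Gs u v) < wt Gs := cpr_wt_lt Gs u v y hlt ⟨hyu, hyv, hadj, hnadj⟩
    have hge := Nat.sInf_le hw
    omega
  by_cases hall : ∀ i : Fin k, Gs.Adj ⟨i.val, by have := i.isLt; omega⟩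
      ⟨2*k-1-i.val, by have := i.isLt; omega⟩
  · exfalso
    apply hGs1
    refine ⟨fun i => (⟨i.val, by have := i.isLt; omega⟩, ⟨2*k-1-i.val, by have := i.isLt; omega⟩),
      fun i => hall i, ?_⟩
    intro i j hij
    have hv : i.val ≠ j.val := fun h => hij (Fin.ext h)
    have hik := i.isLt
    have hjk := j.isLt
    refine ⟨?_, ?_, ?_, ?_⟩ <;> (intro hc; have hcv := congrArg Fin.val hc; simp at hcv; omega)
  · push_neg at hall
    obtain ⟨i, hni⟩ := hall
    have hjk : i.val ≤ k - 1 := by have := i.isLt; omega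
    set j := i.val with hjdef
    have hclaim : ∀ a b : Fin n, Gs.Adj a b → a.val < b.val → j ≤ a.val → 2*k-1-j ≤ b.val →
        False := by
      intro a b hab hvab hja hb
      have hjn : j < n := by omega
      have hjn2 : 2*k-1-j < n := by omega
      have step1 : Gs.Adj ⟨j, hjn⟩ b := by
        rcases Nat.eq_or_lt_of_le hja with heq | hlt'
        · have hEq : (⟨j, hjn⟩ : Fin n) = a := Fin.ext heq
          rw [hEq]; exact hab
        · refine hstab ⟨j, hjn⟩ a b hlt' ?_ hab.ne' hab
          intro hc
          have := congrArg Fin.val hc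
          simp at this
          omega
      have step2 : Gs.Adj ⟨2*k-1-j, hjn2⟩ ⟨j, hjn⟩ := by
        rcases Nat.eq_or_lt_of_le hb with heq | hlt'
        · have hEq : (⟨2*k-1-j, hjn2⟩ : Fin n) = b := Fin.ext heq
          rw [hEq]; exact step1.symm
        · refine hstab ⟨2*k-1-j, hjn2⟩ b ⟨j, hjn⟩ hlt' ?_ ?_ step1.symm
          · intro hc
            have := congrArg Fin.val hc
            simp at this
            omega
          · intro hc
            have := congrArg Fin.val hc
            simp at this
            omega
      exact hni step2.symm
    have hle : Gs ≤ Hg n k j := by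
      intro a b hab
      rw [Hg_adj]
      refine ⟨hab.ne, ?_⟩
      by_contra hcon
      push_neg at hcon
      obtain ⟨h1, h2⟩ := hcon
      have hvne : a.val ≠ b.val := fun h => hab.ne (Fin.ext h)
      rcases Nat.lt_or_ge a.val b.val with hl | hg
      · exact hclaim a b hab hl (by omega) (by omega)
      · exact hclaim b a hab.symm (by omega) (by omega) (by omega)
    have hsub := SimpleGraph.edgeSet_mono hle
    have hcard : Gs.edgeSet.ncard ≤ (Hg n k j).edgeSet.ncard :=
      Set.ncard_le_ncard hsub (Set.toFinite _)
    have hHg : (Hg n k j).edgeSet.ncard = (Hg n k j).edgeFinset.card :=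
      Set.ncard_eq_toFinset_card' _
    have hfin := Hg_card_le n k j hk hjk hn
    omega

end EG

/-- Erdős–Gallai: for `k ≥ 1` and `n ≥ 2k`, the maximum number of edges of an
`n`-vertex graph with no matching of size `k` is
`max (C(2k-1,2)) (C(k-1,2) + (k-1)(n-k+1))`. -/
theorem stmt_14 (n k : ℕ) (hk : 1 ≤ k) (hn : 2 * k ≤ n) :
    IsGreatest {m : ℕ | ∃ G : SimpleGraph (Fin n),
        ¬ HasMatchingOfSize G k ∧ G.edgeSet.ncard = m}
      (max (Nat.choose (2 * k - 1) 2) (Nat.choose (k - 1) 2 + (k - 1) * (n - k + 1))) := by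
  constructor
  · rcases le_total (Nat.choose (k - 1) 2 + (k - 1) * (n - k + 1)) (Nat.choose (2 * k - 1) 2)
      with h | h
    · rw [max_eq_left h]
      refine ⟨EG.Hg n k 0, EG.Hg_zero_no_matching n k hk hn, ?_⟩
      rw [Set.ncard_eq_toFinset_card']
      exact EG.Hg_card_zero n k hk hn
    · rw [max_eq_right h]
      refine ⟨EG.Hg n k (k-1), EG.Hg_last_no_matching n k hk hn, ?_⟩
      rw [Set.ncard_eq_toFinset_card']
      exact EG.Hg_card_last n k hk hn
  · rintro m ⟨G, h1, h2⟩
    rw [← h2]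
    exact EG.upper_bound n k hk hn G h1
end

section
/- Let G be an edge-colored complete graph such that each color class is a threshold graph and the union of any two color classes is a threshold graph. Then G contains no properly colored 4-cycle. -/
open SimpleGraph Finset

/-- A threshold graph: no induced `2K₂`, `P₄`, or `C₄`. -/
def IsThreshold {V : Type*} (G : SimpleGraph V) : Prop :=
  (¬ ∃ a b c d : V, a ≠ c ∧ a ≠ d ∧ b ≠ c ∧ b ≠ d ∧ G.Adj a b ∧ G.Adj c d ∧
      ¬ G.Adj a c ∧ ¬ G.Adj a d ∧ ¬ G.Adj b c ∧ ¬ G.Adj b d) ∧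
  (¬ ∃ a b c d : V, a ≠ c ∧ a ≠ d ∧ b ≠ d ∧ G.Adj a b ∧ G.Adj b c ∧ G.Adj c d ∧
      ¬ G.Adj a c ∧ ¬ G.Adj a d ∧ ¬ G.Adj b d) ∧
  (¬ ∃ a b c d : V, a ≠ c ∧ b ≠ d ∧ G.Adj a b ∧ G.Adj b c ∧ G.Adj c d ∧ G.Adj d a ∧
      ¬ G.Adj a c ∧ ¬ G.Adj b d)

/-- If in an edge-colored complete graph each color class and each union of two color
classes is a threshold graph, then there is no properly colored `C₄`. -/
theorem stmt_16 {V : Type*} (χ : Sym2 V → ℕ)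
    (h1 : ∀ i : ℕ, IsThreshold (colorClass (⊤ : SimpleGraph V) χ i))
    (h2 : ∀ i j : ℕ, IsThreshold
      (colorClass (⊤ : SimpleGraph V) χ i ⊔ colorClass (⊤ : SimpleGraph V) χ j)) :
    ¬ HasPCC4 (⊤ : SimpleGraph V) χ := by
  rintro ⟨a, b, c, d, hac, hbd, hab, hbc, hcd, hda, n12, n23, n34, n41⟩
  simp only [top_adj] at hab hbc hcd hda
  obtain ⟨hT2, hTP, hTC⟩ := h2 (χ s(a, b)) (χ s(c, d))
  set H := colorClass (⊤ : SimpleGraph V) χ (χ s(a, b)) ⊔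
    colorClass (⊤ : SimpleGraph V) χ (χ s(c, d)) with hHdef
  have HAdj : ∀ u v : V, H.Adj u v ↔
      u ≠ v ∧ (χ s(u, v) = χ s(a, b) ∨ χ s(u, v) = χ s(c, d)) := by
    intro u v
    simp only [hHdef, SimpleGraph.sup_adj, colorClass, top_adj]
    tauto
  have eab : H.Adj a b := (HAdj a b).2 ⟨hab, Or.inl rfl⟩
  have ecd : H.Adj c d := (HAdj c d).2 ⟨hcd, Or.inr rfl⟩
  have ebc : ¬ H.Adj b c := by
    rw [HAdj]; rintro ⟨-, h | h⟩
    · exact n12 h.symm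
    · exact n23 h
  have eda : ¬ H.Adj d a := by
    rw [HAdj]; rintro ⟨-, h | h⟩
    · exact n41 h
    · exact n34 h.symm
  have ead : ¬ H.Adj a d := fun h => eda h.symm
  by_cases hA : χ s(a, c) = χ s(a, b) ∨ χ s(a, c) = χ s(c, d)
  · have eac : H.Adj a c := (HAdj a c).2 ⟨hac, hA⟩
    by_cases hB : χ s(b, d) = χ s(a, b) ∨ χ s(b, d) = χ s(c, d)
    · have ebd : H.Adj b d := (HAdj b d).2 ⟨hbd, hB⟩
      exact hTC ⟨a, b, d, c, Ne.symm hda, hbc, eab, ebd, ecd.symm, eac.symm, ead, ebc⟩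
    · have ebd : ¬ H.Adj b d := by rw [HAdj]; rintro ⟨-, h⟩; exact hB h
      exact hTP ⟨b, a, c, d, hbc, hbd, Ne.symm hda, eab.symm, eac, ecd, ebc, ebd, ead⟩
  · have eac : ¬ H.Adj a c := by rw [HAdj]; rintro ⟨-, h⟩; exact hA h
    by_cases hB : χ s(b, d) = χ s(a, b) ∨ χ s(b, d) = χ s(c, d)
    · have ebd : H.Adj b d := (HAdj b d).2 ⟨hbd, hB⟩
      exact hTP ⟨a, b, d, c, Ne.symm hda, hac, hbc, eab, ebd, ecd.symm, ead, eac, ebc⟩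
    · have ebd : ¬ H.Adj b d := by rw [HAdj]; rintro ⟨-, h⟩; exact hB h
      exact hT2 ⟨a, b, c, d, hac, Ne.symm hda, hbc, hbd, eab, ecd, eac, ead, ebc, ebd⟩
end
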